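/- arXiv:math/0508373 — 11 statements merged into one kernel-verified Lean document; each statement's English description precedes it below -/
import Mathlib

section
/- Let g = ⊕_{j∈ℤ} g_j be a ℤ-graded Lie algebra over a field F that is irreducible and transitive, and assume g_j ≠ 0 for some j ≥ 1. Then every Lie ideal J of g with J ⊆ g_- satisfies J ∩ g_{-1} = 0. -/
/-- The sum of the negative homogeneous components of a graded Lie algebra. -/
def negPart {F L : Type*} [Field F] [LieRing L] [LieAlgebra F L]
    (g : ℤ → Submodule F L) : Submodule F L :=
  ⨆ j < (0 : ℤ), g j

/-- The sum of the nonnegative homogeneous components of a graded Lie algebra. -/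
def nonnegPart {F L : Type*} [Field F] [LieRing L] [LieAlgebra F L]
    (g : ℤ → Submodule F L) : Submodule F L :=
  ⨆ j ≥ (0 : ℤ), g j

/-!
If `J ∩ g₋₁ ≠ 0`, irreducibility forces `g₋₁ ⊆ J`. Then `⁅g₁, g₋₁⁆ ⊆ J ∩ g₀ = 0`, because
`J ⊆ g₋` and `g₀ ∩ g₋ = 0`. Transitivity now kills `g₁`, and inductively every `g_{n+1}`,
since `⁅g_{n+1}, g₋₁⁆ ⊆ g_n = 0`; this contradicts `g_j ≠ 0` for some `j ≥ 1`.
-/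

section GradedLieAlgebra

variable {F L : Type*} [Field F] [LieRing L] [LieAlgebra F L] {g : ℤ → Submodule F L}

lemma le_nonnegPart {i : ℤ} (hi : 0 ≤ i) : g i ≤ nonnegPart g :=
  le_iSup₂ (f := fun j (_ : j ≥ (0 : ℤ)) => g j) i hi

lemma disjoint_zero_negPart (hdirect : DirectSum.IsInternal g) : Disjoint (g 0) (negPart g) :=
  (hdirect.submodule_iSupIndep 0).mono_right <| iSup₂_le fun j hj =>
    le_iSup₂ (f := fun j (_ : j ≠ (0 : ℤ)) => g j) j hj.ne

lemma eq_bot_of_bracket_neg_one_eq_zero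
    (htrans : ∀ x ∈ nonnegPart g, (∀ y ∈ g (-1), ⁅x, y⁆ = 0) → x = 0)
    {i : ℤ} (hi : 0 ≤ i) (h : ∀ x ∈ g i, ∀ y ∈ g (-1), ⁅x, y⁆ = 0) : g i = ⊥ :=
  (Submodule.eq_bot_iff _).mpr fun x hx => htrans x (le_nonnegPart hi hx) (h x hx)

lemma pos_eq_bot_of_bracket_one_neg_one_eq_zero
    (hgraded : ∀ i j : ℤ, ∀ x ∈ g i, ∀ y ∈ g j, ⁅x, y⁆ ∈ g (i + j))
    (htrans : ∀ x ∈ nonnegPart g, (∀ y ∈ g (-1), ⁅x, y⁆ = 0) → x = 0)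
    (h : ∀ x ∈ g 1, ∀ y ∈ g (-1), ⁅x, y⁆ = 0) {j : ℤ} (hj : 1 ≤ j) : g j = ⊥ := by
  induction j, hj using Int.leInduction with
  | base => exact eq_bot_of_bracket_neg_one_eq_zero htrans zero_le_one h
  | succ j hj ih =>
    refine eq_bot_of_bracket_neg_one_eq_zero htrans (by omega) fun x hx y hy => ?_
    have hxy : ⁅x, y⁆ ∈ g j := by simpa using hgraded _ _ x hx y hy
    simpa [ih] using hxy

lemma neg_one_le_of_inf_ne_bot
    (hgraded : ∀ i j : ℤ, ∀ x ∈ g i, ∀ y ∈ g j, ⁅x, y⁆ ∈ g (i + j))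
    (hirr : ∀ W : Submodule F L, W ≤ g (-1) →
      (∀ x ∈ g 0, ∀ w ∈ W, ⁅x, w⁆ ∈ W) → W = ⊥ ∨ W = g (-1))
    {J : Submodule F L} (hJideal : ∀ x : L, ∀ y ∈ J, ⁅x, y⁆ ∈ J) (hJ : J ⊓ g (-1) ≠ ⊥) :
    g (-1) ≤ J := by
  have hstable : ∀ x ∈ g 0, ∀ w ∈ J ⊓ g (-1), ⁅x, w⁆ ∈ J ⊓ g (-1) := fun x hx w hw =>
    ⟨hJideal x w hw.1, by simpa using hgraded 0 (-1) x hx w hw.2⟩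
  rcases hirr _ inf_le_right hstable with h | h
  · exact absurd h hJ
  · exact h ▸ inf_le_left

end GradedLieAlgebra

theorem statement0_general {F L : Type*} [Field F] [LieRing L] [LieAlgebra F L]
    (g : ℤ → Submodule F L)
    (hdirect : DirectSum.IsInternal g)
    (hgraded : ∀ i j : ℤ, ∀ x ∈ g i, ∀ y ∈ g j, ⁅x, y⁆ ∈ g (i + j))
    -- irreducibility
    (hirr : ∀ W : Submodule F L, W ≤ g (-1) →
      (∀ x ∈ g 0, ∀ w ∈ W, ⁅x, w⁆ ∈ W) → W = ⊥ ∨ W = g (-1))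
    -- transitivity
    (htrans : ∀ x ∈ nonnegPart g, (∀ y ∈ g (-1), ⁅x, y⁆ = 0) → x = 0)
    -- a nonzero positive component
    (hpos : ∃ j : ℤ, 1 ≤ j ∧ g j ≠ ⊥)
    -- J is a Lie ideal contained in the negative part
    (J : Submodule F L)
    (hJideal : ∀ x : L, ∀ y ∈ J, ⁅x, y⁆ ∈ J)
    (hJneg : J ≤ negPart g) :
    J ⊓ g (-1) = ⊥ := by
  by_contra hJ
  have hsub : g (-1) ≤ J := neg_one_le_of_inf_ne_bot hgraded hirr hJideal hJ
  have hbracket : ∀ x ∈ g 1, ∀ y ∈ g (-1), ⁅x, y⁆ = 0 := fun x hx y hy =>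
    Submodule.disjoint_def.mp (disjoint_zero_negPart hdirect) _
      (by simpa using hgraded 1 (-1) x hx y hy) (hJneg (hJideal x y (hsub hy)))
  obtain ⟨j, hj, hj_ne⟩ := hpos
  exact hj_ne (pos_eq_bot_of_bracket_one_neg_one_eq_zero hgraded htrans hbracket hj)

/-- If a ℤ-graded Lie algebra is irreducible and transitive and has a nonzero component
`g j` for some `j ≥ 1`, then every Lie ideal contained in the negative part meets
`g (-1)` trivially. -/
theorem statement0 {F L : Type*} [Field F] [LieRing L] [LieAlgebra F L]
    (g : ℤ → Submodule F L)
    (hdirect : DirectSum.IsInternal g)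
    (hgraded : ∀ i j : ℤ, ∀ x ∈ g i, ∀ y ∈ g j, ⁅x, y⁆ ∈ g (i + j))
    -- irreducibility
    (hirr_ne : g (-1) ≠ ⊥)
    (hirr : ∀ W : Submodule F L, W ≤ g (-1) →
      (∀ x ∈ g 0, ∀ w ∈ W, ⁅x, w⁆ ∈ W) → W = ⊥ ∨ W = g (-1))
    -- transitivity
    (htrans : ∀ x ∈ nonnegPart g, (∀ y ∈ g (-1), ⁅x, y⁆ = 0) → x = 0)
    -- a nonzero positive component
    (hpos : ∃ j : ℤ, 1 ≤ j ∧ g j ≠ ⊥)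
    -- J is a Lie ideal contained in the negative part
    (J : Submodule F L)
    (hJideal : ∀ x : L, ∀ y ∈ J, ⁅x, y⁆ ∈ J)
    (hJneg : J ≤ negPart g) :
    J ⊓ g (-1) = ⊥ :=
  statement0_general g hdirect hgraded hirr htrans hpos J hJideal hJneg
end

section
/- Let g = ⊕_{j∈ℤ} g_j be a ℤ-graded Lie algebra over a field F of finite depth q that is irreducible and transitive and satisfies ⁅g_{-i}, g_{-1}⁆ = g_{-(i+1)} for every i ≥ 1. Then every Lie ideal J of g either is contained in g_- or contains g_-. -/
/-- The linear span of all brackets `⁅x, y⁆` with `x ∈ A`, `y ∈ B`. -/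
def bracketSpan {F L : Type*} [Field F] [LieRing L] [LieAlgebra F L]
    (A B : Submodule F L) : Submodule F L :=
  Submodule.span F {z : L | ∃ x ∈ A, ∃ y ∈ B, z = ⁅x, y⁆}

/-! If an ideal `I` sticks out of `g₋`, bracketing with `g₋₁` (transitivity) pushes an element of
`I ∖ g₋` down to one of degree `≤ 0` with nonzero `g₀`-component, and one more bracket gives a nonzero
element of `g₋₁ ∩ (I + g_{≤ -2})`. This intersection is `g₀`-stable, hence all of `g₋₁` by
irreducibility, and since `g₋` is generated by `g₋₁` we get `g_{-k} ⊆ I + g_{≤ -k-1}` for all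
`k ≥ 1`. Finite depth then lets us peel off `g_{≤ -1}` into `I` one degree at a time. -/

section Filtration

variable {F L : Type*} [Field F] [LieRing L] [LieAlgebra F L] (g : ℤ → Submodule F L)

def degLE (n : ℤ) : Submodule F L :=
  ⨆ j ≤ n, g j

variable {g}

theorem le_degLE {j n : ℤ} (h : j ≤ n) : g j ≤ degLE g n :=
  le_iSup₂ (f := fun j (_ : j ≤ n) => g j) j h

theorem degLE_mono : Monotone (degLE g) :=
  fun _ _ hmn => iSup₂_le fun _ hj => le_degLE (hj.trans hmn)

theorem degLE_eq_sup (n : ℤ) : degLE g n = g n ⊔ degLE g (n - 1) := by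
  refine le_antisymm (iSup₂_le fun j hj => ?_) (sup_le (le_degLE le_rfl) (degLE_mono (by omega)))
  rcases hj.eq_or_lt with rfl | hj
  · exact le_sup_left
  · exact (le_degLE (by omega)).trans le_sup_right

theorem negPart_eq_degLE : negPart g = degLE g (-1) :=
  le_antisymm (iSup₂_le fun _ hj => le_degLE (by omega)) (iSup₂_le fun j hj =>
    le_iSup₂ (f := fun j (_ : j < 0) => g j) j (by omega))

theorem disjoint_degLE (hind : iSupIndep g) {m n : ℤ} (h : m < n) :
    Disjoint (g n) (degLE g m) :=
  hind.disjoint_biSup (y := Set.Iic m) (by simpa using h)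

theorem exists_mem_degLE (htop : ⨆ i, g i = ⊤) (x : L) : ∃ n, x ∈ degLE g n := by
  have hx : x ∈ ⨆ i, g i := htop ▸ Submodule.mem_top
  obtain ⟨s, hs⟩ := Submodule.mem_iSup_iff_exists_finset.mp hx
  obtain ⟨n, hn⟩ := s.bddAbove
  exact ⟨n, (iSup₂_le fun i hi => le_degLE (hn hi) : ⨆ i ∈ s, g i ≤ degLE g n) hs⟩

theorem degLE_le_of_le_sup {J : Submodule F L} {b m : ℤ} (hbot : degLE g b = ⊥)
    (hstep : ∀ n ≤ m, g n ≤ J ⊔ degLE g (n - 1)) : degLE g m ≤ J := by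
  rcases lt_or_ge m b with hmb | hbm
  · exact (degLE_mono hmb.le).trans (hbot ▸ bot_le)
  induction m, hbm using Int.leInduction with
  | base => exact hbot ▸ bot_le
  | succ n _ ih =>
    have ih := ih fun k hk => hstep k (by omega)
    have hstep_succ := hstep (n + 1) le_rfl
    rw [add_sub_cancel_right] at hstep_succ
    rw [degLE_eq_sup, add_sub_cancel_right]
    exact sup_le (hstep_succ.trans (sup_le le_rfl ih)) ih

end Filtration

section Graded

variable {F L : Type*} [Field F] [LieRing L] [LieAlgebra F L] {g : ℤ → Submodule F L}

theorem lie_mem_degLE (hgraded : ∀ i j : ℤ, ∀ x ∈ g i, ∀ y ∈ g j, ⁅x, y⁆ ∈ g (i + j))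
    {m d : ℤ} {u y : L} (hu : u ∈ degLE g m) (hy : y ∈ g d) : ⁅u, y⁆ ∈ degLE g (m + d) := by
  induction hu using Submodule.iSup_induction' with
  | mem j u hu =>
    by_cases hj : j ≤ m
    · rw [iSup_pos hj] at hu
      exact le_degLE (by omega) (hgraded j d u hu y hy)
    · rw [iSup_neg hj, Submodule.mem_bot] at hu
      simp [hu]
  | zero => simp
  | add u v _ _ hu hv => simpa only [add_lie] using add_mem hu hv

theorem lie_mem_sup_degLE (hgraded : ∀ i j : ℤ, ∀ x ∈ g i, ∀ y ∈ g j, ⁅x, y⁆ ∈ g (i + j))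
    (I : LieIdeal F L) {m d : ℤ} {u y : L} (hu : u ∈ (I : Submodule F L) ⊔ degLE g m)
    (hy : y ∈ g d) : ⁅u, y⁆ ∈ (I : Submodule F L) ⊔ degLE g (m + d) := by
  obtain ⟨a, ha, b, hb, rfl⟩ := Submodule.mem_sup.mp hu
  rw [add_lie]
  exact add_mem (Submodule.mem_sup_left (lie_mem_left F L I a y ha))
    (Submodule.mem_sup_right (lie_mem_degLE hgraded hb hy))

theorem exists_mem_degLE_zero_of_mem_degLE (hind : iSupIndep g)
    (hgraded : ∀ i j : ℤ, ∀ x ∈ g i, ∀ y ∈ g j, ⁅x, y⁆ ∈ g (i + j))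
    (htrans : ∀ n, 0 ≤ n → ∀ a ∈ g n, a ≠ 0 → ∃ y ∈ g (-1), ⁅a, y⁆ ≠ 0)
    (I : LieIdeal F L) {n : ℤ} (hn : 0 ≤ n) {x : L} (hxI : x ∈ I) (hxn : x ∈ degLE g n)
    (hx : x ∉ degLE g (-1)) : ∃ z ∈ I, z ∈ degLE g 0 ∧ z ∉ degLE g (-1) := by
  induction n, hn using Int.leInduction generalizing x with
  | base => exact ⟨x, hxI, hxn, hx⟩
  | succ n hn ih =>
    rw [degLE_eq_sup, add_sub_cancel_right] at hxn
    obtain ⟨a, ha, b, hb, rfl⟩ := Submodule.mem_sup.mp hxn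
    by_cases ha0 : a = 0
    · subst ha0
      rw [zero_add] at hxI hx
      exact ih hxI hb hx
    obtain ⟨y, hy, hay⟩ := htrans (n + 1) (by omega) a ha ha0
    have hay_mem : ⁅a, y⁆ ∈ g n := by simpa using hgraded _ _ a ha y hy
    have hby : ⁅b, y⁆ ∈ degLE g (n - 1) := by
      simpa [sub_eq_add_neg] using lie_mem_degLE hgraded hb hy
    refine ih (lie_mem_left F L I _ y hxI) ?_ fun h => hay ?_
    · rw [add_lie]
      exact add_mem (le_degLE le_rfl hay_mem) (degLE_mono (by omega) hby)
    · have hay_le : ⁅a, y⁆ ∈ degLE g (n - 1) := by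
        simpa [add_lie] using sub_mem (degLE_mono (by omega : -1 ≤ n - 1) h) hby
      exact Submodule.disjoint_def.mp (disjoint_degLE hind (by omega)) _ hay_mem hay_le

theorem exists_mem_degLE_zero_of_not_le (hind : iSupIndep g) (htop : ⨆ i, g i = ⊤)
    (hgraded : ∀ i j : ℤ, ∀ x ∈ g i, ∀ y ∈ g j, ⁅x, y⁆ ∈ g (i + j))
    (htrans : ∀ n, 0 ≤ n → ∀ a ∈ g n, a ≠ 0 → ∃ y ∈ g (-1), ⁅a, y⁆ ≠ 0)
    (I : LieIdeal F L) (hI : ¬ (I : Submodule F L) ≤ degLE g (-1)) :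
    ∃ z ∈ I, z ∈ degLE g 0 ∧ z ∉ degLE g (-1) := by
  obtain ⟨x, hxI, hx⟩ := SetLike.not_le_iff_exists.mp hI
  obtain ⟨n, hxn⟩ := exists_mem_degLE htop x
  exact exists_mem_degLE_zero_of_mem_degLE hind hgraded htrans I (le_max_right n 0) hxI
    (degLE_mono (le_max_left n 0) hxn) hx

theorem le_sup_degLE_of_mem (hgraded : ∀ i j : ℤ, ∀ x ∈ g i, ∀ y ∈ g j, ⁅x, y⁆ ∈ g (i + j))
    (htrans : ∀ n, 0 ≤ n → ∀ a ∈ g n, a ≠ 0 → ∃ y ∈ g (-1), ⁅a, y⁆ ≠ 0)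
    (hirr : ∀ W : Submodule F L, W ≤ g (-1) →
      (∀ x ∈ g 0, ∀ w ∈ W, ⁅x, w⁆ ∈ W) → W = ⊥ ∨ W = g (-1))
    (I : LieIdeal F L) {z : L} (hzI : z ∈ I) (hz0 : z ∈ degLE g 0) (hz : z ∉ degLE g (-1)) :
    g (-1) ≤ (I : Submodule F L) ⊔ degLE g (-2) := by
  rw [degLE_eq_sup, zero_sub] at hz0
  obtain ⟨a, ha, b, hb, rfl⟩ := Submodule.mem_sup.mp hz0
  have ha0 : a ≠ 0 := by
    rintro rfl
    exact hz (by simpa using hb)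
  obtain ⟨y, hy, hay⟩ := htrans 0 le_rfl a ha ha0
  set W := g (-1) ⊓ ((I : Submodule F L) ⊔ degLE g (-2))
  have hW_stable : ∀ x ∈ g 0, ∀ w ∈ W, ⁅x, w⁆ ∈ W := by
    rintro x hx w ⟨hw, hwI⟩
    rw [← lie_skew]
    exact neg_mem ⟨by simpa using hgraded _ _ w hw x hx,
      by simpa using lie_mem_sup_degLE hgraded I hwI hx⟩
  have hay_mem : ⁅a, y⁆ ∈ W := by
    refine ⟨by simpa using hgraded _ _ a ha y hy, ?_⟩
    have hby : ⁅b, y⁆ ∈ (I : Submodule F L) ⊔ degLE g (-2) := by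
      simpa using lie_mem_sup_degLE hgraded I (Submodule.mem_sup_right hb) hy
    have hzy := Submodule.mem_sup_left (lie_mem_left F L I _ y hzI) (T := degLE g (-2))
    simpa [add_lie] using sub_mem hzy hby
  rcases hirr W inf_le_left hW_stable with hW | hW
  · exact absurd (hW ▸ hay_mem) (by simpa using hay)
  · exact hW ▸ inf_le_right

theorem le_sup_degLE_sub_one (hgraded : ∀ i j : ℤ, ∀ x ∈ g i, ∀ y ∈ g j, ⁅x, y⁆ ∈ g (i + j))
    (hgen : ∀ n ≤ -1, g (n - 1) ≤ bracketSpan (g n) (g (-1))) (I : LieIdeal F L)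
    (hbase : g (-1) ≤ (I : Submodule F L) ⊔ degLE g (-2)) :
    ∀ n ≤ -1, g n ≤ (I : Submodule F L) ⊔ degLE g (n - 1) := by
  intro n hn
  induction n, hn using Int.leInductionDown with
  | base => simpa using hbase
  | pred n hn ih =>
    refine (hgen n hn).trans (Submodule.span_le.mpr ?_)
    rintro _ ⟨x, hx, y, hy, rfl⟩
    simpa [sub_eq_add_neg] using lie_mem_sup_degLE hgraded I (ih hx) hy

end Graded

theorem statement1_general {F L : Type*} [Field F] [LieRing L] [LieAlgebra F L]
    (g : ℤ → Submodule F L)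
    (hdirect : DirectSum.IsInternal g)
    (hgraded : ∀ i j : ℤ, ∀ x ∈ g i, ∀ y ∈ g j, ⁅x, y⁆ ∈ g (i + j))
    -- finite depth q
    (q : ℤ)
    (hdepth : ∀ j : ℤ, q < j → g (-j) = ⊥)
    -- irreducibility
    (hirr : ∀ W : Submodule F L, W ≤ g (-1) →
      (∀ x ∈ g 0, ∀ w ∈ W, ⁅x, w⁆ ∈ W) → W = ⊥ ∨ W = g (-1))
    -- transitivity
    (htrans : ∀ x ∈ nonnegPart g, (∀ y ∈ g (-1), ⁅x, y⁆ = 0) → x = 0)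
    -- ⁅g₋ᵢ, g₋₁⁆ = g₋₍ᵢ₊₁₎ for all i ≥ 1
    (hgen : ∀ i : ℤ, 1 ≤ i → bracketSpan (g (-i)) (g (-1)) = g (-(i + 1)))
    (J : Submodule F L)
    (hJideal : ∀ x : L, ∀ y ∈ J, ⁅x, y⁆ ∈ J) :
    J ≤ negPart g ∨ negPart g ≤ J := by
  let I : LieIdeal F L := { J with lie_mem := fun {x y} hy => hJideal x y hy }
  rw [or_iff_not_imp_left, negPart_eq_degLE]
  intro hJ
  have htrans_hom : ∀ n, 0 ≤ n → ∀ a ∈ g n, a ≠ 0 → ∃ y ∈ g (-1), ⁅a, y⁆ ≠ 0 := by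
    intro n hn a ha ha0
    by_contra! h
    exact ha0 (htrans a (le_iSup₂ (f := fun j (_ : j ≥ 0) => g j) n hn ha) h)
  have hgen_le : ∀ n ≤ -1, g (n - 1) ≤ bracketSpan (g n) (g (-1)) := by
    intro n hn
    have h := hgen (-n) (by omega)
    rw [neg_add', neg_neg] at h
    exact h.ge
  have hbot : degLE g (-q - 1) = ⊥ :=
    iSup₂_eq_bot.mpr fun j hj => by simpa using hdepth (-j) (by omega)
  obtain ⟨z, hzI, hz0, hz⟩ := exists_mem_degLE_zero_of_not_le hdirect.submodule_iSupIndep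
    hdirect.submodule_iSup_eq_top hgraded htrans_hom I hJ
  exact degLE_le_of_le_sup hbot (le_sup_degLE_sub_one hgraded hgen_le I
    (le_sup_degLE_of_mem hgraded htrans_hom hirr I hzI hz0 hz))

/-- In an irreducible transitive graded Lie algebra of finite depth `q` with
`⁅g₋ᵢ, g₋₁⁆ = g₋₍ᵢ₊₁₎` for all `i ≥ 1`, every Lie ideal is contained in the negative
part or contains the negative part. -/
theorem statement1 {F L : Type*} [Field F] [LieRing L] [LieAlgebra F L]
    (g : ℤ → Submodule F L)
    (hdirect : DirectSum.IsInternal g)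
    (hgraded : ∀ i j : ℤ, ∀ x ∈ g i, ∀ y ∈ g j, ⁅x, y⁆ ∈ g (i + j))
    -- finite depth q
    (q : ℤ)
    (hdepth_ne : g (-q) ≠ ⊥)
    (hdepth : ∀ j : ℤ, q < j → g (-j) = ⊥)
    -- irreducibility
    (hirr_ne : g (-1) ≠ ⊥)
    (hirr : ∀ W : Submodule F L, W ≤ g (-1) →
      (∀ x ∈ g 0, ∀ w ∈ W, ⁅x, w⁆ ∈ W) → W = ⊥ ∨ W = g (-1))
    -- transitivity
    (htrans : ∀ x ∈ nonnegPart g, (∀ y ∈ g (-1), ⁅x, y⁆ = 0) → x = 0)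
    -- ⁅g₋ᵢ, g₋₁⁆ = g₋₍ᵢ₊₁₎ for all i ≥ 1
    (hgen : ∀ i : ℤ, 1 ≤ i → bracketSpan (g (-i)) (g (-1)) = g (-(i + 1)))
    (J : Submodule F L)
    (hJideal : ∀ x : L, ∀ y ∈ J, ⁅x, y⁆ ∈ J) :
    J ≤ negPart g ∨ negPart g ≤ J :=
  statement1_general g hdirect hgraded q hdepth hirr htrans hgen J hJideal
end

section
/- Let g = ⊕_{j∈ℤ} g_j be a ℤ-graded Lie algebra over a field F of finite depth q that is irreducible and transitive, has g_j ≠ 0 for some j ≥ 1, satisfies g_{-i} = ⁅g_{-1}, g_{-i+1}⁆ for every i ≥ 2, and in which the only Lie ideal contained in g_- is the zero ideal. Then g contains no nonzero abelian Lie ideal. -/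
open DirectSum

section GradedAbelianIdeal

variable {R L : Type*} [CommRing R] [LieRing L] [LieAlgebra R L]

structure IsGradedAbelianIdeal (g P : ℤ → Submodule R L) : Prop where
  le : ∀ k, P k ≤ g k
  lie_mem : ∀ i k, ∀ a ∈ g i, ∀ w ∈ P k, ⁅a, w⁆ ∈ P (i + k)
  lie_eq_zero : ∀ k l, ∀ v ∈ P k, ∀ w ∈ P l, ⁅v, w⁆ = 0

variable {g P : ℤ → Submodule R L}

theorem IsGradedAbelianIdeal.eq_bot_of_pred_eq_bot (hP : IsGradedAbelianIdeal g P)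
    (htrans : ∀ k, 0 ≤ k → ∀ x ∈ g k, (∀ y ∈ g (-1), ⁅x, y⁆ = 0) → x = 0)
    {k : ℤ} (hk : 0 ≤ k) (hpred : P (k - 1) = ⊥) : P k = ⊥ := by
  refine (Submodule.eq_bot_iff _).2 fun v hv ↦ htrans k hk v (hP.le k hv) fun y hy ↦ ?_
  have hyv := hP.lie_mem (-1) k y hy v hv
  rw [neg_add_eq_sub, hpred, Submodule.mem_bot] at hyv
  rw [← lie_skew, hyv, neg_zero]

theorem IsGradedAbelianIdeal.eq_bot_of_nonneg (hP : IsGradedAbelianIdeal g P)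
    (htrans : ∀ k, 0 ≤ k → ∀ x ∈ g k, (∀ y ∈ g (-1), ⁅x, y⁆ = 0) → x = 0)
    (hirr : ∀ W : Submodule R L, W ≤ g (-1) →
      (∀ x ∈ g 0, ∀ w ∈ W, ⁅x, w⁆ ∈ W) → W = ⊥ ∨ W = g (-1))
    {k : ℤ} (hk : 0 ≤ k) : P k = ⊥ := by
  have hzero : P 0 = ⊥ := by
    rcases hirr (P (-1)) (hP.le (-1)) fun a ha w hw ↦ by
        simpa using hP.lie_mem 0 (-1) a ha w hw with hbot | hfull
    · exact hP.eq_bot_of_pred_eq_bot htrans le_rfl hbot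
    · refine (Submodule.eq_bot_iff _).2 fun v hv ↦ htrans 0 le_rfl v (hP.le 0 hv) fun y hy ↦ ?_
      exact hP.lie_eq_zero 0 (-1) v hv y (hfull ▸ hy)
  induction k, hk using Int.leInduction with
  | base => exact hzero
  | succ n hn ih => exact hP.eq_bot_of_pred_eq_bot htrans (by omega) (by simpa using ih)

end GradedAbelianIdeal

section Filtration

variable {R L : Type*} [CommRing R] [LieRing L] [LieAlgebra R L] (g : ℤ → Submodule R L)

def gradedProj [Decomposition g] (k : ℤ) : L →ₗ[R] L :=
  (g k).subtype ∘ₗ component R ℤ (fun i ↦ g i) k ∘ₗ (decomposeLinearEquiv g).toLinearMap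

def degreeLE (k : ℤ) : Submodule R L :=
  ⨆ (j) (_ : j ≤ k), g j

-- The degree-`k` piece of the associated graded of `J` for the filtration `degreeLE g`.
def leadingSubmodule [Decomposition g] (J : Submodule R L) (k : ℤ) : Submodule R L :=
  (J ⊓ degreeLE g k).map (gradedProj g k)

variable {g}

theorem mem_degreeLE_of_mem {j k : ℤ} {x : L} (hjk : j ≤ k) (hx : x ∈ g j) : x ∈ degreeLE g k :=
  Submodule.mem_iSup_of_mem j (Submodule.mem_iSup_of_mem hjk hx)

theorem degreeLE_mono {k l : ℤ} (hkl : k ≤ l) : degreeLE g k ≤ degreeLE g l :=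
  biSup_mono fun _ hj ↦ hj.trans hkl

@[elab_as_elim]
theorem degreeLE_induction {k : ℤ} {motive : L → Prop} {x : L} (hx : x ∈ degreeLE g k)
    (mem : ∀ j ≤ k, ∀ y ∈ g j, motive y) (add : ∀ y z, motive y → motive z → motive (y + z)) :
    motive x := by
  refine Submodule.iSup_induction (motive := motive) _ hx (fun j y hy ↦ ?_)
    (mem k le_rfl 0 (zero_mem _)) add
  by_cases hj : j ≤ k
  · exact mem j hj y (by rwa [iSup_pos hj] at hy)
  · rw [iSup_neg hj, Submodule.mem_bot] at hy
    exact hy ▸ mem k le_rfl 0 (zero_mem _)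

section Decomposition

variable [Decomposition g]

@[simp]
theorem gradedProj_apply (k : ℤ) (x : L) : gradedProj g k x = (decompose g x k : L) := rfl

theorem gradedProj_mem (k : ℤ) (x : L) : gradedProj g k x ∈ g k :=
  (decompose g x k).2

theorem gradedProj_of_mem {k : ℤ} {x : L} (hx : x ∈ g k) : gradedProj g k x = x :=
  decompose_of_mem_same g hx

theorem gradedProj_of_mem_of_ne {j k : ℤ} {x : L} (hx : x ∈ g j) (h : j ≠ k) :
    gradedProj g k x = 0 :=
  decompose_of_mem_ne g hx h

theorem mem_degreeLE_iff {k : ℤ} {x : L} :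
    x ∈ degreeLE g k ↔ ∀ j, k < j → gradedProj g j x = 0 := by
  classical
  constructor
  · intro hx j hj
    refine degreeLE_induction (motive := fun x ↦ gradedProj g j x = 0) hx ?_ ?_
    · exact fun i hi y hy ↦ gradedProj_of_mem_of_ne hy (by omega)
    · intro y z hy hz
      rw [map_add, hy, hz, add_zero]
  · intro h
    rw [← sum_support_decompose g x]
    refine Submodule.sum_mem _ fun j _ ↦ ?_
    rcases le_or_gt j k with hj | hj
    · exact mem_degreeLE_of_mem hj (decompose g x j).2
    · rw [← gradedProj_apply, h j hj]
      exact zero_mem _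

theorem exists_mem_degreeLE (x : L) : ∃ k, x ∈ degreeLE g k := by
  induction x using DirectSum.Decomposition.inductionOn g with
  | zero => exact ⟨0, zero_mem _⟩
  | homogeneous y => exact ⟨_, mem_degreeLE_of_mem le_rfl y.2⟩
  | add y z hy hz =>
    obtain ⟨k, hy⟩ := hy
    obtain ⟨l, hz⟩ := hz
    exact ⟨max k l, add_mem (degreeLE_mono (le_max_left k l) hy)
      (degreeLE_mono (le_max_right k l) hz)⟩

theorem mem_degreeLE_of_gradedProj_eq_zero {k : ℤ} {x : L} (hx : x ∈ degreeLE g (k + 1))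
    (h : gradedProj g (k + 1) x = 0) : x ∈ degreeLE g k := by
  rw [mem_degreeLE_iff] at hx ⊢
  intro j hj
  rcases eq_or_lt_of_le (Int.add_one_le_of_lt hj) with rfl | hj'
  · exact h
  · exact hx j hj'

variable {J : Submodule R L}

theorem leadingSubmodule_le (k : ℤ) : leadingSubmodule g J k ≤ g k := by
  rintro _ ⟨x, -, rfl⟩
  exact gradedProj_mem k x

theorem le_degreeLE_of_leadingSubmodule_eq_bot {m : ℤ}
    (h : ∀ k, m < k → leadingSubmodule g J k = ⊥) : J ≤ degreeLE g m := by
  intro x hxJ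
  suffices ∀ n, m ≤ n → x ∈ degreeLE g n → x ∈ degreeLE g m by
    obtain ⟨n, hxn⟩ := exists_mem_degreeLE (g := g) x
    rcases le_total m n with hmn | hnm
    · exact this n hmn hxn
    · exact degreeLE_mono hnm hxn
  intro n hmn
  induction n, hmn using Int.leInduction with
  | base => exact id
  | succ n hmn ih =>
    refine fun hx ↦ ih (mem_degreeLE_of_gradedProj_eq_zero hx ?_)
    have : gradedProj g (n + 1) x ∈ leadingSubmodule g J (n + 1) := ⟨x, ⟨hxJ, hx⟩, rfl⟩
    rwa [h _ (by omega), Submodule.mem_bot] at this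

end Decomposition

section GradedLieAlgebra

variable [GradedLieAlgebra g]

theorem gradedProj_lie_of_mem {i : ℤ} {a : L} (ha : a ∈ g i) (m : ℤ) (x : L) :
    gradedProj g m ⁅a, x⁆ = ⁅a, gradedProj g (m - i) x⁆ := by
  induction x using DirectSum.Decomposition.inductionOn g with
  | zero => simp
  | @homogeneous j y =>
    have hay := SetLike.GradedBracket.bracket_mem ha y.2
    by_cases hj : j = m - i
    · rw [← hj, gradedProj_of_mem y.2, gradedProj_of_mem (by rwa [show i + j = m by omega] at hay)]
    · rw [gradedProj_of_mem_of_ne y.2 hj, lie_zero, gradedProj_of_mem_of_ne hay (by omega)]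
  | add y z hy hz => rw [lie_add, map_add, map_add, lie_add, hy, hz]

theorem lie_mem_degreeLE {i k : ℤ} {a x : L} (ha : a ∈ g i) (hx : x ∈ degreeLE g k) :
    ⁅a, x⁆ ∈ degreeLE g (i + k) := by
  rw [mem_degreeLE_iff] at hx ⊢
  intro m hm
  rw [gradedProj_lie_of_mem ha, hx _ (by omega), lie_zero]

theorem gradedProj_lie_of_mem_degreeLE {k l : ℤ} {x y : L} (hx : x ∈ degreeLE g k)
    (hy : y ∈ degreeLE g l) :
    gradedProj g (k + l) ⁅x, y⁆ = ⁅gradedProj g k x, gradedProj g l y⁆ := by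
  refine degreeLE_induction (motive := fun y ↦
    gradedProj g (k + l) ⁅x, y⁆ = ⁅gradedProj g k x, gradedProj g l y⁆) hy ?_ ?_
  · intro j hjl z hz
    have hskew : gradedProj g (k + l) ⁅x, z⁆ = ⁅gradedProj g (k + l - j) x, z⁆ := by
      rw [← lie_skew, map_neg, gradedProj_lie_of_mem hz, lie_skew]
    rcases eq_or_lt_of_le hjl with rfl | hjl
    · rw [hskew, add_sub_cancel_right, gradedProj_of_mem hz]
    · rw [hskew, mem_degreeLE_iff.1 hx _ (by omega), zero_lie,
        gradedProj_of_mem_of_ne hz hjl.ne, lie_zero]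
  · intro z z' hz hz'
    rw [lie_add, map_add, map_add, lie_add, hz, hz']

theorem isGradedAbelianIdeal_leadingSubmodule {J : Submodule R L}
    (hJideal : ∀ x : L, ∀ y ∈ J, ⁅x, y⁆ ∈ J) (hJab : ∀ x ∈ J, ∀ y ∈ J, ⁅x, y⁆ = 0) :
    IsGradedAbelianIdeal g (leadingSubmodule g J) where
  le := leadingSubmodule_le
  lie_mem i k a ha := by
    rintro _ ⟨x, ⟨hxJ, hxk⟩, rfl⟩
    refine ⟨⁅a, x⁆, ⟨hJideal a x hxJ, lie_mem_degreeLE ha hxk⟩, ?_⟩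
    rw [gradedProj_lie_of_mem ha, add_sub_cancel_left]
  lie_eq_zero k l := by
    rintro _ ⟨x, ⟨hxJ, hxk⟩, rfl⟩ _ ⟨y, ⟨hyJ, hyl⟩, rfl⟩
    rw [← gradedProj_lie_of_mem_degreeLE hxk hyl, hJab x hxJ y hyJ, map_zero]

end GradedLieAlgebra

end Filtration

theorem negPart_eq_degreeLE {F L : Type*} [Field F] [LieRing L] [LieAlgebra F L]
    (g : ℤ → Submodule F L) : negPart g = degreeLE g (-1) :=
  iSup_congr fun _ ↦ iSup_congr_Prop (by omega) fun _ ↦ rfl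

theorem statement3_general {F L : Type*} [Field F] [LieRing L] [LieAlgebra F L]
    (g : ℤ → Submodule F L)
    (hdirect : DirectSum.IsInternal g)
    (hgraded : ∀ i j : ℤ, ∀ x ∈ g i, ∀ y ∈ g j, ⁅x, y⁆ ∈ g (i + j))
    -- irreducibility
    (hirr : ∀ W : Submodule F L, W ≤ g (-1) →
      (∀ x ∈ g 0, ∀ w ∈ W, ⁅x, w⁆ ∈ W) → W = ⊥ ∨ W = g (-1))
    -- transitivity
    (htrans : ∀ x ∈ nonnegPart g, (∀ y ∈ g (-1), ⁅x, y⁆ = 0) → x = 0)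
    -- the only Lie ideal contained in the negative part is zero
    (hrad : ∀ J : Submodule F L, (∀ x : L, ∀ y ∈ J, ⁅x, y⁆ ∈ J) →
      J ≤ negPart g → J = ⊥)
    (J : Submodule F L)
    (hJideal : ∀ x : L, ∀ y ∈ J, ⁅x, y⁆ ∈ J)
    (hJab : ∀ x ∈ J, ∀ y ∈ J, ⁅x, y⁆ = 0) :
    J = ⊥ := by
  let : GradedLieAlgebra g :=
    { hdirect.chooseDecomposition with bracket_mem := fun i j _ _ hx hy ↦ hgraded i j _ hx _ hy }
  have htrans_homogeneous : ∀ k, 0 ≤ k → ∀ x ∈ g k, (∀ y ∈ g (-1), ⁅x, y⁆ = 0) → x = 0 :=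
    fun k hk x hx ↦ htrans x (le_iSup₂ (f := fun j (_ : j ≥ 0) ↦ g j) k hk hx)
  have hleading := isGradedAbelianIdeal_leadingSubmodule (g := g) hJideal hJab
  refine hrad J hJideal ?_
  rw [negPart_eq_degreeLE]
  exact le_degreeLE_of_leadingSubmodule_eq_bot fun k hk ↦
    hleading.eq_bot_of_nonneg htrans_homogeneous hirr (by omega)

/-- An irreducible transitive graded Lie algebra of finite depth `q` with a nonzero
positive component, with `g₋ᵢ = ⁅g₋₁, g₋₍ᵢ₋₁₎⁆` for `i ≥ 2` and whose only Lie ideal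
contained in the negative part is zero, contains no nonzero abelian Lie ideal. -/
theorem statement3 {F L : Type*} [Field F] [LieRing L] [LieAlgebra F L]
    (g : ℤ → Submodule F L)
    (hdirect : DirectSum.IsInternal g)
    (hgraded : ∀ i j : ℤ, ∀ x ∈ g i, ∀ y ∈ g j, ⁅x, y⁆ ∈ g (i + j))
    -- finite depth q
    (q : ℤ)
    (hdepth_ne : g (-q) ≠ ⊥)
    (hdepth : ∀ j : ℤ, q < j → g (-j) = ⊥)
    -- irreducibility
    (hirr_ne : g (-1) ≠ ⊥)
    (hirr : ∀ W : Submodule F L, W ≤ g (-1) →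
      (∀ x ∈ g 0, ∀ w ∈ W, ⁅x, w⁆ ∈ W) → W = ⊥ ∨ W = g (-1))
    -- transitivity
    (htrans : ∀ x ∈ nonnegPart g, (∀ y ∈ g (-1), ⁅x, y⁆ = 0) → x = 0)
    -- a nonzero positive component
    (hpos : ∃ j : ℤ, 1 ≤ j ∧ g j ≠ ⊥)
    -- g₋ᵢ = ⁅g₋₁, g₋₍ᵢ₋₁₎⁆ for all i ≥ 2
    (hgen : ∀ i : ℤ, 2 ≤ i → g (-i) = bracketSpan (g (-1)) (g (-(i - 1))))
    -- the only Lie ideal contained in the negative part is zero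
    (hrad : ∀ J : Submodule F L, (∀ x : L, ∀ y ∈ J, ⁅x, y⁆ ∈ J) →
      J ≤ negPart g → J = ⊥)
    (J : Submodule F L)
    (hJideal : ∀ x : L, ∀ y ∈ J, ⁅x, y⁆ ∈ J)
    (hJab : ∀ x ∈ J, ∀ y ∈ J, ⁅x, y⁆ = 0) :
    J = ⊥ :=
  statement3_general g hdirect hgraded hirr htrans hrad J hJideal hJab
end

section
/- Let g = ⊕_{j∈ℤ} g_j be a ℤ-graded Lie algebra over a field F of finite depth q that is irreducible and transitive, satisfies g_{-i} = ⁅g_{-1}, g_{-i+1}⁆ for every i ≥ 2, and in which the only Lie ideal contained in g_- is the zero ideal. Then g has a unique minimal nonzero Lie ideal I: there is a nonzero Lie ideal I of g contained in every nonzero Lie ideal of g. Moreover I contains g_- and I is graded, i.e. I is the sum of its components I ∩ g_j. -/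
/-!
For a subspace `J` and a degree `j`, the degree-`j` components of those elements of `J` that
have no component above degree `j` form a subspace of `g j`; when `J` is an ideal, bracketing
with `g i` maps it into the corresponding space in degree `i + j`. If this leading space of a
nonzero ideal `J` vanished in degree `-1`, transitivity would make it vanish in every degree
`≥ -1`, forcing `J ⊆ g₋` and hence `J = 0`. So it is a nonzero `g₀`-stable subspace of `g₋₁`,
i.e. all of `g₋₁`, and by the generating condition it is all of `g₋ᵢ` for every `i ≥ 1`.
Going up from the bottom degree `-q`, each `v ∈ g₋ᵢ` is an element of `J` minus components of
lower degree, which already lie in `J`; hence `g₋ ⊆ J`. The intersection of all nonzero ideals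
therefore contains `g₋` and is the minimal nonzero ideal, and it is graded because the sum of
its homogeneous parts is again an ideal containing `g₋`.
-/

open DirectSum

def Submodule.IsLieIdeal {R L : Type*} [CommRing R] [LieRing L] [LieAlgebra R L]
    (J : Submodule R L) : Prop :=
  ∀ x : L, ∀ y ∈ J, ⁅x, y⁆ ∈ J

theorem Submodule.IsLieIdeal.sInf {R L : Type*} [CommRing R] [LieRing L] [LieAlgebra R L]
    {S : Set (Submodule R L)} (hS : ∀ J ∈ S, J.IsLieIdeal) : (sInf S).IsLieIdeal :=
  fun x y hy => Submodule.mem_sInf.2 fun J hJ => hS J hJ x y (Submodule.mem_sInf.1 hy J hJ)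

def IsLieGrading {R L : Type*} [CommRing R] [LieRing L] [LieAlgebra R L]
    (g : ℤ → Submodule R L) : Prop :=
  ∀ i j : ℤ, ∀ x ∈ g i, ∀ y ∈ g j, ⁅x, y⁆ ∈ g (i + j)

namespace GradedLieAlgebra

section CommRing

variable {R L : Type*} [CommRing R] [LieRing L] [LieAlgebra R L]
  (g : ℤ → Submodule R L) [Decomposition g]

noncomputable def proj (j : ℤ) : L →ₗ[R] L :=
  (g j).subtype ∘ₗ component R ℤ (fun i => g i) j ∘ₗ (decomposeLinearEquiv g).toLinearMap

theorem proj_apply (j : ℤ) (x : L) : proj g j x = decompose g x j := rfl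

theorem proj_mem (j : ℤ) (x : L) : proj g j x ∈ g j := (decompose g x j).2

theorem proj_of_mem_same {j : ℤ} {x : L} (hx : x ∈ g j) : proj g j x = x :=
  decompose_of_mem_same g hx

theorem proj_of_mem_ne {i j : ℤ} {x : L} (hx : x ∈ g i) (hij : i ≠ j) : proj g j x = 0 :=
  decompose_of_mem_ne g hx hij

theorem proj_lie_of_mem (hg : IsLieGrading g) {i : ℤ} {u : L} (hu : u ∈ g i) (k : ℤ) (y : L) :
    proj g k ⁅u, y⁆ = ⁅u, proj g (k - i) y⁆ := by
  induction y using Decomposition.inductionOn g with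
  | zero => simp
  | @homogeneous j y =>
    by_cases hk : i + j = k
    · subst hk
      rw [proj_of_mem_same g (hg _ _ _ hu _ y.2), add_sub_cancel_left, proj_of_mem_same g y.2]
    · rw [proj_of_mem_ne g (hg _ _ _ hu _ y.2) hk, proj_of_mem_ne g y.2 (by omega), lie_zero]
  | add y y' hy hy' => rw [lie_add, map_add, hy, hy', map_add, lie_add]

theorem _root_.Submodule.IsLieIdeal.iSup_inf (hg : IsLieGrading g) {I : Submodule R L}
    (hI : I.IsLieIdeal) :
    (⨆ j, I ⊓ g j).IsLieIdeal := by
  intro x y hy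
  refine Submodule.iSup_induction _ (motive := fun y => ⁅x, y⁆ ∈ ⨆ j, I ⊓ g j) hy
    (fun j z hz => ?_) (by simp) (fun a b ha hb => by rw [lie_add]; exact add_mem ha hb)
  induction x using Decomposition.inductionOn g with
  | zero => simp
  | @homogeneous i x => exact Submodule.mem_iSup_of_mem (i + j) ⟨hI _ _ hz.1, hg _ _ _ x.2 _ hz.2⟩
  | add a b ha hb => rw [add_lie]; exact add_mem ha hb

noncomputable def degreeLE (j : ℤ) : Submodule R L := ⨅ k > j, LinearMap.ker (proj g k)

variable {g}

theorem mem_degreeLE {j : ℤ} {y : L} : y ∈ degreeLE g j ↔ ∀ k > j, proj g k y = 0 := by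
  simp [degreeLE, Submodule.mem_iInf]

variable (g)

theorem degreeLE_mono : Monotone (degreeLE g) := fun _ _ hjk _ hy =>
  mem_degreeLE.2 fun k hk => mem_degreeLE.1 hy k (lt_of_le_of_lt hjk hk)

theorem exists_mem_degreeLE (y : L) : ∃ n, y ∈ degreeLE g n := by
  induction y using Decomposition.inductionOn g with
  | zero => exact ⟨0, zero_mem _⟩
  | @homogeneous j y => exact ⟨j, mem_degreeLE.2 fun k hk => proj_of_mem_ne g y.2 hk.ne⟩
  | add y y' hy hy' =>
    obtain ⟨n, hn⟩ := hy
    obtain ⟨n', hn'⟩ := hy'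
    exact ⟨max n n', add_mem (degreeLE_mono g (le_max_left n n') hn)
      (degreeLE_mono g (le_max_right n n') hn')⟩

theorem mem_degreeLE_sub_one {j : ℤ} {y : L} (hy : y ∈ degreeLE g j) (hj : proj g j y = 0) :
    y ∈ degreeLE g (j - 1) :=
  mem_degreeLE.2 fun k hk => (eq_or_lt_of_le (show j ≤ k by omega)).elim
    (fun hjk => hjk ▸ hj) (mem_degreeLE.1 hy k)

theorem degreeLE_le_iSup (j : ℤ) : degreeLE g j ≤ ⨆ k ≤ j, g k := by
  classical
  intro y hy
  rw [← sum_support_decompose g y]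
  refine Submodule.sum_mem _ fun k _ => ?_
  by_cases hk : k ≤ j
  · exact le_iSup₂ (f := fun k _ => g k) k hk (decompose g y k).2
  · rw [← proj_apply, mem_degreeLE.1 hy k (by omega)]
    exact zero_mem _

noncomputable def leadingPart (J : Submodule R L) (j : ℤ) : Submodule R L :=
  (J ⊓ degreeLE g j).map (proj g j)

variable {g} {J : Submodule R L}

theorem mem_leadingPart {j : ℤ} {w : L} :
    w ∈ leadingPart g J j ↔ ∃ y ∈ J, y ∈ degreeLE g j ∧ proj g j y = w := by
  simp [leadingPart, and_assoc]

variable (g)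

theorem leadingPart_le (J : Submodule R L) (j : ℤ) : leadingPart g J j ≤ g j := by
  rintro _ ⟨y, _, rfl⟩
  exact proj_mem g j y

theorem lie_mem_leadingPart (hg : IsLieGrading g) (hJ : J.IsLieIdeal) {i j : ℤ} {u w : L}
    (hu : u ∈ g i) (hw : w ∈ leadingPart g J j) : ⁅u, w⁆ ∈ leadingPart g J (i + j) := by
  obtain ⟨y, hyJ, hy, rfl⟩ := mem_leadingPart.1 hw
  refine mem_leadingPart.2 ⟨⁅u, y⁆, hJ u y hyJ, mem_degreeLE.2 fun k hk => ?_, ?_⟩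
  · rw [proj_lie_of_mem g hg hu, mem_degreeLE.1 hy _ (by omega), lie_zero]
  · rw [proj_lie_of_mem g hg hu, add_sub_cancel_left]

theorem le_degreeLE_of_leadingPart_eq_bot {m : ℤ} (h : ∀ j > m, leadingPart g J j = ⊥) :
    J ≤ degreeLE g m := by
  intro y hyJ
  obtain ⟨n, hn⟩ := exists_mem_degreeLE g y
  suffices ∀ k ≤ max n m, m ≤ k → y ∈ degreeLE g k from this m (le_max_right n m) le_rfl
  intro k hk
  induction k, hk using Int.leInductionDown with
  | base => exact fun _ => degreeLE_mono g (le_max_left n m) hn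
  | pred k _ ih =>
    intro hmk
    have hy := ih (by omega)
    have hlead : proj g k y ∈ leadingPart g J k := mem_leadingPart.2 ⟨y, hyJ, hy, rfl⟩
    rw [h k (by omega), Submodule.mem_bot] at hlead
    exact mem_degreeLE_sub_one g hy hlead

theorem le_of_le_leadingPart {j : ℤ} (hj : g j ≤ leadingPart g J j)
    (hlow : ∀ k < j, g k ≤ J) : g j ≤ J := by
  intro v hv
  obtain ⟨y, hyJ, hy, hyv⟩ := mem_leadingPart.1 (hj hv)
  have hlowJ : degreeLE g (j - 1) ≤ J :=
    (degreeLE_le_iSup g _).trans (iSup₂_le fun k hk => hlow k (by omega))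
  have hrest : y - v ∈ degreeLE g (j - 1) := mem_degreeLE.2 fun k hk => by
    rcases eq_or_lt_of_le (show j ≤ k by omega) with rfl | hjk
    · rw [map_sub, hyv, proj_of_mem_same g hv, sub_self]
    · rw [map_sub, mem_degreeLE.1 hy k hjk, proj_of_mem_ne g hv hjk.ne, sub_zero]
  simpa using sub_mem hyJ (hlowJ hrest)

end CommRing

section Field

variable {F L : Type*} [Field F] [LieRing L] [LieAlgebra F L] (g : ℤ → Submodule F L)

theorem le_negPart {j : ℤ} (hj : j < 0) : g j ≤ negPart g :=
  le_iSup₂ (f := fun j _ => g j) j hj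

theorem le_nonnegPart {j : ℤ} (hj : 0 ≤ j) : g j ≤ nonnegPart g :=
  le_iSup₂ (f := fun j _ => g j) j hj

variable [Decomposition g] {J : Submodule F L}

theorem leadingPart_eq_bot_of_neg_one (hg : IsLieGrading g)
    (htrans : ∀ x ∈ nonnegPart g, (∀ y ∈ g (-1), ⁅x, y⁆ = 0) → x = 0)
    (hJ : J.IsLieIdeal) (h : leadingPart g J (-1) = ⊥) (j : ℤ) (hj : -1 ≤ j) :
    leadingPart g J j = ⊥ := by
  induction j, hj using Int.leInduction with
  | base => exact h
  | succ j hj ih =>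
    refine eq_bot_iff.2 fun w hw => (Submodule.mem_bot F).2 (htrans w ?_ fun y hy => ?_)
    · exact le_nonnegPart g (by omega) (leadingPart_le g J _ hw)
    · have hyw := lie_mem_leadingPart g hg hJ hy hw
      rw [show -1 + (j + 1) = j by ring, ih, Submodule.mem_bot] at hyw
      rw [← lie_skew, hyw, neg_zero]

theorem leadingPart_neg_one_ne_bot (hg : IsLieGrading g)
    (htrans : ∀ x ∈ nonnegPart g, (∀ y ∈ g (-1), ⁅x, y⁆ = 0) → x = 0)
    (hrad : ∀ J : Submodule F L, J.IsLieIdeal → J ≤ negPart g → J = ⊥)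
    (hJ : J.IsLieIdeal) (hJne : J ≠ ⊥) : leadingPart g J (-1) ≠ ⊥ := fun h =>
  hJne <| hrad J hJ <|
    (le_degreeLE_of_leadingPart_eq_bot g fun j hj =>
      leadingPart_eq_bot_of_neg_one g hg htrans hJ h j hj.le).trans <|
    (degreeLE_le_iSup g _).trans (iSup₂_le fun k hk => le_negPart g (by omega))

theorem le_leadingPart_neg (hg : IsLieGrading g)
    (hirr : ∀ W : Submodule F L, W ≤ g (-1) →
      (∀ x ∈ g 0, ∀ w ∈ W, ⁅x, w⁆ ∈ W) → W = ⊥ ∨ W = g (-1))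
    (hgen : ∀ i : ℤ, 2 ≤ i → g (-i) = bracketSpan (g (-1)) (g (-(i - 1))))
    (hJ : J.IsLieIdeal) (hlead : leadingPart g J (-1) ≠ ⊥) (i : ℤ) (hi : 1 ≤ i) :
    g (-i) ≤ leadingPart g J (-i) := by
  induction i, hi using Int.leInduction with
  | base =>
    have hstab : ∀ x ∈ g 0, ∀ w ∈ leadingPart g J (-1), ⁅x, w⁆ ∈ leadingPart g J (-1) :=
      fun x hx w hw => by simpa using lie_mem_leadingPart g hg hJ hx hw
    exact ((hirr _ (leadingPart_le g J _) hstab).resolve_left hlead).ge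
  | succ i hi ih =>
    rw [hgen (i + 1) (by omega), show i + 1 - 1 = i by ring, bracketSpan, Submodule.span_le]
    rintro _ ⟨x, hx, y, hy, rfl⟩
    have hxy := lie_mem_leadingPart g hg hJ hx (ih hy)
    rwa [show -1 + -i = -(i + 1) by ring] at hxy

theorem negPart_le_of_isLieIdeal (hg : IsLieGrading g) (q : ℤ)
    (hdepth : ∀ j : ℤ, q < j → g (-j) = ⊥)
    (hirr : ∀ W : Submodule F L, W ≤ g (-1) →
      (∀ x ∈ g 0, ∀ w ∈ W, ⁅x, w⁆ ∈ W) → W = ⊥ ∨ W = g (-1))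
    (htrans : ∀ x ∈ nonnegPart g, (∀ y ∈ g (-1), ⁅x, y⁆ = 0) → x = 0)
    (hgen : ∀ i : ℤ, 2 ≤ i → g (-i) = bracketSpan (g (-1)) (g (-(i - 1))))
    (hrad : ∀ J : Submodule F L, J.IsLieIdeal → J ≤ negPart g → J = ⊥)
    (hJ : J.IsLieIdeal) (hJne : J ≠ ⊥) : negPart g ≤ J := by
  have hlead := le_leadingPart_neg g hg hirr hgen hJ
    (leadingPart_neg_one_ne_bot g hg htrans hrad hJ hJne)
  suffices ∀ j < 0, g j ≤ J from iSup₂_le this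
  intro j
  induction j using Int.strongRec (m := -q) with
  | lt j hj =>
    intro _
    rw [← neg_neg j, hdepth (-j) (by omega)]
    exact bot_le
  | ge j _ ih =>
    intro hj
    exact le_of_le_leadingPart g (by simpa using hlead (-j) (by omega))
      fun k hk => ih k hk (by omega)

end Field

end GradedLieAlgebra

open GradedLieAlgebra in
theorem statement4_general {F L : Type*} [Field F] [LieRing L] [LieAlgebra F L]
    (g : ℤ → Submodule F L)
    (hdirect : DirectSum.IsInternal g)
    (hgraded : ∀ i j : ℤ, ∀ x ∈ g i, ∀ y ∈ g j, ⁅x, y⁆ ∈ g (i + j))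
    -- finite depth q
    (q : ℤ)
    (hdepth : ∀ j : ℤ, q < j → g (-j) = ⊥)
    -- irreducibility
    (hirr_ne : g (-1) ≠ ⊥)
    (hirr : ∀ W : Submodule F L, W ≤ g (-1) →
      (∀ x ∈ g 0, ∀ w ∈ W, ⁅x, w⁆ ∈ W) → W = ⊥ ∨ W = g (-1))
    -- transitivity
    (htrans : ∀ x ∈ nonnegPart g, (∀ y ∈ g (-1), ⁅x, y⁆ = 0) → x = 0)
    -- g₋ᵢ = ⁅g₋₁, g₋₍ᵢ₋₁₎⁆ for all i ≥ 2
    (hgen : ∀ i : ℤ, 2 ≤ i → g (-i) = bracketSpan (g (-1)) (g (-(i - 1))))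
    -- the only Lie ideal contained in the negative part is zero
    (hrad : ∀ J : Submodule F L, (∀ x : L, ∀ y ∈ J, ⁅x, y⁆ ∈ J) →
      J ≤ negPart g → J = ⊥) :
    ∃ I : Submodule F L,
      (∀ x : L, ∀ y ∈ I, ⁅x, y⁆ ∈ I) ∧
      I ≠ ⊥ ∧
      (∀ J : Submodule F L, (∀ x : L, ∀ y ∈ J, ⁅x, y⁆ ∈ J) → J ≠ ⊥ → I ≤ J) ∧
      negPart g ≤ I ∧
      I = ⨆ j : ℤ, I ⊓ g j := by
  let := hdirect.chooseDecomposition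
  set I := sInf {J : Submodule F L | J.IsLieIdeal ∧ J ≠ ⊥}
  have hI : I.IsLieIdeal := Submodule.IsLieIdeal.sInf fun J hJ => hJ.1
  have hnegI : negPart g ≤ I := le_sInf fun J hJ =>
    negPart_le_of_isLieIdeal g hgraded q hdepth hirr htrans hgen hrad hJ.1 hJ.2
  have hg1 : g (-1) ≤ I ⊓ g (-1) := le_inf ((le_negPart g (by norm_num)).trans hnegI) le_rfl
  have hgradedI : (⨆ j, I ⊓ g j) ≠ ⊥ :=
    ne_bot_of_le_ne_bot hirr_ne (hg1.trans (le_iSup (fun j => I ⊓ g j) (-1)))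
  refine ⟨I, hI, ne_bot_of_le_ne_bot hirr_ne (hg1.trans inf_le_left),
    fun J hJ hJne => sInf_le ⟨hJ, hJne⟩, hnegI, ?_⟩
  exact le_antisymm (sInf_le ⟨hI.iSup_inf g hgraded, hgradedI⟩)
    (iSup_le fun j => inf_le_left)

/-- An irreducible transitive graded Lie algebra of finite depth `q` with
`g₋ᵢ = ⁅g₋₁, g₋₍ᵢ₋₁₎⁆` for `i ≥ 2` and whose only Lie ideal contained in the negative
part is zero has a unique minimal nonzero Lie ideal `I`; moreover `I` contains the
negative part and is graded. -/
theorem statement4 {F L : Type*} [Field F] [LieRing L] [LieAlgebra F L]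
    (g : ℤ → Submodule F L)
    (hdirect : DirectSum.IsInternal g)
    (hgraded : ∀ i j : ℤ, ∀ x ∈ g i, ∀ y ∈ g j, ⁅x, y⁆ ∈ g (i + j))
    -- finite depth q
    (q : ℤ)
    (hdepth_ne : g (-q) ≠ ⊥)
    (hdepth : ∀ j : ℤ, q < j → g (-j) = ⊥)
    -- irreducibility
    (hirr_ne : g (-1) ≠ ⊥)
    (hirr : ∀ W : Submodule F L, W ≤ g (-1) →
      (∀ x ∈ g 0, ∀ w ∈ W, ⁅x, w⁆ ∈ W) → W = ⊥ ∨ W = g (-1))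
    -- transitivity
    (htrans : ∀ x ∈ nonnegPart g, (∀ y ∈ g (-1), ⁅x, y⁆ = 0) → x = 0)
    -- g₋ᵢ = ⁅g₋₁, g₋₍ᵢ₋₁₎⁆ for all i ≥ 2
    (hgen : ∀ i : ℤ, 2 ≤ i → g (-i) = bracketSpan (g (-1)) (g (-(i - 1))))
    -- the only Lie ideal contained in the negative part is zero
    (hrad : ∀ J : Submodule F L, (∀ x : L, ∀ y ∈ J, ⁅x, y⁆ ∈ J) →
      J ≤ negPart g → J = ⊥) :
    ∃ I : Submodule F L,
      (∀ x : L, ∀ y ∈ I, ⁅x, y⁆ ∈ I) ∧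
      I ≠ ⊥ ∧
      (∀ J : Submodule F L, (∀ x : L, ∀ y ∈ J, ⁅x, y⁆ ∈ J) → J ≠ ⊥ → I ≤ J) ∧
      negPart g ≤ I ∧
      I = ⨆ j : ℤ, I ⊓ g j :=
  statement4_general g hdirect hgraded q hdepth hirr_ne hirr htrans hgen hrad
end

section
/- Let g = ⊕_{j∈ℤ} g_j be a ℤ-graded Lie algebra over a field F, let t ≥ 1 be an integer, let F_0 be a Lie subalgebra of g_0, and let F_{-1} be a subspace of g_{-t} with ⁅F_0, F_{-1}⁆ ⊆ F_{-1}. Define subspaces F_{-i} := ⁅F_{-1}, F_{-i+1}⁆ (the linear span of such brackets) for i ≥ 2, and F_i := { y ∈ g_{it} : ⁅y, F_{-1}⁆ ⊆ F_{i-1} } for i ≥ 1. Then ⁅F_i, F_j⁆ ⊆ F_{i+j} for all integers i, j; in particular F = ⊕_j F_j is a graded Lie subalgebra of g. -/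
theorem Submodule.lie_mem_comm {R L : Type*} [Ring R] [LieRing L] [Module R L]
    (P : Submodule R L) {x y : L} : ⁅x, y⁆ ∈ P ↔ ⁅y, x⁆ ∈ P := by
  rw [← lie_skew, P.neg_mem_iff]

theorem lie_mem_of_mem_span {R L : Type*} [CommRing R] [LieRing L] [LieAlgebra R L]
    {P : Submodule R L} {S : Set L} {x w : L} (h : ∀ s ∈ S, ⁅x, s⁆ ∈ P)
    (hw : w ∈ Submodule.span R S) : ⁅x, w⁆ ∈ P := by
  induction hw using Submodule.span_induction with
  | mem s hs => exact h s hs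
  | zero => simp
  | add u v _ _ hu hv => simpa only [lie_add] using add_mem hu hv
  | smul c u _ hu => simpa only [lie_smul] using P.smul_mem c hu

structure IsProlongationFamily {F L : Type*} [Field F] [LieRing L] [LieAlgebra F L]
    (g : ℤ → Submodule F L) (t : ℤ) (Ffam : ℤ → Submodule F L) : Prop where
  zero_le : Ffam 0 ≤ g 0
  lie_mem_zero : ∀ x ∈ Ffam 0, ∀ y ∈ Ffam 0, ⁅x, y⁆ ∈ Ffam 0
  lie_mem_neg_one : ∀ x ∈ Ffam 0, ∀ y ∈ Ffam (-1), ⁅x, y⁆ ∈ Ffam (-1)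
  neg_sub_one_eq : ∀ i : ℤ, 1 ≤ i → Ffam (-i - 1) = bracketSpan (Ffam (-1)) (Ffam (-i))
  mem_iff : ∀ i : ℤ, 1 ≤ i → ∀ y : L,
    y ∈ Ffam i ↔ y ∈ g (i * t) ∧ ∀ x ∈ Ffam (-1), ⁅y, x⁆ ∈ Ffam (i - 1)

namespace IsProlongationFamily

variable {F L : Type*} [Field F] [LieRing L] [LieAlgebra F L]
  {g : ℤ → Submodule F L} {t : ℤ} {Ffam : ℤ → Submodule F L}

theorem le_of_nonneg (hF : IsProlongationFamily g t Ffam) {a : ℤ} (ha : 0 ≤ a) :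
    Ffam a ≤ g (a * t) := by
  rcases ha.eq_or_lt with rfl | ha
  · simpa using hF.zero_le
  · exact fun x hx ↦ ((hF.mem_iff a ha x).mp hx).1

theorem lie_mem_sub_one (hF : IsProlongationFamily g t Ffam) {a : ℤ} {x u : L}
    (hx : x ∈ Ffam a) (hu : u ∈ Ffam (-1)) : ⁅x, u⁆ ∈ Ffam (a - 1) := by
  rcases lt_trichotomy a 0 with ha | rfl | ha
  · rw [show a - 1 = -(-a) - 1 by ring, hF.neg_sub_one_eq (-a) (by omega),
      Submodule.lie_mem_comm]
    exact Submodule.subset_span ⟨u, hu, x, by rwa [neg_neg], rfl⟩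
  · simpa using hF.lie_mem_neg_one x hx u hu
  · exact ((hF.mem_iff a ha x).mp hx).2 u hu

theorem lie_mem_sub (hF : IsProlongationFamily g t Ffam) {j : ℤ} (hj : 1 ≤ j) {a : ℤ}
    {x w : L} (hx : x ∈ Ffam a) (hw : w ∈ Ffam (-j)) : ⁅x, w⁆ ∈ Ffam (a - j) := by
  induction j, hj using Int.leInduction generalizing a x w with
  | base => exact hF.lie_mem_sub_one hx hw
  | succ j hj ih =>
    rw [neg_add', hF.neg_sub_one_eq j hj] at hw
    refine lie_mem_of_mem_span ?_ hw
    rintro _ ⟨u, hu, v, hv, rfl⟩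
    rw [leibniz_lie]
    refine add_mem ?_ ?_
    · convert ih (hF.lie_mem_sub_one hx hu) hv using 2
      ring
    · rw [Submodule.lie_mem_comm]
      convert hF.lie_mem_sub_one (ih hx hv) hu using 2
      ring

theorem lie_mem_of_nonneg (hF : IsProlongationFamily g t Ffam)
    (hgraded : ∀ i j : ℤ, ∀ x ∈ g i, ∀ y ∈ g j, ⁅x, y⁆ ∈ g (i + j))
    {a b : ℤ} (ha : 0 ≤ a) (hb : 0 ≤ b) {x y : L} (hx : x ∈ Ffam a) (hy : y ∈ Ffam b) :
    ⁅x, y⁆ ∈ Ffam (a + b) := by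
  induction hn : (a + b).toNat using Nat.strong_induction_on generalizing a b x y with
  | _ n ih =>
  -- `d = -1` occurs when one factor of `⁅x, y⁆` has index `0`
  have lower : ∀ {c d : ℤ}, 0 ≤ c → -1 ≤ d → c + d = a + b - 1 →
      ∀ {u v : L}, u ∈ Ffam c → v ∈ Ffam d → ⁅u, v⁆ ∈ Ffam (a + b - 1) := by
    intro c d hc hd hcd u v hu hv
    rcases hd.eq_or_lt with rfl | hd
    · rw [← hcd]
      exact hF.lie_mem_sub_one hu hv
    · rw [← hcd]
      exact ih _ (by omega) hc (by omega) hu hv rfl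
  rcases (add_nonneg ha hb).eq_or_lt with hab | hab
  · obtain ⟨rfl, rfl⟩ : a = 0 ∧ b = 0 := by omega
    simpa using hF.lie_mem_zero x hx y hy
  · rw [hF.mem_iff _ hab]
    refine ⟨?_, fun z hz ↦ ?_⟩
    · simpa [add_mul] using hgraded _ _ x (hF.le_of_nonneg ha hx) y (hF.le_of_nonneg hb hy)
    · rw [lie_lie]
      exact sub_mem (lower ha (by omega) (by ring) hx (hF.lie_mem_sub_one hy hz))
        (lower hb (by omega) (by ring) hy (hF.lie_mem_sub_one hx hz))

theorem lie_mem (hF : IsProlongationFamily g t Ffam)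
    (hgraded : ∀ i j : ℤ, ∀ x ∈ g i, ∀ y ∈ g j, ⁅x, y⁆ ∈ g (i + j))
    {i j : ℤ} {x y : L} (hx : x ∈ Ffam i) (hy : y ∈ Ffam j) : ⁅x, y⁆ ∈ Ffam (i + j) := by
  rcases lt_or_ge j 0 with hj | hj
  · simpa using hF.lie_mem_sub (j := -j) (by omega) hx (by rwa [neg_neg])
  rcases lt_or_ge i 0 with hi | hi
  · rw [Submodule.lie_mem_comm, add_comm]
    simpa using hF.lie_mem_sub (j := -i) (by omega) hy (by rwa [neg_neg])
  · exact hF.lie_mem_of_nonneg hgraded hi hj hx hy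

end IsProlongationFamily

theorem statement5_general {F L : Type*} [Field F] [LieRing L] [LieAlgebra F L]
    (g : ℤ → Submodule F L)
    (hgraded : ∀ i j : ℤ, ∀ x ∈ g i, ∀ y ∈ g j, ⁅x, y⁆ ∈ g (i + j))
    (t : ℤ)
    (F₀ Fm1 : Submodule F L)
    (hF₀le : F₀ ≤ g 0)
    (hF₀sub : ∀ x ∈ F₀, ∀ y ∈ F₀, ⁅x, y⁆ ∈ F₀)
    (hFm1mod : ∀ x ∈ F₀, ∀ y ∈ Fm1, ⁅x, y⁆ ∈ Fm1)
    (Ffam : ℤ → Submodule F L)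
    (hFfam0 : Ffam 0 = F₀)
    (hFfamm1 : Ffam (-1) = Fm1)
    (hFfamneg : ∀ i : ℤ, 2 ≤ i → Ffam (-i) = bracketSpan Fm1 (Ffam (-(i - 1))))
    (hFfampos : ∀ i : ℤ, 1 ≤ i → ∀ y : L,
      y ∈ Ffam i ↔ y ∈ g (i * t) ∧ ∀ x ∈ Fm1, ⁅y, x⁆ ∈ Ffam (i - 1)) :
    ∀ i j : ℤ, ∀ x ∈ Ffam i, ∀ y ∈ Ffam j, ⁅x, y⁆ ∈ Ffam (i + j) := by
  subst hFfam0 hFfamm1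
  have hF : IsProlongationFamily g t Ffam :=
    { zero_le := hF₀le
      lie_mem_zero := hF₀sub
      lie_mem_neg_one := hFm1mod
      neg_sub_one_eq := fun i hi ↦ by
        simpa only [neg_add', add_sub_cancel_right] using hFfamneg (i + 1) (by omega)
      mem_iff := hFfampos }
  exact fun i j x hx y hy ↦ hF.lie_mem hgraded hx hy

/-- Given a graded Lie algebra `g`, a Lie subalgebra `F₀` of `g 0`, an `F₀`-submodule
`Fm1` of `g (-t)` (`t ≥ 1`), and the family defined by `Ffam 0 = F₀`, `Ffam (-1) = Fm1`,
`Ffam (-i) = ⁅Fm1, Ffam (-(i-1))⁆` for `i ≥ 2` and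
`Ffam i = {y ∈ g (i*t) : ⁅y, Fm1⁆ ⊆ Ffam (i-1)}` for `i ≥ 1`, the family `Ffam`
satisfies `⁅Ffam i, Ffam j⁆ ⊆ Ffam (i+j)` for all `i, j`. -/
theorem statement5 {F L : Type*} [Field F] [LieRing L] [LieAlgebra F L]
    (g : ℤ → Submodule F L)
    (hdirect : DirectSum.IsInternal g)
    (hgraded : ∀ i j : ℤ, ∀ x ∈ g i, ∀ y ∈ g j, ⁅x, y⁆ ∈ g (i + j))
    (t : ℤ) (ht : 1 ≤ t)
    (F₀ Fm1 : Submodule F L)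
    (hF₀le : F₀ ≤ g 0)
    (hF₀sub : ∀ x ∈ F₀, ∀ y ∈ F₀, ⁅x, y⁆ ∈ F₀)
    (hFm1le : Fm1 ≤ g (-t))
    (hFm1mod : ∀ x ∈ F₀, ∀ y ∈ Fm1, ⁅x, y⁆ ∈ Fm1)
    (Ffam : ℤ → Submodule F L)
    (hFfam0 : Ffam 0 = F₀)
    (hFfamm1 : Ffam (-1) = Fm1)
    (hFfamneg : ∀ i : ℤ, 2 ≤ i → Ffam (-i) = bracketSpan Fm1 (Ffam (-(i - 1))))
    (hFfampos : ∀ i : ℤ, 1 ≤ i → ∀ y : L,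
      y ∈ Ffam i ↔ y ∈ g (i * t) ∧ ∀ x ∈ Fm1, ⁅y, x⁆ ∈ Ffam (i - 1)) :
    ∀ i j : ℤ, ∀ x ∈ Ffam i, ∀ y ∈ Ffam j, ⁅x, y⁆ ∈ Ffam (i + j) :=
  statement5_general g hgraded t F₀ Fm1 hF₀le hF₀sub hFm1mod Ffam hFfam0 hFfamm1 hFfamneg hFfampos
end

section
/- Let g be a Lie algebra over a field F, let g_0 be a Lie subalgebra of g, and let U, V, M be subspaces of g each stable under the adjoint action of g_0 (i.e. ⁅g_0, U⁆ ⊆ U, ⁅g_0, V⁆ ⊆ V, ⁅g_0, M⁆ ⊆ M). Assume ⁅U, V⁆ ⊆ g_0 and ⁅U, ⁅U, V⁆⁆ = 0. Assume further that M is finite-dimensional and irreducible as a g_0-module (M ≠ 0 and the only subspaces of M stable under ad g_0 are 0 and M), and that for all u ∈ U and v ∈ V the endomorphism of M sending w to ⁅⁅u, v⁆, w⁆ is nilpotent. Then ⁅⁅U, V⁆, M⁆ = 0. -/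
/-! For `u ∈ U` the operators `ad ⁅u, v⁆` on `M` (`v ∈ V`) form a linear space `A u` of nilpotent
endomorphisms, and `[A u, A u'] ⊆ A u'` because `⁅⁅u, v⁆, ⁅u', v'⁆⁆ = ⁅u', ⁅⁅u, v⁆, v'⁆⁆` when
`⁅U, ⁅U, V⁆⁆ = 0`. On a minimal nonzero subspace of `M` invariant under all the `A u`, Engel's
theorem makes the common kernel of each `A u` nonzero, and that kernel is invariant because `A u`
is normalised by every `A u'`; so it is the whole subspace, and all of `⁅U, V⁆` kills some
`w₀ ≠ 0`. The annihilator of `⁅U, V⁆` in `M` is `g₀`-stable, hence equal to `M` by irreducibility.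
-/

section Engel
attribute [local instance] LieRing.ofAssociativeRing
variable {K V : Type*} [CommRing K] [AddCommGroup V] [Module K V]

theorem Module.End.exists_mem_ne_zero_forall_apply_eq_zero [IsNoetherian K V]
    (E : Submodule K (Module.End K V))
    (hE : ∀ a ∈ E, ∀ b ∈ E, a * b - b * a ∈ E) (hnil : ∀ a ∈ E, IsNilpotent a)
    (W : Submodule K V) (hW : ∀ a ∈ E, ∀ w ∈ W, a w ∈ W) (hW₀ : W ≠ ⊥) :
    ∃ w ∈ W, w ≠ 0 ∧ ∀ a ∈ E, a w = 0 := by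
  let E' : LieSubalgebra K (Module.End K V) := { E with lie_mem' := fun ha hb => hE _ ha _ hb }
  let W' : LieSubmodule K E' V := { W with lie_mem := fun {a} _ hw => hW a a.2 _ hw }
  have : Nontrivial W' := Submodule.nontrivial_iff_ne_bot.2 hW₀
  have : LieModule.IsNilpotent E' W' := by
    rw [LieModule.isNilpotent_iff_forall' (R := K)]
    intro a
    obtain ⟨n, hn⟩ := hnil a a.2
    refine ⟨n, LinearMap.ext fun w => Subtype.ext ?_⟩
    rw [LieSubmodule.coe_toEnd_pow, LieSubalgebra.toEnd_eq, LieModule.toEnd_module_end]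
    simp [hn]
  have := LieModule.nontrivial_max_triv_of_isNilpotent K E' W'
  obtain ⟨⟨⟨w, hw⟩, hw'⟩, hw₀⟩ := exists_ne (0 : LieModule.maxTrivSubmodule K E' W')
  refine ⟨w, hw, by simpa using hw₀, fun a ha => ?_⟩
  have := hw' ⟨a, ha⟩
  simpa using congrArg Subtype.val this

end Engel

section Normalizes
variable {K V : Type*} [Field K] [AddCommGroup V] [Module K V]

theorem Module.End.exists_ne_zero_forall_apply_eq_zero_of_normalizes [FiniteDimensional K V]
    [Nontrivial V] {ι : Type*} (A : ι → Submodule K (Module.End K V))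
    (hA : ∀ i j, ∀ a ∈ A i, ∀ b ∈ A j, a * b - b * a ∈ A j)
    (hnil : ∀ i, ∀ a ∈ A i, IsNilpotent a) :
    ∃ v : V, v ≠ 0 ∧ ∀ i, ∀ a ∈ A i, a v = 0 := by
  let stable : Set (Submodule K V) := {W | W ≠ ⊥ ∧ ∀ i, ∀ a ∈ A i, ∀ w ∈ W, a w ∈ W}
  obtain ⟨W, ⟨hW₀, hW⟩, hmin⟩ := wellFounded_lt.has_min stable
    ⟨⊤, top_ne_bot, fun _ _ _ _ _ => Submodule.mem_top⟩
  obtain ⟨w, hw, hw₀⟩ := (Submodule.ne_bot_iff W).1 hW₀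
  refine ⟨w, hw₀, fun i => ?_⟩
  let Wi : Submodule K V := W ⊓ ⨅ a ∈ A i, LinearMap.ker a
  have mem_Wi {x : V} : x ∈ Wi ↔ x ∈ W ∧ ∀ a ∈ A i, a x = 0 := by
    simp only [Wi, Submodule.mem_inf, Submodule.mem_iInf, LinearMap.mem_ker]
  have hWi : Wi ∈ stable := by
    refine ⟨?_, fun j b hb x hx => ?_⟩
    · obtain ⟨x, hxW, hx₀, hx⟩ := exists_mem_ne_zero_forall_apply_eq_zero (A i)
        (hA i i) (hnil i) W (hW i) hW₀
      exact (Submodule.ne_bot_iff Wi).2 ⟨x, mem_Wi.2 ⟨hxW, hx⟩, hx₀⟩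
    · rw [mem_Wi] at hx ⊢
      refine ⟨hW j b hb x hx.1, fun a ha => ?_⟩
      have hba : (b * a - a * b) x = 0 := hx.2 _ (hA j i b hb a ha)
      calc a (b x) = b (a x) - (b * a - a * b) x := by simp
        _ = 0 := by rw [hx.2 a ha, hba, map_zero, sub_zero]
  have : Wi = W := by
    by_contra h
    exact hmin Wi hWi (lt_of_le_of_ne inf_le_left h)
  exact (mem_Wi.1 (this ▸ hw)).2

end Normalizes

section LieAlgebra
variable {F L : Type*} [Field F] [LieRing L] [LieAlgebra F L]

theorem lie_mem_map_ad {V : Submodule F L} {u u' x y : L}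
    (hV : ∀ v ∈ V, ∀ v' ∈ V, ⁅⁅u, v⁆, v'⁆ ∈ V) (hu' : ∀ v ∈ V, ⁅u', ⁅u, v⁆⁆ = 0)
    (hx : x ∈ V.map (LieAlgebra.ad F L u)) (hy : y ∈ V.map (LieAlgebra.ad F L u')) :
    ⁅x, y⁆ ∈ V.map (LieAlgebra.ad F L u') := by
  obtain ⟨v, hv, rfl⟩ := hx
  obtain ⟨v', hv', rfl⟩ := hy
  refine ⟨⁅⁅u, v⁆, v'⁆, hV v hv v' hv', ?_⟩
  rw [LieAlgebra.ad_apply, LieAlgebra.ad_apply, LieAlgebra.ad_apply,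
    leibniz_lie ⁅u, v⁆ u' v', ← lie_skew ⁅u, v⁆ u', hu' v hv, neg_zero, zero_lie, zero_add]

theorem lie_lie_lie_eq_zero_of_forall {U V : Submodule F L} {x w : L}
    (hxU : ∀ u ∈ U, ⁅x, u⁆ ∈ U) (hxV : ∀ v ∈ V, ⁅x, v⁆ ∈ V)
    (hw : ∀ u ∈ U, ∀ v ∈ V, ⁅⁅u, v⁆, w⁆ = 0) {u v : L} (hu : u ∈ U) (hv : v ∈ V) :
    ⁅⁅u, v⁆, ⁅x, w⁆⁆ = 0 := by
  have hux : ⁅⁅u, v⁆, x⁆ = -⁅⁅x, u⁆, v⁆ - ⁅u, ⁅x, v⁆⁆ := by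
    rw [← lie_skew, leibniz_lie x u v, neg_add, sub_eq_add_neg]
  rw [leibniz_lie, hux, sub_lie, neg_lie, hw _ (hxU u hu) v hv, hw u hu _ (hxV v hv),
    hw u hu v hv, lie_zero]
  simp

namespace Submodule

def adOn (P M : Submodule F L) : Submodule F (Module.End F M) where
  carrier := {f | ∃ x ∈ P, ∀ w : M, (f w : L) = ⁅x, (w : L)⁆}
  add_mem' := by
    rintro f g ⟨x, hx, hf⟩ ⟨y, hy, hg⟩
    exact ⟨x + y, P.add_mem hx hy, fun w => by simp [hf, hg, add_lie]⟩
  zero_mem' := ⟨0, P.zero_mem, fun w => by simp⟩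
  smul_mem' := by
    rintro c f ⟨x, hx, hf⟩
    exact ⟨c • x, P.smul_mem c hx, fun w => by simp [hf]⟩

theorem mul_sub_mul_mem_adOn {P Q R M : Submodule F L} (hPQ : ∀ x ∈ P, ∀ y ∈ Q, ⁅x, y⁆ ∈ R)
    {f g : Module.End F M} (hf : f ∈ P.adOn M) (hg : g ∈ Q.adOn M) : f * g - g * f ∈ R.adOn M := by
  obtain ⟨x, hx, hfx⟩ := hf
  obtain ⟨y, hy, hgy⟩ := hg
  exact ⟨⁅x, y⁆, hPQ x hx y hy, fun w => by simp [hfx, hgy, lie_lie]⟩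

theorem isNilpotent_of_mem_adOn {P M : Submodule F L}
    (hP : ∀ x ∈ P, ∃ n : ℕ, ∀ w ∈ M, (LieAlgebra.ad F L x ^ n) w = 0)
    {f : Module.End F M} (hf : f ∈ P.adOn M) : IsNilpotent f := by
  obtain ⟨x, hx, hfx⟩ := hf
  obtain ⟨n, hn⟩ := hP x hx
  have hpow : ∀ k (w : M), ((f ^ k) w : L) = (LieAlgebra.ad F L x ^ k) w := by
    intro k
    induction k with
    | zero => simp
    | succ k ih => intro w; simp [pow_succ', hfx, ih]
  exact ⟨n, LinearMap.ext fun w => Subtype.ext ((hpow n w).trans (hn w w.2))⟩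

end Submodule

end LieAlgebra

theorem statement8_general {F L : Type*} [Field F] [LieRing L] [LieAlgebra F L]
    (g₀ : Submodule F L)
    (U V M : Submodule F L)
    (hU : ∀ x ∈ g₀, ∀ u ∈ U, ⁅x, u⁆ ∈ U)
    (hV : ∀ x ∈ g₀, ∀ v ∈ V, ⁅x, v⁆ ∈ V)
    (hM : ∀ x ∈ g₀, ∀ w ∈ M, ⁅x, w⁆ ∈ M)
    (hUV : ∀ u ∈ U, ∀ v ∈ V, ⁅u, v⁆ ∈ g₀)
    (hUUV : ∀ u' ∈ U, ∀ u ∈ U, ∀ v ∈ V, ⁅u', ⁅u, v⁆⁆ = 0)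
    (hMfin : FiniteDimensional F M)
    (hMne : M ≠ ⊥)
    (hMirr : ∀ W : Submodule F L, W ≤ M →
      (∀ x ∈ g₀, ∀ w ∈ W, ⁅x, w⁆ ∈ W) → W = ⊥ ∨ W = M)
    (hnil : ∀ u ∈ U, ∀ v ∈ V, ∃ n : ℕ, ∀ w ∈ M,
      ((LieAlgebra.ad F L ⁅u, v⁆) ^ n) w = 0) :
    ∀ u ∈ U, ∀ v ∈ V, ∀ w ∈ M, ⁅⁅u, v⁆, w⁆ = 0 := by
  have : Nontrivial M := Submodule.nontrivial_iff_ne_bot.2 hMne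
  obtain ⟨w₀, hw₀, hker⟩ := Module.End.exists_ne_zero_forall_apply_eq_zero_of_normalizes
    (fun u : U => (V.map (LieAlgebra.ad F L u)).adOn M)
    (fun u u' _ hf _ hg => Submodule.mul_sub_mul_mem_adOn
      (fun _ hx _ hy => lie_mem_map_ad (fun v hv => hV _ (hUV u u.2 v hv))
        (fun v hv => hUUV u' u'.2 u u.2 v hv) hx hy) hf hg)
    (fun u _ hf => Submodule.isNilpotent_of_mem_adOn
      (fun _ hx => by obtain ⟨v, hv, rfl⟩ := hx; exact hnil u u.2 v hv) hf)
  let N : Submodule F L := M ⊓ ⨅ u ∈ U, ⨅ v ∈ V, LinearMap.ker (LieAlgebra.ad F L ⁅u, v⁆)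
  have mem_N {w : L} : w ∈ N ↔ w ∈ M ∧ ∀ u ∈ U, ∀ v ∈ V, ⁅⁅u, v⁆, w⁆ = 0 := by
    simp [N]
  have hN₀ : N ≠ ⊥ := by
    refine (Submodule.ne_bot_iff N).2 ⟨w₀, mem_N.2 ⟨w₀.2, fun u hu v hv => ?_⟩, by simpa using hw₀⟩
    exact congrArg Subtype.val (hker ⟨u, hu⟩ ((LieAlgebra.ad F L ⁅u, v⁆).restrict
      (hM _ (hUV u hu v hv))) ⟨⁅u, v⁆, ⟨v, hv, rfl⟩, fun _ => rfl⟩)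
  have hN_stable : ∀ x ∈ g₀, ∀ w ∈ N, ⁅x, w⁆ ∈ N := fun x hx w hw =>
    mem_N.2 ⟨hM x hx w (mem_N.1 hw).1, fun u hu v hv =>
      lie_lie_lie_eq_zero_of_forall (hU x hx) (hV x hx) (mem_N.1 hw).2 hu hv⟩
  have hN : N = M := (hMirr N inf_le_left hN_stable).resolve_left hN₀
  intro u hu v hv w hw
  exact (mem_N.1 (hN ▸ hw)).2 u hu v hv

/-- Lemma on weakly closed sets: if `U`, `V`, `M` are `g₀`-stable subspaces of a Lie
algebra with `⁅U, V⁆ ⊆ g₀` and `⁅U, ⁅U, V⁆⁆ = 0`, `M` is a finite-dimensional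
irreducible `g₀`-module, and each `ad ⁅u, v⁆` acts nilpotently on `M`, then
`⁅⁅U, V⁆, M⁆ = 0`. -/
theorem statement8 {F L : Type*} [Field F] [LieRing L] [LieAlgebra F L]
    (g₀ : Submodule F L)
    (hg₀ : ∀ x ∈ g₀, ∀ y ∈ g₀, ⁅x, y⁆ ∈ g₀)
    (U V M : Submodule F L)
    (hU : ∀ x ∈ g₀, ∀ u ∈ U, ⁅x, u⁆ ∈ U)
    (hV : ∀ x ∈ g₀, ∀ v ∈ V, ⁅x, v⁆ ∈ V)
    (hM : ∀ x ∈ g₀, ∀ w ∈ M, ⁅x, w⁆ ∈ M)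
    (hUV : ∀ u ∈ U, ∀ v ∈ V, ⁅u, v⁆ ∈ g₀)
    (hUUV : ∀ u' ∈ U, ∀ u ∈ U, ∀ v ∈ V, ⁅u', ⁅u, v⁆⁆ = 0)
    (hMfin : FiniteDimensional F M)
    (hMne : M ≠ ⊥)
    (hMirr : ∀ W : Submodule F L, W ≤ M →
      (∀ x ∈ g₀, ∀ w ∈ W, ⁅x, w⁆ ∈ W) → W = ⊥ ∨ W = M)
    (hnil : ∀ u ∈ U, ∀ v ∈ V, ∃ n : ℕ, ∀ w ∈ M,
      ((LieAlgebra.ad F L ⁅u, v⁆) ^ n) w = 0) :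
    ∀ u ∈ U, ∀ v ∈ V, ∀ w ∈ M, ⁅⁅u, v⁆, w⁆ = 0 :=
  statement8_general g₀ U V M hU hV hM hUV hUUV hMfin hMne hMirr hnil
end

section
/- Let g = ⊕_{j∈ℤ} g_j be a ℤ-graded Lie algebra of depth q satisfying conditions (1.6), with q ≥ 2. Let V be an irreducible g_0-submodule of g_{-q+1}, i.e. a nonzero subspace of g_{-q+1} with ⁅g_0, V⁆ ⊆ V whose only subspaces stable under ad g_0 are 0 and V. Then the annihilator { x ∈ g_{q-1} : ⁅x, V⁆ = 0 } is zero. -/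
/-!
Let `A` be the annihilator of `V` in `g (q - 1)`.

First, no nonzero subspace of `g (-q + 1)` is centralized by `g (-1)`. Let `N n ≤ g (-q + n)`
consist of the elements all of whose `n`-fold brackets with `g (-1)` vanish. Its degree `-1` part
is a `g 0`-submodule of `g (-1)`. If it is all of `g (-1)`, then `g (-q) = 0` since `g₋` is
generated by `g (-1)`; if it is zero, transitivity kills `N n` in degrees `≥ 0`, so `⨆ n, N n` is
an ideal inside `g₋`, hence zero, and so is `N 1`.

Second, `⁅A, g (-q)⁆` is a `g 0`-submodule of `g (-1)`; it cannot be all of `g (-1)`, which would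
then centralize `V`, so it is zero. Thus `A` lies in the common centralizer of `V` and `g (-q)`.
Its degree `-1` part vanishes by the same irreducibility argument, and bracketing with `g (-1)`
together with transitivity carries this vanishing up to degree `q - 1`.
-/

section Bracket

variable {F L : Type*} [Field F] [LieRing L] [LieAlgebra F L]

/-- The Lie analogue of `Submodule.colon`. -/
def bracketColon (M B : Submodule F L) : Submodule F L where
  carrier := {x | ∀ b ∈ B, ⁅x, b⁆ ∈ M}
  add_mem' hx hy b hb := by rw [add_lie]; exact M.add_mem (hx b hb) (hy b hb)
  zero_mem' b _ := by rw [zero_lie]; exact M.zero_mem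
  smul_mem' c x hx b hb := by rw [smul_lie]; exact M.smul_mem c (hx b hb)

@[simp]
lemma mem_bracketColon {M B : Submodule F L} {x : L} :
    x ∈ bracketColon M B ↔ ∀ b ∈ B, ⁅x, b⁆ ∈ M :=
  Iff.rfl

lemma le_bracketColon_bot_bot (S : Submodule F L) : S ≤ bracketColon ⊥ ⊥ :=
  fun _ _ => by simp

lemma lie_mem_bracketSpan {A B : Submodule F L} {a b : L} (ha : a ∈ A) (hb : b ∈ B) :
    ⁅a, b⁆ ∈ bracketSpan A B :=
  Submodule.subset_span ⟨a, ha, b, hb, rfl⟩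

lemma bracketSpan_le {A B M : Submodule F L} :
    bracketSpan A B ≤ M ↔ ∀ a ∈ A, ∀ b ∈ B, ⁅a, b⁆ ∈ M := by
  refine Submodule.span_le.trans ⟨fun h a ha b hb => h ⟨a, ha, b, hb, rfl⟩, ?_⟩
  rintro h _ ⟨a, ha, b, hb, rfl⟩
  exact h a ha b hb

lemma mem_bracketColon_bracketSpan {M A B : Submodule F L} {x : L} :
    x ∈ bracketColon M (bracketSpan A B) ↔ ∀ a ∈ A, ∀ b ∈ B, ⁅x, ⁅a, b⁆⁆ ∈ M :=
  bracketSpan_le (M := M.comap (LieModule.toEnd F L L x))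

lemma lie_mem_of_mem_iSup {ι κ : Sort*} {A : ι → Submodule F L} {B : κ → Submodule F L}
    {M : Submodule F L} (h : ∀ i j, ∀ a ∈ A i, ∀ b ∈ B j, ⁅a, b⁆ ∈ M) {a b : L}
    (ha : a ∈ ⨆ i, A i) (hb : b ∈ ⨆ j, B j) : ⁅a, b⁆ ∈ M := by
  refine Submodule.iSup_induction A (motive := fun a => ⁅a, b⁆ ∈ M) ha (fun i a ha => ?_)
    (by simp) fun a a' ha ha' => by rw [add_lie]; exact M.add_mem ha ha'
  exact Submodule.iSup_induction B (motive := fun b => ⁅a, b⁆ ∈ M) hb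
    (fun j b hb => h i j a ha b hb) (by simp) fun b b' hb hb' => by
      rw [lie_add]; exact M.add_mem hb hb'

lemma lie_mem_bracketColon_bot {B C : Submodule F L} {x w : L} (hxB : x ∈ bracketColon ⊥ B)
    (hxC : x ∈ bracketColon ⊥ C) (hw : w ∈ bracketColon C B) : ⁅x, w⁆ ∈ bracketColon ⊥ B := by
  intro b hb
  rw [lie_lie, (Submodule.mem_bot F).1 (hxC _ (hw b hb)), (Submodule.mem_bot F).1 (hxB b hb),
    lie_zero, sub_zero]
  exact Submodule.zero_mem _

/-! `S ≤ bracketColon W W` says that `W` is stable under `ad S`. -/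

lemma le_bracketColon_inf {S X Y : Submodule F L} (hX : S ≤ bracketColon X X)
    (hY : S ≤ bracketColon Y Y) : S ≤ bracketColon (X ⊓ Y) (X ⊓ Y) :=
  fun _ hs _ hw => ⟨hX hs _ hw.1, hY hs _ hw.2⟩

lemma le_bracketColon_bracketColon {S M B : Submodule F L} (hM : S ≤ bracketColon M M)
    (hB : S ≤ bracketColon B B) : S ≤ bracketColon (bracketColon M B) (bracketColon M B) := by
  intro s hs x hx b hb
  rw [lie_lie]
  exact M.sub_mem (hM hs _ (hx b hb)) (hx _ (hB hs b hb))

lemma le_bracketColon_bracketSpan {S A B : Submodule F L} (hA : S ≤ bracketColon A A)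
    (hB : S ≤ bracketColon B B) : S ≤ bracketColon (bracketSpan A B) (bracketSpan A B) := by
  intro s hs
  rw [mem_bracketColon_bracketSpan]
  intro a ha b hb
  rw [leibniz_lie]
  exact add_mem (lie_mem_bracketSpan (hA hs a ha) hb) (lie_mem_bracketSpan ha (hB hs b hb))

end Bracket

section Grading

variable {F L : Type*} [Field F] [LieRing L] [LieAlgebra F L] {g : ℤ → Submodule F L}

lemma le_negPart {j : ℤ} (hj : j < 0) : g j ≤ negPart g :=
  le_iSup₂ (f := fun i (_ : i < 0) => g i) j hj

lemma le_nonnegPart_s10 {j : ℤ} (hj : 0 ≤ j) : g j ≤ nonnegPart g :=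
  le_iSup₂ (f := fun i (_ : i ≥ 0) => g i) j hj

lemma eq_bot_of_le_bracketColon_bot
    (htrans : ∀ x ∈ nonnegPart g, (∀ y ∈ g (-1), ⁅x, y⁆ = 0) → x = 0)
    {X : Submodule F L} {d : ℤ} (hd : 0 ≤ d) (hXd : X ≤ g d) (hX : X ≤ bracketColon ⊥ (g (-1))) :
    X = ⊥ :=
  eq_bot_iff.2 fun x hx =>
    (htrans x (le_nonnegPart_s10 hd (hXd hx)) fun y hy => (Submodule.mem_bot F).1 (hX hx y hy)).symm ▸
      Submodule.zero_mem _

variable [SetLike.GradedBracket g]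

lemma lie_mem_of_add_eq {i j k : ℤ} {x y : L} (hx : x ∈ g i) (hy : y ∈ g j) (h : i + j = k) :
    ⁅x, y⁆ ∈ g k :=
  h ▸ SetLike.GradedBracket.bracket_mem hx hy

lemma le_bracketColon_zero (j : ℤ) : g 0 ≤ bracketColon (g j) (g j) :=
  fun _ hx _ hy => lie_mem_of_add_eq hx hy (zero_add j)

end Grading

section KerTower

variable {F L : Type*} [Field F] [LieRing L] [LieAlgebra F L] {g : ℤ → Submodule F L} {q : ℤ}

/-- `kerTower g q n` consists of the `x ∈ g (-q + n)` all of whose `n`-fold brackets with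
`g (-1)` vanish. -/
def kerTower (g : ℤ → Submodule F L) (q : ℤ) : ℕ → Submodule F L
  | 0 => ⊥
  | n + 1 => g (-q + (n + 1 : ℕ)) ⊓ bracketColon (kerTower g q n) (g (-1))

lemma kerTower_le : ∀ n : ℕ, kerTower g q n ≤ g (-q + n)
  | 0 => bot_le
  | _ + 1 => inf_le_left

lemma mem_kerTower_succ {n : ℕ} {x : L} :
    x ∈ kerTower g q (n + 1) ↔
      x ∈ g (-q + (n + 1 : ℕ)) ∧ ∀ w ∈ g (-1), ⁅x, w⁆ ∈ kerTower g q n :=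
  Iff.rfl

lemma lie_mem_kerTower_pred {n : ℕ} {x w : L} (hx : x ∈ kerTower g q n) (hw : w ∈ g (-1)) :
    ⁅x, w⁆ ∈ kerTower g q (n - 1) := by
  cases n with
  | zero => simp_all [kerTower]
  | succ n => exact (mem_kerTower_succ.1 hx).2 w hw

lemma lie_mem_kerTower_sub
    (hgen : ∀ i : ℤ, 2 ≤ i → g (-i) = bracketSpan (g (-1)) (g (-(i - 1))))
    (k : ℕ) (hk : 1 ≤ k) (n : ℕ) {x t : L} (hx : x ∈ kerTower g q n) (ht : t ∈ g (-k)) :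
    ⁅x, t⁆ ∈ kerTower g q (n - k) := by
  induction k, hk using Nat.le_induction generalizing n x t with
  | base => exact lie_mem_kerTower_pred hx (by simpa using ht)
  | succ k hk ih =>
    rw [hgen _ (by omega),
      show ((k + 1 : ℕ) : ℤ) - 1 = k by push_cast; ring] at ht
    refine mem_bracketColon_bracketSpan.2 (fun w hw u hu => ?_) t ht
    rw [leibniz_lie, ← lie_skew w]
    refine add_mem ?_ (neg_mem ?_)
    · simpa [Nat.sub_sub, Nat.add_comm 1] using ih (n - 1) (lie_mem_kerTower_pred hx hw) hu
    · simpa [Nat.sub_sub] using lie_mem_kerTower_pred (ih n hx hu) hw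

lemma kerTower_succ_eq_bot (htrans : ∀ x ∈ nonnegPart g, (∀ y ∈ g (-1), ⁅x, y⁆ = 0) → x = 0)
    {m : ℕ} (hm : q ≤ m + 1) (h : kerTower g q m = ⊥) : kerTower g q (m + 1) = ⊥ :=
  eq_bot_of_le_bracketColon_bot htrans (by omega : 0 ≤ -q + (m + 1 : ℕ)) inf_le_left
    (h ▸ inf_le_right)

lemma neg_le_kerTower
    (hgen : ∀ i : ℤ, 2 ≤ i → g (-i) = bracketSpan (g (-1)) (g (-(i - 1))))
    {m : ℕ} (h : g (-1) ≤ kerTower g q m) (k : ℕ) (hk : 1 ≤ k) (hkm : k ≤ m + 1) :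
    g (-k) ≤ kerTower g q (m + 1 - k) := by
  induction k, hk using Nat.le_induction with
  | base => simpa using h
  | succ k hk ih =>
    rw [hgen _ (by omega), show ((k + 1 : ℕ) : ℤ) - 1 = k by push_cast; ring, bracketSpan_le]
    intro w hw u hu
    rw [← lie_skew]
    simpa [Nat.sub_sub] using neg_mem (lie_mem_kerTower_pred (ih (by omega) hu) hw)

variable [SetLike.GradedBracket g]

lemma lie_mem_kerTower_add_of_pred {k : ℕ}
    (hpred : ∀ (n : ℕ) {x u : L}, x ∈ kerTower g q (n + 1) → u ∈ g (k - 1) →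
      ⁅x, u⁆ ∈ kerTower g q (n + k))
    (n : ℕ) {x t : L} (hx : x ∈ kerTower g q n) (ht : t ∈ g k) :
    ⁅x, t⁆ ∈ kerTower g q (n + k) := by
  induction n generalizing x with
  | zero => simp_all [kerTower]
  | succ n ih =>
    rw [show n + 1 + k = n + k + 1 by omega, mem_kerTower_succ]
    refine ⟨lie_mem_of_add_eq (kerTower_le _ hx) ht (by push_cast; ring), fun w hw => ?_⟩
    rw [lie_lie, ← lie_skew t ⁅x, w⁆, sub_neg_eq_add]
    exact add_mem (hpred n hx (lie_mem_of_add_eq ht hw (by ring)))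
      (ih ((mem_kerTower_succ.1 hx).2 w hw))

lemma lie_mem_kerTower_add (k n : ℕ) {x t : L} (hx : x ∈ kerTower g q n) (ht : t ∈ g k) :
    ⁅x, t⁆ ∈ kerTower g q (n + k) := by
  induction k generalizing n x t with
  | zero => exact lie_mem_kerTower_add_of_pred (fun n _ _ hx hu => lie_mem_kerTower_pred hx
      (by simpa using hu)) n hx ht
  | succ k ih =>
    refine lie_mem_kerTower_add_of_pred (fun n _ _ hx hu => ?_) n hx ht
    rw [show n + (k + 1) = n + 1 + k by omega]
    exact ih (n + 1) hx (by simpa using hu)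

lemma lie_mem_iSup_kerTower (htop : ⨆ j, g j = ⊤)
    (hgen : ∀ i : ℤ, 2 ≤ i → g (-i) = bracketSpan (g (-1)) (g (-(i - 1))))
    (x : L) {y : L} (hy : y ∈ ⨆ n, kerTower g q n) : ⁅x, y⁆ ∈ ⨆ n, kerTower g q n := by
  refine lie_mem_of_mem_iSup (fun j n x hx y hy => ?_) (htop ▸ Submodule.mem_top) hy
  rw [← lie_skew]
  refine neg_mem ?_
  obtain ⟨k, rfl | rfl⟩ := j.eq_nat_or_neg
  · exact Submodule.mem_iSup_of_mem _ (lie_mem_kerTower_add k n hy hx)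
  · rcases Nat.eq_zero_or_pos k with rfl | hk
    · exact Submodule.mem_iSup_of_mem _ (lie_mem_kerTower_add 0 n hy (by simpa using hx))
    · exact Submodule.mem_iSup_of_mem _ (lie_mem_kerTower_sub hgen k hk n hy hx)

lemma le_bracketColon_kerTower (n : ℕ) : g 0 ≤ bracketColon (kerTower g q n) (kerTower g q n) :=
  fun s hs x hx => by
    rw [← lie_skew]
    exact neg_mem (by simpa using lie_mem_kerTower_add 0 n hx (t := s) (by simpa using hs))

theorem kerTower_one_eq_bot (htop : ⨆ j, g j = ⊤)
    (hgen : ∀ i : ℤ, 2 ≤ i → g (-i) = bracketSpan (g (-1)) (g (-(i - 1))))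
    (hq : 1 ≤ q) (hdepth_ne : g (-q) ≠ ⊥)
    (hirr : ∀ W : Submodule F L, W ≤ g (-1) →
      (∀ x ∈ g 0, ∀ w ∈ W, ⁅x, w⁆ ∈ W) → W = ⊥ ∨ W = g (-1))
    (htrans : ∀ x ∈ nonnegPart g, (∀ y ∈ g (-1), ⁅x, y⁆ = 0) → x = 0)
    (hrad : ∀ J : Submodule F L, (∀ x : L, ∀ y ∈ J, ⁅x, y⁆ ∈ J) →
      J ≤ negPart g → J = ⊥) :
    kerTower g q 1 = ⊥ := by
  obtain ⟨m, rfl⟩ : ∃ m : ℕ, q = m + 1 := ⟨(q - 1).toNat, by omega⟩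
  have hle : kerTower g (m + 1) m ≤ g (-1) := (kerTower_le m).trans_eq (by congr 1; ring)
  rcases hirr _ hle (le_bracketColon_kerTower m) with hbot | heq
  · have hzero (n : ℕ) (hn : m ≤ n) : kerTower g (m + 1) n = ⊥ := by
      induction n, hn using Nat.le_induction with
      | base => exact hbot
      | succ n _ ih => exact kerTower_succ_eq_bot htrans (by omega) ih
    have hneg : ⨆ n, kerTower g (m + 1) n ≤ negPart g := iSup_le fun n =>
      if hn : m ≤ n then (hzero n hn).trans_le bot_le
      else (kerTower_le n).trans (le_negPart (by omega))
    exact eq_bot_iff.2 <| (le_iSup (kerTower g _) 1).trans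
      (hrad _ (lie_mem_iSup_kerTower htop hgen) hneg).le
  · refine absurd (eq_bot_iff.2 ?_) hdepth_ne
    simpa [kerTower] using neg_le_kerTower hgen heq.ge (m + 1) (by omega) le_rfl

theorem eq_bot_of_neg_one_le_bracketColon_bot (htop : ⨆ j, g j = ⊤)
    (hgen : ∀ i : ℤ, 2 ≤ i → g (-i) = bracketSpan (g (-1)) (g (-(i - 1))))
    (hq : 1 ≤ q) (hdepth_ne : g (-q) ≠ ⊥)
    (hirr : ∀ W : Submodule F L, W ≤ g (-1) →
      (∀ x ∈ g 0, ∀ w ∈ W, ⁅x, w⁆ ∈ W) → W = ⊥ ∨ W = g (-1))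
    (htrans : ∀ x ∈ nonnegPart g, (∀ y ∈ g (-1), ⁅x, y⁆ = 0) → x = 0)
    (hrad : ∀ J : Submodule F L, (∀ x : L, ∀ y ∈ J, ⁅x, y⁆ ∈ J) →
      J ≤ negPart g → J = ⊥)
    {V : Submodule F L} (hV : V ≤ g (-q + 1)) (h : g (-1) ≤ bracketColon ⊥ V) : V = ⊥ := by
  rw [eq_bot_iff, ← kerTower_one_eq_bot htop hgen hq hdepth_ne hirr htrans hrad]
  refine fun v hv => mem_kerTower_succ.2 ⟨by simpa using hV hv, fun w hw => ?_⟩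
  rw [← lie_skew]
  exact neg_mem (h hw v hv)

end KerTower

section Annihilator

variable {F L : Type*} [Field F] [LieRing L] [LieAlgebra F L] {g : ℤ → Submodule F L}
  [SetLike.GradedBracket g] {q : ℤ} {V : Submodule F L}

theorem inf_bracketColon_bot_eq_bot (hdepth : g (-(q + 1)) = ⊥)
    (hirr : ∀ W : Submodule F L, W ≤ g (-1) →
      (∀ x ∈ g 0, ∀ w ∈ W, ⁅x, w⁆ ∈ W) → W = ⊥ ∨ W = g (-1))
    (htrans : ∀ x ∈ nonnegPart g, (∀ y ∈ g (-1), ⁅x, y⁆ = 0) → x = 0)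
    (hV : V ≤ g (-q + 1)) (hVstab : g 0 ≤ bracketColon V V)
    (hcent : ¬ g (-1) ≤ bracketColon ⊥ V) (d : ℤ) (hd : -1 ≤ d) :
    g d ⊓ bracketColon ⊥ V ⊓ bracketColon ⊥ (g (-q)) = ⊥ := by
  have hstep (d : ℤ) : g (d + 1) ⊓ bracketColon ⊥ V ⊓ bracketColon ⊥ (g (-q)) ≤
      bracketColon (g d ⊓ bracketColon ⊥ V ⊓ bracketColon ⊥ (g (-q))) (g (-1)) := by
    rintro x ⟨⟨hxd, hxV⟩, hxq⟩ w hw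
    refine ⟨⟨lie_mem_of_add_eq hxd hw (by ring), lie_mem_bracketColon_bot hxV hxq
      fun v hv => lie_mem_of_add_eq hw (hV hv) (by ring)⟩, lie_mem_bracketColon_bot (C := ⊥) hxq
      (by simp) fun z hz => ?_⟩
    rw [← hdepth]
    exact lie_mem_of_add_eq hw hz (by ring)
  have hstab : g 0 ≤ bracketColon (g (-1) ⊓ bracketColon ⊥ V ⊓ bracketColon ⊥ (g (-q)))
      (g (-1) ⊓ bracketColon ⊥ V ⊓ bracketColon ⊥ (g (-q))) :=
    le_bracketColon_inf
      (le_bracketColon_inf (le_bracketColon_zero _)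
        (le_bracketColon_bracketColon (le_bracketColon_bot_bot _) hVstab))
      (le_bracketColon_bracketColon (le_bracketColon_bot_bot _) (le_bracketColon_zero _))
  induction d, hd using Int.leInduction with
  | base =>
    refine (hirr _ (inf_le_left.trans inf_le_left) hstab).resolve_right fun h => hcent ?_
    rw [← h]
    exact inf_le_left.trans inf_le_right
  | succ d hd ih =>
    exact eq_bot_of_le_bracketColon_bot htrans (by omega) (inf_le_left.trans inf_le_left)
      ((hstep d).trans_eq (by rw [ih]))

end Annihilator

theorem statement10_general {F L : Type*} [Field F] [LieRing L] [LieAlgebra F L]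
    (g : ℤ → Submodule F L)
    (hdirect : DirectSum.IsInternal g)
    (hgraded : ∀ i j : ℤ, ∀ x ∈ g i, ∀ y ∈ g j, ⁅x, y⁆ ∈ g (i + j))
    -- depth q
    (q : ℤ) (hq : 2 ≤ q)
    (hdepth_ne : g (-q) ≠ ⊥)
    (hdepth : ∀ j : ℤ, q < j → g (-j) = ⊥)
    -- irreducibility
    (hirr : ∀ W : Submodule F L, W ≤ g (-1) →
      (∀ x ∈ g 0, ∀ w ∈ W, ⁅x, w⁆ ∈ W) → W = ⊥ ∨ W = g (-1))
    -- transitivity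
    (htrans : ∀ x ∈ nonnegPart g, (∀ y ∈ g (-1), ⁅x, y⁆ = 0) → x = 0)
    -- the only Lie ideal contained in the negative part is zero
    (hrad : ∀ J : Submodule F L, (∀ x : L, ∀ y ∈ J, ⁅x, y⁆ ∈ J) →
      J ≤ negPart g → J = ⊥)
    -- g₋ᵢ = ⁅g₋₁, g₋₍ᵢ₋₁₎⁆ for all i ≥ 2
    (hgen : ∀ i : ℤ, 2 ≤ i → g (-i) = bracketSpan (g (-1)) (g (-(i - 1))))
    -- V is an irreducible g 0-submodule of g (-q+1)
    (V : Submodule F L)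
    (hVle : V ≤ g (-q + 1))
    (hVne : V ≠ ⊥)
    (hVstab : ∀ x ∈ g 0, ∀ v ∈ V, ⁅x, v⁆ ∈ V) :
    ∀ x ∈ g (q - 1), (∀ v ∈ V, ⁅x, v⁆ = 0) → x = 0 := by
  have : SetLike.GradedBracket g := ⟨fun _ _ _ _ hx hy => hgraded _ _ _ hx _ hy⟩
  have hcent : ¬ g (-1) ≤ bracketColon ⊥ V := fun h => hVne <|
    eq_bot_of_neg_one_le_bracketColon_bot hdirect.submodule_iSup_eq_top hgen (by omega) hdepth_ne
      hirr htrans hrad hVle h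
  set A := g (q - 1) ⊓ bracketColon ⊥ V
  have hA : g 0 ≤ bracketColon A A := le_bracketColon_inf (le_bracketColon_zero _)
    (le_bracketColon_bracketColon (le_bracketColon_bot_bot _) hVstab)
  have hT_le : bracketSpan A (g (-q)) ≤ g (-1) := bracketSpan_le.2 fun a ha y hy =>
    lie_mem_of_add_eq (Submodule.mem_inf.1 ha).1 hy (by ring)
  -- Otherwise `g (-1) = ⁅A, g (-q)⁆` would centralize `V`, as `⁅g (-q), V⁆ ⊆ g (-2q+1) = 0`.
  have hT : bracketSpan A (g (-q)) = ⊥ := by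
    refine (hirr _ hT_le (le_bracketColon_bracketSpan hA (le_bracketColon_zero _))).resolve_right
      fun h => hcent ?_
    rw [← h, bracketSpan_le]
    refine fun a ha y hy => lie_mem_bracketColon_bot (C := ⊥) (Submodule.mem_inf.1 ha).2
      (by simp) fun v hv => ?_
    rw [← hdepth (2 * q - 1) (by omega)]
    exact lie_mem_of_add_eq hy (hVle hv) (by ring)
  intro x hx hxV
  have hxA : x ∈ A := ⟨hx, by simpa using hxV⟩
  have hP := inf_bracketColon_bot_eq_bot (hdepth (q + 1) (by omega)) hirr htrans hVle hVstab
    hcent (q - 1) (by omega)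
  exact (Submodule.mem_bot F).1 <| hP ▸ ⟨hxA, fun z hz => hT ▸ lie_mem_bracketSpan hxA hz⟩

/-- In a graded Lie algebra of depth `q ≥ 2` satisfying conditions (1.6), the
annihilator in `g (q-1)` of an irreducible `g 0`-submodule `V` of `g (-q+1)` is zero. -/
theorem statement10 {F L : Type*} [Field F] [LieRing L] [LieAlgebra F L]
    [FiniteDimensional F L]
    (hchar2 : ringChar F ≠ 2) (hchar3 : ringChar F ≠ 3)
    (g : ℤ → Submodule F L)
    (hdirect : DirectSum.IsInternal g)
    (hgraded : ∀ i j : ℤ, ∀ x ∈ g i, ∀ y ∈ g j, ⁅x, y⁆ ∈ g (i + j))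
    -- depth q
    (q : ℤ) (hq : 2 ≤ q)
    (hdepth_ne : g (-q) ≠ ⊥)
    (hdepth : ∀ j : ℤ, q < j → g (-j) = ⊥)
    -- irreducibility
    (hirr_ne : g (-1) ≠ ⊥)
    (hirr : ∀ W : Submodule F L, W ≤ g (-1) →
      (∀ x ∈ g 0, ∀ w ∈ W, ⁅x, w⁆ ∈ W) → W = ⊥ ∨ W = g (-1))
    -- transitivity
    (htrans : ∀ x ∈ nonnegPart g, (∀ y ∈ g (-1), ⁅x, y⁆ = 0) → x = 0)
    -- the only Lie ideal contained in the negative part is zero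
    (hrad : ∀ J : Submodule F L, (∀ x : L, ∀ y ∈ J, ⁅x, y⁆ ∈ J) →
      J ≤ negPart g → J = ⊥)
    -- g₋ᵢ = ⁅g₋₁, g₋₍ᵢ₋₁₎⁆ for all i ≥ 2
    (hgen : ∀ i : ℤ, 2 ≤ i → g (-i) = bracketSpan (g (-1)) (g (-(i - 1))))
    -- V is an irreducible g 0-submodule of g (-q+1)
    (V : Submodule F L)
    (hVle : V ≤ g (-q + 1))
    (hVne : V ≠ ⊥)
    (hVstab : ∀ x ∈ g 0, ∀ v ∈ V, ⁅x, v⁆ ∈ V)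
    (hVirr : ∀ W : Submodule F L, W ≤ V →
      (∀ x ∈ g 0, ∀ w ∈ W, ⁅x, w⁆ ∈ W) → W = ⊥ ∨ W = V) :
    ∀ x ∈ g (q - 1), (∀ v ∈ V, ⁅x, v⁆ = 0) → x = 0 :=
  statement10_general g hdirect hgraded q hq hdepth_ne hdepth hirr htrans hrad hgen V hVle hVne
    hVstab
end

section
/- Let p be an odd prime, F a field of characteristic p, and g a Lie algebra over F. Let D be an F-linear derivation of g such that D^{(p+1)/2} = 0. Then the linear map exp(D) := ∑_{i=0}^{p−1} (1/i!)·D^i is an automorphism of the Lie algebra g: it is a bijective Lie algebra homomorphism, with inverse exp(−D). -/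
/-! In characteristic `p`, `1 / (i! j!) = C(i + j, i) / (i + j)!` whenever `i + j < p`, so a double
sum `∑_{i,j<p} vᵢⱼ / (i! j!)` regroups by total degree into `∑_{n<p} (1 / n!) ∑_{i+j=n} C(n, i) vᵢⱼ`
as soon as the terms with `i + j ≥ p` vanish. That is the case for terms built from `Dⁱ` and `Dʲ`:
`D ^ m = 0` with `2 m ≤ p + 1` forces `i ≥ m` or `j ≥ m`. For `vᵢⱼ = Eⁱ E'ʲ` the binomial theorem
gives `exp (E + E') = exp E * exp E'` for commuting `E, E'`, so `exp (-D)` inverts `exp D`; for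
`vᵢⱼ = ⁅Dⁱ x, Dʲ y⁆` the Leibniz rule gives `exp D ⁅x, y⁆ = ⁅exp D x, exp D y⁆`. -/

/-- The truncated exponential `∑_{i=0}^{p-1} (1/i!) Dⁱ` of an endomorphism `D`. -/
noncomputable def expTrunc {F L : Type*} [Field F] [LieRing L] [LieAlgebra F L]
    (p : ℕ) (D : Module.End F L) : Module.End F L :=
  ∑ i ∈ Finset.range p, (i.factorial : F)⁻¹ • D ^ i

open Finset Nat

section Coefficients

variable {F : Type*} [Field F] {p : ℕ}

theorem natCast_factorial_ne_zero_of_lt (hp : p.Prime) [CharP F p] {n : ℕ} (hn : n < p) :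
    (n ! : F) ≠ 0 := by
  rw [Ne, CharP.cast_eq_zero_iff F p, hp.dvd_factorial]
  omega

theorem inv_factorial_mul_inv_factorial_of_mem_antidiagonal {n : ℕ} (hn : (n ! : F) ≠ 0)
    {k : ℕ × ℕ} (hk : k ∈ antidiagonal n) :
    (k.1 ! : F)⁻¹ * (k.2 ! : F)⁻¹ = (n ! : F)⁻¹ * n.choose k.1 := by
  rw [Nat.castChoose_eq (isUnit_iff_ne_zero.mpr hn) hk, Ring.inverse_eq_inv']
  field_simp

theorem sum_range_sum_range_inv_factorial_smul {M : Type*} [AddCommGroup M] [Module F M]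
    (hp : p.Prime) [CharP F p] (v : ℕ → ℕ → M) (hv : ∀ i j, p ≤ i + j → v i j = 0) :
    ∑ i ∈ range p, ∑ j ∈ range p, ((i ! : F)⁻¹ * (j ! : F)⁻¹) • v i j
      = ∑ n ∈ range p, (n ! : F)⁻¹ • ∑ k ∈ antidiagonal n, n.choose k.1 • v k.1 k.2 := by
  set f : ℕ → ℕ → M := fun i j => ((i ! : F)⁻¹ * (j ! : F)⁻¹) • v i j
  calc ∑ i ∈ range p, ∑ j ∈ range p, f i j
      = ∑ i ∈ range p, ∑ j ∈ range (p - i), f i j := by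
        refine sum_congr rfl fun i _ => (sum_subset (range_subset_range.2 (sub_le p i)) ?_).symm
        intro j _ hj
        simp only [f, mem_range] at hj ⊢
        rw [hv i j (by omega), smul_zero]
    _ = ∑ n ∈ range p, ∑ k ∈ antidiagonal n, f k.1 k.2 := by
        rw [← sum_range_diag_flip]
        exact sum_congr rfl fun n _ => (sum_antidiagonal_eq_sum_range_succ f n).symm
    _ = _ := by
        refine sum_congr rfl fun n hn => ?_
        rw [smul_sum]
        refine sum_congr rfl fun k hk => ?_
        dsimp only [f]
        rw [inv_factorial_mul_inv_factorial_of_mem_antidiagonal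
          (natCast_factorial_ne_zero_of_lt hp (mem_range.mp hn)) hk, mul_smul,
          Nat.cast_smul_eq_nsmul]

end Coefficients

section Exponential

variable {F L : Type*} [Field F] [LieRing L] [LieAlgebra F L] {p : ℕ}

theorem expTrunc_zero (hp : 0 < p) : expTrunc p (0 : Module.End F L) = 1 := by
  rw [expTrunc, sum_eq_single_of_mem 0 (mem_range.mpr hp)]
  · simp
  · intro i _ hi
    rw [zero_pow hi, smul_zero]

theorem expTrunc_add_of_commute (hp : p.Prime) [CharP F p]
    {E E' : Module.End F L} (h : Commute E E') {a b : ℕ} (ha : E ^ a = 0) (hb : E' ^ b = 0)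
    (hab : a + b ≤ p + 1) :
    expTrunc p (E + E') = expTrunc p E * expTrunc p E' := by
  have hv : ∀ i j, p ≤ i + j → E ^ i * E' ^ j = 0 := by
    intro i j hij
    rcases le_or_gt a i with hi | hi
    · rw [pow_eq_zero_of_le hi ha, zero_mul]
    · rw [pow_eq_zero_of_le (by omega) hb, mul_zero]
  simp only [expTrunc, sum_mul_sum, smul_mul_smul_comm, h.add_pow']
  rw [sum_range_sum_range_inv_factorial_smul hp _ hv]

theorem expTrunc_mul_expTrunc_neg (hp : p.Prime) [CharP F p] {E : Module.End F L} {m : ℕ}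
    (hE : E ^ m = 0) (hm : 2 * m ≤ p + 1) :
    expTrunc p E * expTrunc p (-E) = 1 := by
  have hE' : (-E) ^ m = 0 := by rw [neg_pow, hE, mul_zero]
  rw [← expTrunc_add_of_commute hp (Commute.refl E).neg_right hE hE' (by omega),
    add_neg_cancel, expTrunc_zero hp.pos]

theorem pow_apply_lie_of_leibniz {D : Module.End F L}
    (hder : ∀ x y : L, D ⁅x, y⁆ = ⁅D x, y⁆ + ⁅x, D y⁆) (n : ℕ) (x y : L) :
    (D ^ n) ⁅x, y⁆ = ∑ k ∈ antidiagonal n, n.choose k.1 • ⁅(D ^ k.1) x, (D ^ k.2) y⁆ := by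
  let D' : LieDerivation F L L :=
    { toLinearMap := D
      leibniz' := fun a b => by rw [hder, ← lie_skew (D a) b, sub_eq_add_neg, add_comm] }
  simp only [Module.End.pow_apply]
  exact D'.iterate_apply_lie n x y

theorem expTrunc_apply_lie (hp : p.Prime) [CharP F p] {D : Module.End F L}
    (hder : ∀ x y : L, D ⁅x, y⁆ = ⁅D x, y⁆ + ⁅x, D y⁆) {m : ℕ} (hD : D ^ m = 0)
    (hm : 2 * m ≤ p + 1) (x y : L) :
    expTrunc p D ⁅x, y⁆ = ⁅expTrunc p D x, expTrunc p D y⁆ := by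
  have hv : ∀ i j, p ≤ i + j → ⁅(D ^ i) x, (D ^ j) y⁆ = 0 := by
    intro i j hij
    rcases le_or_gt m i with hi | hi
    · rw [pow_eq_zero_of_le hi hD, LinearMap.zero_apply, zero_lie]
    · rw [pow_eq_zero_of_le (show m ≤ j by omega) hD, LinearMap.zero_apply, lie_zero]
  calc expTrunc p D ⁅x, y⁆
      = ∑ n ∈ range p, (n ! : F)⁻¹ • ∑ k ∈ antidiagonal n,
          n.choose k.1 • ⁅(D ^ k.1) x, (D ^ k.2) y⁆ := by
        simp only [expTrunc, LinearMap.sum_apply, LinearMap.smul_apply,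
          pow_apply_lie_of_leibniz hder]
    _ = ∑ i ∈ range p, ∑ j ∈ range p, ((i ! : F)⁻¹ * (j ! : F)⁻¹) • ⁅(D ^ i) x, (D ^ j) y⁆ :=
        (sum_range_sum_range_inv_factorial_smul hp _ hv).symm
    _ = ⁅expTrunc p D x, expTrunc p D y⁆ := by
        simp only [expTrunc, LinearMap.sum_apply, LinearMap.smul_apply, sum_lie_sum, smul_lie,
          lie_smul, smul_smul, mul_comm]

end Exponential

theorem statement14_general {F L : Type*} [Field F] [LieRing L] [LieAlgebra F L]
    (p : ℕ) (hp : p.Prime) [CharP F p]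
    (D : Module.End F L)
    (hder : ∀ x y : L, D ⁅x, y⁆ = ⁅D x, y⁆ + ⁅x, D y⁆)
    (hnil : D ^ ((p + 1) / 2) = 0) :
    Function.Bijective (expTrunc p D) ∧
    (∀ x y : L, expTrunc p D ⁅x, y⁆ = ⁅expTrunc p D x, expTrunc p D y⁆) ∧
    expTrunc p D * expTrunc p (-D) = 1 ∧
    expTrunc p (-D) * expTrunc p D = 1 := by
  have hm : 2 * ((p + 1) / 2) ≤ p + 1 := Nat.mul_div_le (p + 1) 2
  have hnil' : (-D) ^ ((p + 1) / 2) = 0 := by rw [neg_pow, hnil, mul_zero]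
  have h₁ : expTrunc p D * expTrunc p (-D) = 1 := expTrunc_mul_expTrunc_neg hp hnil hm
  have h₂ : expTrunc p (-D) * expTrunc p D = 1 := by
    simpa only [neg_neg] using expTrunc_mul_expTrunc_neg hp hnil' hm
  exact ⟨(Module.End.isUnit_iff _).mp ⟨⟨_, _, h₁, h₂⟩, rfl⟩,
    expTrunc_apply_lie hp hder hnil hm, h₁, h₂⟩

/-- If `D` is a derivation of a Lie algebra over a field of odd prime characteristic `p`
with `D^((p+1)/2) = 0`, then `exp D = ∑_{i=0}^{p-1} (1/i!) Dⁱ` is an automorphism of the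
Lie algebra, with inverse `exp (-D)`. -/
theorem statement14 {F L : Type*} [Field F] [LieRing L] [LieAlgebra F L]
    (p : ℕ) (hp : p.Prime) (hodd : Odd p) [CharP F p]
    (D : Module.End F L)
    (hder : ∀ x y : L, D ⁅x, y⁆ = ⁅D x, y⁆ + ⁅x, D y⁆)
    (hnil : D ^ ((p + 1) / 2) = 0) :
    Function.Bijective (expTrunc p D) ∧
    (∀ x y : L, expTrunc p D ⁅x, y⁆ = ⁅expTrunc p D x, expTrunc p D y⁆) ∧
    expTrunc p D * expTrunc p (-D) = 1 ∧
    expTrunc p (-D) * expTrunc p D = 1 :=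
  statement14_general p hp D hder hnil
end

section
/- Let F be a field of characteristic p > 3 and g a Lie algebra over F containing elements e, f, h and scalars ξ, λ ∈ F with ⁅e, f⁆ = h, ⁅h, e⁆ = ξ·e, ⁅h, f⁆ = −ξ·f. Suppose u_0, v_0 ∈ g satisfy ⁅f, u_0⁆ = 0, ⁅h, u_0⁆ = −λ·u_0, ⁅e, v_0⁆ = 0, ⁅h, v_0⁆ = λ·v_0, and ⁅u_0, v_0⁆ = h. Then for every integer ℓ with 2 ≤ ℓ ≤ p−1, writing E = ad e and Fᵃ = ad f, one has ⁅E^ℓ(u_0), Fᵃ^ℓ(v_0)⁆ = (−1)^{ℓ−1} · (∏_{k=2}^{ℓ} (kλ − (k(k−1)/2)·ξ)) · (ℓξ − λ) · h. Consequently, if h ≠ 0, then ⁅E^ℓ(u_0), Fᵃ^ℓ(v_0)⁆ is a nonzero scalar multiple of h if and only if 2λ ≠ (k−1)ξ for every k = 2, …, ℓ and λ ≠ ℓξ. -/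
/-!
Write `uᵢ = (ad e)ⁱ u₀` and `vⱼ = (ad f)ʲ v₀`. Then `uᵢ` has `h`-weight `iξ - λ`, and `ad f` lowers the
`e`-string: `⁅f, u_k⁆ = c_k u_{k-1}` with `c_k = kλ - (k choose 2)ξ`. Since `ad f` is a derivation,
`⁅u_{i+1}, v_{j+1}⁆ = ⁅f, ⁅u_{i+1}, v_j⁆⁆ - c_{i+1} ⁅u_i, v_j⁆`. Starting from
`⁅u_i, v₀⁆ = (ad e)ⁱ h`, which is `-ξe` for `i = 1` and `0` for `i ≥ 2`, this recursion kills
`⁅u_i, v_j⁆` for `i ≥ j + 2`, makes `⁅u_{m+1}, v_m⁆` an explicit multiple of `e`, and then gives the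
diagonal `⁅u_ℓ, v_ℓ⁆` by induction. For the criterion, `2c_k = k(2λ - (k-1)ξ)`, and `2` and `k` are
invertible in `F` because `2 ≤ k < p`.
-/

open LieAlgebra

section Coefficients

variable {R : Type*} [CommRing R]

def loweringCoeff (lam ξ : R) (k : ℕ) : R :=
  k * lam - (k.choose 2 : R) * ξ

lemma loweringCoeff_one (lam ξ : R) : loweringCoeff lam ξ 1 = lam := by
  simp [loweringCoeff]

lemma loweringCoeff_succ (lam ξ : R) (k : ℕ) :
    loweringCoeff lam ξ (k + 1) = loweringCoeff lam ξ k + (lam - k * ξ) := by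
  rw [loweringCoeff, loweringCoeff, show (k + 1).choose 2 = k.choose 1 + k.choose 2 from
    Nat.choose_succ_succ' k 1, Nat.choose_one_right]
  push_cast
  ring

lemma loweringCoeff_eq_zero_iff {F : Type*} [Field F] [NeZero (2 : F)] {k : ℕ} (hk : (k : F) ≠ 0)
    (lam ξ : F) : loweringCoeff lam ξ k = 0 ↔ 2 * lam = (k - 1) * ξ := by
  have hfactor : loweringCoeff lam ξ k = k / 2 * (2 * lam - (k - 1) * ξ) := by
    rw [loweringCoeff, Nat.cast_choose_two]
    field_simp
  rw [hfactor, mul_eq_zero, div_eq_zero_iff, sub_eq_zero]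
  simp [hk, two_ne_zero]

end Coefficients

lemma natCast_ne_zero_of_pos_of_lt (R : Type*) [AddMonoidWithOne R] {p : ℕ} [CharP R p] {k : ℕ}
    (hk₀ : 0 < k) (hkp : k < p) : (k : R) ≠ 0 := by
  rw [Ne, CharP.cast_eq_zero_iff R p]
  exact fun hdvd => absurd (Nat.le_of_dvd hk₀ hdvd) (by omega)

lemma exists_ne_zero_smul_eq_iff {R M : Type*} [DivisionRing R] [AddCommGroup M] [Module R M]
    {x : M} (hx : x ≠ 0) (a : R) :
    (∃ c : R, c ≠ 0 ∧ a • x = c • x) ↔ a ≠ 0 :=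
  ⟨fun ⟨_, hc, hac⟩ => smul_left_injective R hx hac ▸ hc, fun ha => ⟨a, ha, rfl⟩⟩

section Lie

variable {R L : Type*} [CommRing R] [LieRing L] [LieAlgebra R L]

lemma ad_pow_succ_apply (x y : L) (k : ℕ) :
    (ad R L x ^ (k + 1)) y = ⁅x, (ad R L x ^ k) y⁆ := by
  rw [pow_succ', Module.End.mul_apply, ad_apply]

lemma ad_pow_apply_lie_of_lie_eq_zero {e v : L} (hev : ⁅e, v⁆ = 0) (u : L) (i : ℕ) :
    ⁅(ad R L e ^ i) u, v⁆ = (ad R L e ^ i) ⁅u, v⁆ := by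
  induction i with
  | zero => rfl
  | succ i ih => rw [ad_pow_succ_apply, ad_pow_succ_apply, lie_lie, hev, lie_zero, sub_zero, ih]

lemma lie_ad_pow_succ_apply_right (f x v : L) (j : ℕ) :
    ⁅x, (ad R L f ^ (j + 1)) v⁆ = ⁅f, ⁅x, (ad R L f ^ j) v⁆⁆ - ⁅⁅f, x⁆, (ad R L f ^ j) v⁆ := by
  rw [ad_pow_succ_apply, leibniz_lie f x]
  abel

lemma lie_ad_pow_apply_of_lie_eq_smul {h e u : L} {ξ μ : R} (hhe : ⁅h, e⁆ = ξ • e)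
    (hhu : ⁅h, u⁆ = μ • u) (k : ℕ) :
    ⁅h, (ad R L e ^ k) u⁆ = (k * ξ + μ) • (ad R L e ^ k) u := by
  induction k with
  | zero => simpa using hhu
  | succ k ih =>
    rw [ad_pow_succ_apply, leibniz_lie, hhe, ih, smul_lie, lie_smul]
    push_cast
    module

lemma lie_ad_pow_succ_apply_of_lie_eq_zero {e f h u : L} {ξ lam : R} (hef : ⁅e, f⁆ = h)
    (hhe : ⁅h, e⁆ = ξ • e) (hfu : ⁅f, u⁆ = 0) (hhu : ⁅h, u⁆ = (-lam) • u) (k : ℕ) :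
    ⁅f, (ad R L e ^ (k + 1)) u⁆ = loweringCoeff lam ξ (k + 1) • (ad R L e ^ k) u := by
  have hfe : ⁅f, e⁆ = -h := by rw [← lie_skew, hef]
  induction k with
  | zero =>
    rw [ad_pow_succ_apply, pow_zero, Module.End.one_apply, leibniz_lie, hfe, hfu, neg_lie, hhu,
      lie_zero, add_zero, loweringCoeff_one, neg_smul, neg_neg]
  | succ k ih =>
    rw [ad_pow_succ_apply (k := k + 1), leibniz_lie, hfe, neg_lie,
      lie_ad_pow_apply_of_lie_eq_smul hhe hhu, ih, lie_smul, ← ad_pow_succ_apply,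
      loweringCoeff_succ _ _ (k + 1)]
    push_cast
    module

end Lie

structure IsStringPair {R L : Type*} [CommRing R] [LieRing L] [LieAlgebra R L]
    (e f h u v : L) (ξ lam : R) : Prop where
  lie_e_f : ⁅e, f⁆ = h
  lie_h_e : ⁅h, e⁆ = ξ • e
  lie_f_u : ⁅f, u⁆ = 0
  lie_h_u : ⁅h, u⁆ = (-lam) • u
  lie_e_v : ⁅e, v⁆ = 0
  lie_u_v : ⁅u, v⁆ = h

namespace IsStringPair

variable {R L : Type*} [CommRing R] [LieRing L] [LieAlgebra R L] {e f h u v : L} {ξ lam : R}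

lemma lie_f_e (H : IsStringPair e f h u v ξ lam) : ⁅f, e⁆ = -h := by
  rw [← lie_skew, H.lie_e_f]

lemma lie_f_ad_pow_succ (H : IsStringPair e f h u v ξ lam) (k : ℕ) :
    ⁅f, (ad R L e ^ (k + 1)) u⁆ = loweringCoeff lam ξ (k + 1) • (ad R L e ^ k) u :=
  lie_ad_pow_succ_apply_of_lie_eq_zero H.lie_e_f H.lie_h_e H.lie_f_u H.lie_h_u k

lemma lie_ad_pow_succ_ad_pow_succ_eq_sub (H : IsStringPair e f h u v ξ lam) (i j : ℕ) :
    ⁅(ad R L e ^ (i + 1)) u, (ad R L f ^ (j + 1)) v⁆ =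
      ⁅f, ⁅(ad R L e ^ (i + 1)) u, (ad R L f ^ j) v⁆⁆ -
        loweringCoeff lam ξ (i + 1) • ⁅(ad R L e ^ i) u, (ad R L f ^ j) v⁆ := by
  rw [lie_ad_pow_succ_apply_right, H.lie_f_ad_pow_succ, smul_lie]

lemma lie_ad_pow_v (H : IsStringPair e f h u v ξ lam) (i : ℕ) :
    ⁅(ad R L e ^ i) u, v⁆ = (ad R L e ^ i) h := by
  rw [ad_pow_apply_lie_of_lie_eq_zero H.lie_e_v, H.lie_u_v]

lemma ad_e_h (H : IsStringPair e f h u v ξ lam) : ad R L e h = (-ξ) • e := by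
  rw [ad_apply, ← lie_skew, H.lie_h_e, neg_smul]

lemma lie_ad_pow_add_two_v_eq_zero (H : IsStringPair e f h u v ξ lam) (i : ℕ) :
    ⁅(ad R L e ^ (i + 2)) u, v⁆ = 0 := by
  rw [H.lie_ad_pow_v, pow_succ, pow_succ, Module.End.mul_apply, Module.End.mul_apply, H.ad_e_h,
    map_smul, ad_apply, lie_self, smul_zero, map_zero]

lemma lie_ad_pow_add_add_two_ad_pow_eq_zero (H : IsStringPair e f h u v ξ lam) (j k : ℕ) :
    ⁅(ad R L e ^ (j + k + 2)) u, (ad R L f ^ j) v⁆ = 0 := by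
  induction j generalizing k with
  | zero => rw [zero_add, pow_zero, Module.End.one_apply, H.lie_ad_pow_add_two_v_eq_zero]
  | succ j ih =>
    rw [show j + 1 + k + 2 = j + k + 2 + 1 by omega, H.lie_ad_pow_succ_ad_pow_succ_eq_sub,
      show j + k + 2 + 1 = j + (k + 1) + 2 by omega, ih, ih, lie_zero, smul_zero, sub_zero]

lemma lie_ad_pow_succ_ad_pow (H : IsStringPair e f h u v ξ lam) (m : ℕ) :
    ⁅(ad R L e ^ (m + 1)) u, (ad R L f ^ m) v⁆ =
      ((-1) ^ (m + 1) * (∏ k ∈ Finset.Icc 2 (m + 1), loweringCoeff lam ξ k) * ξ) • e := by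
  induction m with
  | zero =>
    rw [pow_zero, Module.End.one_apply, H.lie_ad_pow_v, pow_one, H.ad_e_h]
    simp
  | succ m ih =>
    have hvanish := H.lie_ad_pow_add_add_two_ad_pow_eq_zero m 0
    rw [add_zero] at hvanish
    rw [H.lie_ad_pow_succ_ad_pow_succ_eq_sub, hvanish, lie_zero, zero_sub, ih, smul_smul, ← neg_smul,
      Finset.prod_Icc_succ_top (show 2 ≤ m + 1 + 1 by omega)]
    congr 1
    ring

lemma lie_ad_pow_succ_ad_pow_succ (H : IsStringPair e f h u v ξ lam) (n : ℕ) :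
    ⁅(ad R L e ^ (n + 1)) u, (ad R L f ^ (n + 1)) v⁆ =
      ((-1) ^ n * (∏ k ∈ Finset.Icc 2 (n + 1), loweringCoeff lam ξ k) *
        ((n + 1 : ℕ) * ξ - lam)) • h := by
  induction n with
  | zero =>
    rw [H.lie_ad_pow_succ_ad_pow_succ_eq_sub, H.lie_ad_pow_succ_ad_pow 0, pow_zero, Module.End.one_apply,
      pow_zero, Module.End.one_apply, H.lie_u_v, lie_smul, H.lie_f_e, loweringCoeff_one]
    simp only [zero_add, Finset.Icc_eq_empty_of_lt one_lt_two, Finset.prod_empty, Nat.cast_one]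
    module
  | succ n ih =>
    rw [H.lie_ad_pow_succ_ad_pow_succ_eq_sub, H.lie_ad_pow_succ_ad_pow, ih, lie_smul, H.lie_f_e, smul_smul,
      Finset.prod_Icc_succ_top (show 2 ≤ n + 1 + 1 by omega)]
    push_cast
    module

end IsStringPair

theorem statement15_general {F L : Type*} [Field F] [LieRing L] [LieAlgebra F L]
    (p : ℕ) [CharP F p] (hp : 3 < p)
    (e f h : L) (ξ lam : F)
    (hef : ⁅e, f⁆ = h) (hhe : ⁅h, e⁆ = ξ • e)
    (u₀ v₀ : L)
    (hfu : ⁅f, u₀⁆ = 0) (hhu : ⁅h, u₀⁆ = (-lam) • u₀)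
    (hev : ⁅e, v₀⁆ = 0)
    (huv : ⁅u₀, v₀⁆ = h)
    (ℓ : ℕ) (hl2 : 2 ≤ ℓ) (hlp : ℓ ≤ p - 1) :
    ⁅((LieAlgebra.ad F L e) ^ ℓ) u₀, ((LieAlgebra.ad F L f) ^ ℓ) v₀⁆ =
      ((-1 : F) ^ (ℓ - 1) *
        (∏ k ∈ Finset.Icc 2 ℓ, ((k : F) * lam - ((k * (k - 1) / 2 : ℕ) : F) * ξ)) *
        ((ℓ : F) * ξ - lam)) • h ∧
    (h ≠ 0 →
      ((∃ c : F, c ≠ 0 ∧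
          ⁅((LieAlgebra.ad F L e) ^ ℓ) u₀, ((LieAlgebra.ad F L f) ^ ℓ) v₀⁆ = c • h) ↔
        ((∀ k ∈ Finset.Icc 2 ℓ, 2 * lam ≠ ((k : F) - 1) * ξ) ∧ lam ≠ (ℓ : F) * ξ))) := by
  obtain ⟨n, rfl⟩ : ∃ n, ℓ = n + 1 := ⟨ℓ - 1, by omega⟩
  have H : IsStringPair e f h u₀ v₀ ξ lam := ⟨hef, hhe, hfu, hhu, hev, huv⟩
  have hprod : ∏ k ∈ Finset.Icc 2 (n + 1), ((k : F) * lam - ((k * (k - 1) / 2 : ℕ) : F) * ξ) =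
      ∏ k ∈ Finset.Icc 2 (n + 1), loweringCoeff lam ξ k :=
    Finset.prod_congr rfl fun k _ => by rw [loweringCoeff, Nat.choose_two_right]
  rw [hprod, Nat.add_sub_cancel]
  refine ⟨H.lie_ad_pow_succ_ad_pow_succ n, fun hh => ?_⟩
  have : NeZero (2 : F) := ⟨by exact_mod_cast natCast_ne_zero_of_pos_of_lt F two_pos (by omega)⟩
  have hcoeff : ∀ k ∈ Finset.Icc 2 (n + 1), loweringCoeff lam ξ k ≠ 0 ↔ 2 * lam ≠ (k - 1) * ξ :=
    fun k hk => by
      obtain ⟨hk₂, hkℓ⟩ := Finset.mem_Icc.1 hk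
      exact (loweringCoeff_eq_zero_iff (natCast_ne_zero_of_pos_of_lt F (by omega) (by omega))
        lam ξ).not
  have hsign : (-1 : F) ^ n ≠ 0 := pow_ne_zero _ (neg_ne_zero.2 one_ne_zero)
  rw [H.lie_ad_pow_succ_ad_pow_succ n, exists_ne_zero_smul_eq_iff hh, mul_ne_zero_iff,
    mul_ne_zero_iff, and_iff_right hsign, Finset.prod_ne_zero_iff, sub_ne_zero, ne_comm]
  exact and_congr_left' (forall₂_congr hcoeff)

/-- Proposition on brackets of iterated adjoints: with `⁅e,f⁆ = h`, `⁅h,e⁆ = ξe`,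
`⁅h,f⁆ = -ξf`, `⁅f,u₀⁆ = 0`, `⁅h,u₀⁆ = -λu₀`, `⁅e,v₀⁆ = 0`, `⁅h,v₀⁆ = λv₀`,
`⁅u₀,v₀⁆ = h`, one has for `2 ≤ ℓ ≤ p-1` the formula
`⁅(ad e)^ℓ u₀, (ad f)^ℓ v₀⁆ = (-1)^{ℓ-1} ∏_{k=2}^{ℓ}(kλ - (k(k-1)/2)ξ) ⬝ (ℓξ - λ) • h`,
and, if `h ≠ 0`, this bracket is a nonzero multiple of `h` iff `2λ ≠ (k-1)ξ` for all
`k = 2, …, ℓ` and `λ ≠ ℓξ`. -/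
theorem statement15 {F L : Type*} [Field F] [LieRing L] [LieAlgebra F L]
    (p : ℕ) [CharP F p] (hp : 3 < p)
    (e f h : L) (ξ lam : F)
    (hef : ⁅e, f⁆ = h) (hhe : ⁅h, e⁆ = ξ • e) (hhf : ⁅h, f⁆ = (-ξ) • f)
    (u₀ v₀ : L)
    (hfu : ⁅f, u₀⁆ = 0) (hhu : ⁅h, u₀⁆ = (-lam) • u₀)
    (hev : ⁅e, v₀⁆ = 0) (hhv : ⁅h, v₀⁆ = lam • v₀)
    (huv : ⁅u₀, v₀⁆ = h)
    (ℓ : ℕ) (hl2 : 2 ≤ ℓ) (hlp : ℓ ≤ p - 1) :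
    ⁅((LieAlgebra.ad F L e) ^ ℓ) u₀, ((LieAlgebra.ad F L f) ^ ℓ) v₀⁆ =
      ((-1 : F) ^ (ℓ - 1) *
        (∏ k ∈ Finset.Icc 2 ℓ, ((k : F) * lam - ((k * (k - 1) / 2 : ℕ) : F) * ξ)) *
        ((ℓ : F) * ξ - lam)) • h ∧
    (h ≠ 0 →
      ((∃ c : F, c ≠ 0 ∧
          ⁅((LieAlgebra.ad F L e) ^ ℓ) u₀, ((LieAlgebra.ad F L f) ^ ℓ) v₀⁆ = c • h) ↔
        ((∀ k ∈ Finset.Icc 2 ℓ, 2 * lam ≠ ((k : F) - 1) * ξ) ∧ lam ≠ (ℓ : F) * ξ))) :=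
  statement15_general p hp e f h ξ lam hef hhe u₀ v₀ hfu hhu hev huv ℓ hl2 hlp
end

section
/- Let F be a field of characteristic p > 3 and g a Lie algebra over F containing nonzero elements e_1, e_2, f_1, f_2, h and a scalar a ≠ 0 in F such that ⁅h, e_1⁆ = 2e_1, ⁅h, f_1⁆ = −2f_1, ⁅h, e_2⁆ = a·e_2, ⁅h, f_2⁆ = −a·f_2, and ⁅e_i, f_j⁆ = δ_{ij}·h for i, j ∈ {1, 2}. If a lies in the prime field of F, say a = n·1_F with 1 ≤ n ≤ p−1, set e_1' = (ad f_1)^{p−n}(f_2), f_1' = (ad e_1)^{p−n}(e_2), e_2' = (ad f_2)^2(e_1'), f_2' = (ad e_2)^2(f_1'), and b = a; if a does not lie in the prime field, set e_1' = (ad e_1)^{p−2}(e_2), f_1' = (ad f_1)^{p−2}(f_2), e_2' = (ad e_2)^{p−2}((ad e_1)^2(e_2)), f_2' = (ad f_2)^{p−2}((ad f_1)^2(f_2)), and b = a − 4. Then there exist nonzero scalars ζ_1, ζ_2 ∈ F such that ⁅h, e_1'⁆ = b·e_1', ⁅h, f_1'⁆ = −b·f_1', ⁅h, e_2'⁆ =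 −b·e_2', ⁅h, f_2'⁆ = b·f_2', and ⁅e_i', f_j'⁆ = δ_{ij}·ζ_i·h for i, j ∈ {1, 2}. -/
/-!
Everything is a computation with strings in a "ladder pair": `⁅e, f⁆ = h`, the elements
`e, f, x, y` are `ad h`-eigenvectors of weights `α, -α, μ, -μ`, `ad f` kills `x`, `ad e`
kills `y` and `⁅x, y⁆ = κ h`. By induction (Jacobi identity plus the `sl₂` ladder relation
`⁅e, (ad f)^(m+1) y⁆ = c_(m+1) (ad f)^m y`), `⁅(ad e)^j x, (ad f)^m y⁆` is a combination of
`e, h, f` that vanishes unless `|j - m| ≤ 1`, and for `j = m` it is `β_j h` with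
`μ β_j = κ (μ + j α) ∏_{1 ≤ i ≤ j} (-c_i)`. So strings at least two steps apart commute, and
the nonvanishing of the `ζᵢ` reduces to that of linear forms in `a` modulo `p`.

The data of the theorem is a ladder pair `(e₁, f₁, h, e₂, f₂)` with `α = 2`, `μ = a`,
`κ = 1`. If `a = n`, then `N = p - n ≡ -a`, and `((ad f₁)^N f₂, (ad e₁)^N e₂)` is again a
ladder pair over `(f₂, e₂, -h)`, of weight `a`; for `N = 1` one exchanges the roles of the
two pairs instead. Otherwise `M = p - 2 ≡ -2`, and the new elements are strings in the
ladder pair `((ad e₁)^2 e₂, (ad f₁)^2 f₂)` over `(e₂, f₂, h)` and in the original one.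
-/

/-- The conclusion of Proposition 3.8: the primed elements satisfy
`⁅h,e₁'⁆ = b e₁'`, `⁅h,f₁'⁆ = -b f₁'`, `⁅h,e₂'⁆ = -b e₂'`, `⁅h,f₂'⁆ = b f₂'` and
`⁅eᵢ',fⱼ'⁆ = δᵢⱼ ζᵢ h` with `ζ₁, ζ₂` nonzero. -/
def Stmt16Concl {F L : Type*} [Field F] [LieRing L] [LieAlgebra F L]
    (h e₁' f₁' e₂' f₂' : L) (b : F) : Prop :=
  ∃ ζ₁ ζ₂ : F, ζ₁ ≠ 0 ∧ ζ₂ ≠ 0 ∧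
    ⁅h, e₁'⁆ = b • e₁' ∧ ⁅h, f₁'⁆ = (-b) • f₁' ∧
    ⁅h, e₂'⁆ = (-b) • e₂' ∧ ⁅h, f₂'⁆ = b • f₂' ∧
    ⁅e₁', f₁'⁆ = ζ₁ • h ∧ ⁅e₂', f₂'⁆ = ζ₂ • h ∧
    ⁅e₁', f₂'⁆ = 0 ∧ ⁅e₂', f₁'⁆ = 0

section LadderPairs

open Finset LieAlgebra

variable {K : Type*} [Field K]

def ladderCoeff (α μ : K) : ℕ → K
  | 0 => 0
  | m + 1 => ladderCoeff α μ m - (μ + m * α)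

theorem two_mul_ladderCoeff_succ (α μ : K) (i : ℕ) :
    2 * ladderCoeff α μ (i + 1) = -((i + 1) * (2 * μ + i * α)) := by
  induction i with
  | zero => simp [ladderCoeff]
  | succ i ih =>
    rw [ladderCoeff]
    push_cast
    linear_combination ih

theorem ladderCoeff_succ_ne_zero {α μ : K} {i : ℕ} (hi : (i + 1 : K) ≠ 0)
    (hs : 2 * μ + i * α ≠ 0) : ladderCoeff α μ (i + 1) ≠ 0 := fun h0 ↦ by
  have h := two_mul_ladderCoeff_succ α μ i
  rw [h0, mul_zero, eq_comm, neg_eq_zero] at h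
  exact mul_ne_zero hi hs h

/- The coefficients of `⁅(ad e ^ j) x, (ad f ^ m) y⁆` on `e`, `h`, `f` (see
`IsLadderPair.lie_ad_e_pow_ad_f_pow`). At `m = 0` the junk value `m - 1 = 0` is harmless:
it is multiplied by `ladderCoeff α μ 0 = 0`. -/
def bracketCoeffF (α μ κ : K) : ℕ → ℕ → K
  | 0, m => if m = 1 then α * κ else 0
  | j + 1, m => -(ladderCoeff α μ m * bracketCoeffF α μ κ j (m - 1))

def bracketCoeffH (α μ κ : K) : ℕ → ℕ → K
  | 0, m => if m = 0 then κ else 0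
  | j + 1, m => bracketCoeffF α μ κ j m - ladderCoeff α μ m * bracketCoeffH α μ κ j (m - 1)

def bracketCoeffE (α μ κ : K) : ℕ → ℕ → K
  | 0, _ => 0
  | j + 1, m => -(α * bracketCoeffH α μ κ j m) - ladderCoeff α μ m * bracketCoeffE α μ κ j (m - 1)

section Coefficients

variable (α μ κ : K)

theorem bracketCoeffF_eq_zero {j m : ℕ} (h : m ≠ j + 1) : bracketCoeffF α μ κ j m = 0 := by
  induction j generalizing m with
  | zero => simp [bracketCoeffF, h]
  | succ j ih =>
    cases m with
    | zero => simp [bracketCoeffF, ladderCoeff]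
    | succ m => simp [bracketCoeffF, ih (show m ≠ j + 1 by omega)]

theorem bracketCoeffH_eq_zero {j m : ℕ} (h : m ≠ j) : bracketCoeffH α μ κ j m = 0 := by
  induction j generalizing m with
  | zero => simp [bracketCoeffH, h]
  | succ j ih =>
    cases m with
    | zero => simp [bracketCoeffH, ladderCoeff, bracketCoeffF_eq_zero]
    | succ m =>
      simp [bracketCoeffH, ih (show m ≠ j by omega), bracketCoeffF_eq_zero α μ κ h]

theorem bracketCoeffE_eq_zero {j m : ℕ} (h : j ≠ m + 1) : bracketCoeffE α μ κ j m = 0 := by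
  induction j generalizing m with
  | zero => simp [bracketCoeffE]
  | succ j ih =>
    cases m with
    | zero => simp [bracketCoeffE, ladderCoeff, bracketCoeffH_eq_zero, show 0 ≠ j by omega]
    | succ m => simp [bracketCoeffE, ih (show j ≠ m + 1 by omega), bracketCoeffH_eq_zero,
        show m + 1 ≠ j by omega]

theorem bracketCoeffF_self_succ (j : ℕ) :
    bracketCoeffF α μ κ j (j + 1) = α * κ * ∏ i ∈ range j, -ladderCoeff α μ (i + 2) := by
  induction j with
  | zero => simp [bracketCoeffF]
  | succ j ih => rw [bracketCoeffF, Nat.add_sub_cancel, ih, prod_range_succ]; ring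

theorem mul_bracketCoeffH_self (j : ℕ) :
    μ * bracketCoeffH α μ κ j j = κ * (μ + j * α) * ∏ i ∈ range j, -ladderCoeff α μ (i + 1) := by
  induction j with
  | zero => simp [bracketCoeffH, mul_comm]
  | succ j ih =>
    have hshift : (∏ i ∈ range j, -ladderCoeff α μ (i + 1)) * -ladderCoeff α μ (j + 1) =
        (∏ i ∈ range j, -ladderCoeff α μ (i + 2)) * μ := by
      rw [← prod_range_succ, prod_range_succ']
      simp [ladderCoeff]
    rw [bracketCoeffH, Nat.add_sub_cancel, bracketCoeffF_self_succ, prod_range_succ]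
    push_cast
    linear_combination (-ladderCoeff α μ (j + 1)) * ih - α * κ * hshift

theorem bracketCoeffH_self_ne_zero {j : ℕ} (hκ : κ ≠ 0) (hj : μ + j * α ≠ 0)
    (hc : ∀ i < j, ladderCoeff α μ (i + 1) ≠ 0) : bracketCoeffH α μ κ j j ≠ 0 := fun h0 ↦ by
  have h := mul_bracketCoeffH_self α μ κ j
  rw [h0, mul_zero, eq_comm] at h
  refine mul_ne_zero (mul_ne_zero hκ hj) (prod_ne_zero_iff.mpr fun i hi ↦ ?_) h
  exact neg_ne_zero.mpr (hc i (mem_range.mp hi))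

end Coefficients

section Lie

variable {L : Type*} [LieRing L] [LieAlgebra K L]

theorem lie_ad_pow_of_lie_eq_smul {h x y : L} {μ ν : K} (hx : ⁅h, x⁆ = μ • x)
    (hy : ⁅h, y⁆ = ν • y) (k : ℕ) : ⁅h, (ad K L x ^ k) y⁆ = (ν + k * μ) • (ad K L x ^ k) y := by
  induction k with
  | zero => simpa using hy
  | succ k ih =>
    rw [pow_succ', Module.End.mul_apply, ad_apply, leibniz_lie, hx, ih, smul_lie, lie_smul]
    push_cast
    module

theorem lie_ad_pow_of_lie_eq_zero {s t : L} (hst : ⁅s, t⁆ = 0) (y : L) (k : ℕ) :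
    ⁅s, (ad K L t ^ k) y⁆ = (ad K L t ^ k) ⁅s, y⁆ := by
  induction k with
  | zero => rfl
  | succ k ih =>
    simp only [pow_succ', Module.End.mul_apply, ad_apply] at ih ⊢
    rw [leibniz_lie, hst, zero_lie, zero_add, ih]

theorem lie_ad_pow_succ_of_lie_eq_zero {e f h y : L} {α μ : K} (hef : ⁅e, f⁆ = h)
    (hf : ⁅h, f⁆ = (-α) • f) (hy : ⁅h, y⁆ = (-μ) • y) (hey : ⁅e, y⁆ = 0) (k : ℕ) :
    ⁅e, (ad K L f ^ (k + 1)) y⁆ = ladderCoeff α μ (k + 1) • (ad K L f ^ k) y := by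
  induction k with
  | zero => simp [leibniz_lie, hef, hey, hy, ladderCoeff]
  | succ k ih =>
    rw [pow_succ' _ (k + 1), Module.End.mul_apply, ad_apply, leibniz_lie, hef, ih, lie_smul,
      lie_ad_pow_of_lie_eq_smul hf hy, pow_succ', Module.End.mul_apply, ad_apply]
    simp only [ladderCoeff]
    push_cast
    module

theorem Stmt16Concl.of_neg {h e₁' f₁' e₂' f₂' : L} {b : K}
    (hc : Stmt16Concl (-h) e₁' f₁' e₂' f₂' (-b)) : Stmt16Concl h e₁' f₁' e₂' f₂' b := by
  obtain ⟨ζ₁, ζ₂, hζ₁, hζ₂, he₁, hf₁, he₂, hf₂, h₁₁, h₂₂, h₁₂, h₂₁⟩ := hc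
  have hneg (z : L) : ⁅h, z⁆ = -⁅-h, z⁆ := by rw [neg_lie, neg_neg]
  refine ⟨-ζ₁, -ζ₂, neg_ne_zero.mpr hζ₁, neg_ne_zero.mpr hζ₂, ?_, ?_, ?_, ?_, ?_, ?_, h₁₂, h₂₁⟩ <;>
    simp only [hneg, he₁, hf₁, he₂, hf₂, h₁₁, h₂₂] <;> module

structure IsLadderPair (e f h x y : L) (α μ κ : K) : Prop where
  lie_e_f : ⁅e, f⁆ = h
  lie_h_e : ⁅h, e⁆ = α • e
  lie_h_f : ⁅h, f⁆ = (-α) • f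
  lie_h_x : ⁅h, x⁆ = μ • x
  lie_h_y : ⁅h, y⁆ = (-μ) • y
  lie_f_x : ⁅f, x⁆ = 0
  lie_e_y : ⁅e, y⁆ = 0
  lie_x_y : ⁅x, y⁆ = κ • h

namespace IsLadderPair

variable {e f h x y : L} {α μ κ : K}

theorem symm (d : IsLadderPair e f h x y α μ κ) : IsLadderPair f e (-h) y x α μ κ where
  lie_e_f := by rw [← lie_skew, d.lie_e_f]
  lie_h_e := by rw [neg_lie, d.lie_h_f]; module
  lie_h_f := by rw [neg_lie, d.lie_h_e]; module
  lie_h_x := by rw [neg_lie, d.lie_h_y]; module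
  lie_h_y := by rw [neg_lie, d.lie_h_x]; module
  lie_f_x := d.lie_e_y
  lie_e_y := d.lie_f_x
  lie_x_y := by rw [← lie_skew, d.lie_x_y]; module

theorem swap (d : IsLadderPair e f h x y α μ 1) : IsLadderPair y x (-h) (-f) (-e) μ α 1 where
  lie_e_f := by rw [← lie_skew, d.lie_x_y, one_smul]
  lie_h_e := by rw [neg_lie, d.lie_h_y]; module
  lie_h_f := by rw [neg_lie, d.lie_h_x]; module
  lie_h_x := by rw [neg_lie, lie_neg, d.lie_h_f]; module
  lie_h_y := by rw [neg_lie, lie_neg, d.lie_h_e]; module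
  lie_f_x := by rw [lie_neg, ← lie_skew, d.lie_f_x, neg_zero, neg_zero]
  lie_e_y := by rw [lie_neg, ← lie_skew, d.lie_e_y, neg_zero, neg_zero]
  lie_x_y := by rw [neg_lie, lie_neg, neg_neg, ← lie_skew, d.lie_e_f, one_smul]

theorem lie_h_ad_e_pow (d : IsLadderPair e f h x y α μ κ) (j : ℕ) :
    ⁅h, (ad K L e ^ j) x⁆ = (μ + j * α) • (ad K L e ^ j) x :=
  lie_ad_pow_of_lie_eq_smul d.lie_h_e d.lie_h_x j

theorem lie_h_ad_f_pow (d : IsLadderPair e f h x y α μ κ) (m : ℕ) :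
    ⁅h, (ad K L f ^ m) y⁆ = (-(μ + m * α)) • (ad K L f ^ m) y := by
  rw [lie_ad_pow_of_lie_eq_smul d.lie_h_f d.lie_h_y m]
  congr 1
  ring

theorem lie_ad_e_pow_ad_f_pow (d : IsLadderPair e f h x y α μ κ) (j m : ℕ) :
    ⁅(ad K L e ^ j) x, (ad K L f ^ m) y⁆ = bracketCoeffE α μ κ j m • e +
      bracketCoeffH α μ κ j m • h + bracketCoeffF α μ κ j m • f := by
  have hfh : ⁅f, h⁆ = α • f := by rw [← lie_skew, d.lie_h_f]; module
  have heh : ⁅e, h⁆ = (-α) • e := by rw [← lie_skew, d.lie_h_e]; module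
  induction j generalizing m with
  | zero =>
    have hxf : ⁅x, f⁆ = 0 := by rw [← lie_skew, d.lie_f_x, neg_zero]
    rw [pow_zero, Module.End.one_apply, lie_ad_pow_of_lie_eq_zero hxf, d.lie_x_y, map_smul]
    rcases m with _ | _ | m
    · simp [bracketCoeffE, bracketCoeffH, bracketCoeffF]
    · simp [bracketCoeffE, bracketCoeffH, bracketCoeffF, hfh, smul_smul, mul_comm]
    · rw [pow_succ, pow_succ, mul_assoc, Module.End.mul_apply]
      simp [bracketCoeffE, bracketCoeffH, bracketCoeffF, hfh]
  | succ j ih =>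
    rw [pow_succ', Module.End.mul_apply, ad_apply, lie_lie, ih]
    rcases m with _ | m
    · simp only [pow_zero, Module.End.one_apply, d.lie_e_y, lie_zero, sub_zero, lie_add, lie_smul,
        lie_self, heh, d.lie_e_f, bracketCoeffE, bracketCoeffH, bracketCoeffF, ladderCoeff]
      module
    · rw [lie_ad_pow_succ_of_lie_eq_zero d.lie_e_f d.lie_h_f d.lie_h_y d.lie_e_y, lie_smul, ih]
      simp only [lie_add, lie_smul, lie_self, heh, d.lie_e_f, bracketCoeffE, bracketCoeffH,
        bracketCoeffF, Nat.add_sub_cancel]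
      module

theorem lie_ad_e_pow_ad_f_pow_self (d : IsLadderPair e f h x y α μ κ) (j : ℕ) :
    ⁅(ad K L e ^ j) x, (ad K L f ^ j) y⁆ = bracketCoeffH α μ κ j j • h := by
  rw [d.lie_ad_e_pow_ad_f_pow, bracketCoeffE_eq_zero _ _ _ (by omega),
    bracketCoeffF_eq_zero _ _ _ (by omega), zero_smul, zero_smul, zero_add, add_zero]

theorem lie_ad_e_pow_ad_f_pow_eq_zero (d : IsLadderPair e f h x y α μ κ) {j m : ℕ}
    (hjm : j + 2 ≤ m ∨ m + 2 ≤ j) : ⁅(ad K L e ^ j) x, (ad K L f ^ m) y⁆ = 0 := by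
  rw [d.lie_ad_e_pow_ad_f_pow, bracketCoeffE_eq_zero _ _ _ (by omega),
    bracketCoeffH_eq_zero _ _ _ (by omega), bracketCoeffF_eq_zero _ _ _ (by omega)]
  simp

theorem ad_pow (d : IsLadderPair e f h x y α μ 1) {n : ℕ} (hn : 2 ≤ n) :
    IsLadderPair x y h ((ad K L e ^ n) x) ((ad K L f ^ n) y) μ (μ + n * α)
      (bracketCoeffH α μ 1 n n) where
  lie_e_f := by rw [d.lie_x_y, one_smul]
  lie_h_e := d.lie_h_x
  lie_h_f := d.lie_h_y
  lie_h_x := d.lie_h_ad_e_pow n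
  lie_h_y := d.lie_h_ad_f_pow n
  lie_f_x := by
    rw [← lie_skew, neg_eq_zero]
    simpa using d.lie_ad_e_pow_ad_f_pow_eq_zero (j := n) (m := 0) (by omega)
  lie_e_y := by
    simpa using d.lie_ad_e_pow_ad_f_pow_eq_zero (j := 0) (m := n) (by omega)
  lie_x_y := d.lie_ad_e_pow_ad_f_pow_self n

theorem lie_ad_e_pow_ad_y_pow_ad_f_pow (d : IsLadderPair e f h x y α μ κ) {k m n : ℕ}
    (hkm : k < m) (hm : 2 ≤ m) (hn : 1 ≤ n) :
    ⁅(ad K L e ^ m) x, (ad K L y ^ n) ((ad K L f ^ k) y)⁆ = 0 := by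
  have hXy : ⁅(ad K L e ^ m) x, y⁆ = 0 := by
    simpa using d.lie_ad_e_pow_ad_f_pow_eq_zero (j := m) (m := 0) (by omega)
  have hye : ⁅y, e⁆ = 0 := by rw [← lie_skew, d.lie_e_y, neg_zero]
  obtain ⟨n, rfl⟩ : ∃ n', n = n' + 1 := ⟨n - 1, by omega⟩
  rw [lie_ad_pow_of_lie_eq_zero hXy, d.lie_ad_e_pow_ad_f_pow,
    bracketCoeffH_eq_zero _ _ _ (by omega), bracketCoeffF_eq_zero _ _ _ (by omega), pow_succ,
    Module.End.mul_apply]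
  simp [hye]

theorem lie_ad_x_pow_ad_e_pow_ad_f_pow (d : IsLadderPair e f h x y α μ κ) {k m n : ℕ}
    (hkm : k < m) (hm : 2 ≤ m) (hn : 1 ≤ n) :
    ⁅(ad K L x ^ n) ((ad K L e ^ k) x), (ad K L f ^ m) y⁆ = 0 := by
  rw [← lie_skew, d.symm.lie_ad_e_pow_ad_y_pow_ad_f_pow hkm hm hn, neg_zero]

theorem stmt16Concl (d : IsLadderPair e f h x y α μ κ) {j m : ℕ} (hjm : j + 2 ≤ m)
    (hb : μ + m * α = -(μ + j * α)) (hj : bracketCoeffH α μ κ j j ≠ 0)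
    (hm : bracketCoeffH α μ κ m m ≠ 0) :
    Stmt16Concl h ((ad K L e ^ j) x) ((ad K L f ^ j) y) ((ad K L e ^ m) x) ((ad K L f ^ m) y)
      (μ + j * α) :=
  ⟨_, _, hj, hm, d.lie_h_ad_e_pow j, d.lie_h_ad_f_pow j, by rw [d.lie_h_ad_e_pow, hb],
    by rw [d.lie_h_ad_f_pow, hb, neg_neg], d.lie_ad_e_pow_ad_f_pow_self j,
    d.lie_ad_e_pow_ad_f_pow_self m, d.lie_ad_e_pow_ad_f_pow_eq_zero (.inl hjm),
    d.lie_ad_e_pow_ad_f_pow_eq_zero (.inr hjm)⟩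

theorem stmt16Concl_raise (d : IsLadderPair e f h x y α μ 1) {M : ℕ} (hM : 3 ≤ M)
    (hb : μ + 2 * α + M * μ = -(μ + M * α)) (hβ : bracketCoeffH α μ 1 M M ≠ 0)
    (hβ' : bracketCoeffH μ (μ + 2 * α) (bracketCoeffH α μ 1 2 2) M M ≠ 0) :
    Stmt16Concl h ((ad K L e ^ M) x) ((ad K L f ^ M) y) ((ad K L x ^ M) ((ad K L e ^ 2) x))
      ((ad K L y ^ M) ((ad K L f ^ 2) y)) (μ + M * α) := by
  have d₂ := d.ad_pow le_rfl
  rw [Nat.cast_ofNat] at d₂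
  exact ⟨_, _, hβ, hβ', d.lie_h_ad_e_pow M, d.lie_h_ad_f_pow M,
    by rw [d₂.lie_h_ad_e_pow, hb], by rw [d₂.lie_h_ad_f_pow, hb, neg_neg],
    d.lie_ad_e_pow_ad_f_pow_self M, d₂.lie_ad_e_pow_ad_f_pow_self M,
    d.lie_ad_e_pow_ad_y_pow_ad_f_pow (by omega) (by omega) (by omega),
    d.lie_ad_x_pow_ad_e_pow_ad_f_pow (by omega) (by omega) (by omega)⟩

theorem stmt16Concl_reflect (d : IsLadderPair e f h x y α μ 1) {N : ℕ} (hN : 1 ≤ N)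
    (hb : μ + N * α = -μ) (hμ : μ ≠ 0) (hβ : bracketCoeffH α μ 1 N N ≠ 0) (h3 : (3 : K) ≠ 0) :
    Stmt16Concl h ((ad K L f ^ N) y) ((ad K L e ^ N) x) ((ad K L y ^ 2) ((ad K L f ^ N) y))
      ((ad K L x ^ 2) ((ad K L e ^ N) x)) μ := by
  apply Stmt16Concl.of_neg
  rcases hN.eq_or_lt with rfl | hN
  · -- Here `⁅x, (ad f) y⁆ ≠ 0`, so the reflected pair below is unavailable; instead the new
    -- elements are the strings of `-f` and `-e` in the pair with the roles of `(e, f)` and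
    -- `(x, y)` exchanged.
    obtain rfl : α = -2 * μ := by linear_combination hb
    have hβ₁ : bracketCoeffH μ (-2 * μ) 1 1 1 = -μ := by
      simp [bracketCoeffH, bracketCoeffF, ladderCoeff]; ring
    have hβ₃ : bracketCoeffH μ (-2 * μ) 1 3 3 = 9 * μ ^ 3 := by
      simp [bracketCoeffH, bracketCoeffF, ladderCoeff]; ring
    have key := d.swap.stmt16Concl (j := 1) (m := 3) le_rfl (by push_cast; ring)
      (by rw [hβ₁]; exact neg_ne_zero.mpr hμ)
      (by rw [hβ₃, show (9 : K) = 3 * 3 by norm_num]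
          exact mul_ne_zero (mul_ne_zero h3 h3) (pow_ne_zero 3 hμ))
    have hyf : (ad K L y ^ 1) (-f) = (ad K L f ^ 1) y := by simp [lie_skew]
    have hxe : (ad K L x ^ 1) (-e) = (ad K L e ^ 1) x := by simp [lie_skew]
    rw [show 3 = 2 + 1 from rfl, pow_add, pow_add, Module.End.mul_apply, Module.End.mul_apply,
      hyf, hxe] at key
    convert key using 1
    push_cast
    ring
  · have d₂ := (d.ad_pow hN).symm
    rw [hb] at d₂
    have hβ₂ : bracketCoeffH μ (-μ) (bracketCoeffH α μ 1 N N) 2 2 =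
        -(bracketCoeffH α μ 1 N N * μ ^ 2) := by
      simp [bracketCoeffH, bracketCoeffF, ladderCoeff]; ring
    simpa using d₂.stmt16Concl (j := 0) (m := 2) le_rfl (by push_cast; ring)
      (by simpa [bracketCoeffH] using hβ)
      (by rw [hβ₂]; exact neg_ne_zero.mpr (mul_ne_zero hβ (pow_ne_zero 2 hμ)))

end IsLadderPair

end Lie

section CharP

variable {p : ℕ} [CharP K p]

theorem natCast_ne_zero_of_lt {k : ℕ} (h0 : 0 < k) (hk : k < p) : (k : K) ≠ 0 := by
  rw [Ne, CharP.cast_eq_zero_iff K p]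
  exact fun hd ↦ absurd (Nat.le_of_dvd h0 hd) (by omega)

theorem natCast_mul_add_ne_zero [Fact p.Prime] {a : K} (ha : ∀ n : ℕ, a ≠ n) {u : ℕ}
    (hu : (u : K) ≠ 0) (d : ℕ) : u * a + d ≠ 0 := fun h ↦ by
  apply ha (-(d : ZMod p) / u).val
  rw [ZMod.natCast_val, ← ZMod.castHom_apply (h := dvd_rfl), map_div₀, map_neg, map_natCast,
    map_natCast, eq_div_iff hu]
  linear_combination h

theorem bracketCoeffH_two_natCast_ne_zero {n : ℕ} (hn : 0 < n) (hnp : n < p) (hp : 2 < p) :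
    bracketCoeffH (2 : K) n 1 (p - n) (p - n) ≠ 0 := by
  have hN : ((p - n : ℕ) : K) = -n := by rw [Nat.cast_sub hnp.le, CharP.cast_eq_zero, zero_sub]
  have h2 : (2 : K) ≠ 0 := by exact_mod_cast natCast_ne_zero_of_lt (k := 2) two_pos hp
  refine bracketCoeffH_self_ne_zero _ _ _ one_ne_zero ?_ fun i hi ↦ ladderCoeff_succ_ne_zero ?_ ?_
  · rw [hN, show (n : K) + -n * 2 = -n by ring, neg_ne_zero]
    exact natCast_ne_zero_of_lt hn hnp
  · exact_mod_cast natCast_ne_zero_of_lt (k := i + 1) (by omega) (by omega)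
  · rw [show 2 * (n : K) + i * 2 = 2 * ((n + i : ℕ) : K) by push_cast; ring]
    exact mul_ne_zero h2 (natCast_ne_zero_of_lt (by omega) (by omega))

variable [Fact p.Prime] {a : K}

theorem bracketCoeffH_two_ne_zero (ha : ∀ n : ℕ, a ≠ n) {M : ℕ} (hM : M < p) (hp : 2 < p) :
    bracketCoeffH (2 : K) a 1 M M ≠ 0 := by
  have h2 : (2 : K) ≠ 0 := by exact_mod_cast natCast_ne_zero_of_lt (k := 2) two_pos hp
  refine bracketCoeffH_self_ne_zero _ _ _ one_ne_zero ?_ fun i hi ↦ ladderCoeff_succ_ne_zero ?_ ?_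
  · simpa [mul_comm] using natCast_mul_add_ne_zero ha (u := 1) (by simp) (M * 2)
  · exact_mod_cast natCast_ne_zero_of_lt (k := i + 1) (by omega) (by omega)
  · rw [show 2 * a + i * 2 = 2 * ((1 : ℕ) * a + (i : ℕ)) by push_cast; ring]
    exact mul_ne_zero h2 (natCast_mul_add_ne_zero ha (by simp) i)

theorem bracketCoeffH_add_four_ne_zero (ha : ∀ n : ℕ, a ≠ n) {κ : K} (hκ : κ ≠ 0) {M : ℕ}
    (hM : M + 1 < p) :
    bracketCoeffH a (a + 2 * 2) κ M M ≠ 0 := by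
  refine bracketCoeffH_self_ne_zero _ _ _ hκ ?_ fun i hi ↦ ladderCoeff_succ_ne_zero ?_ ?_
  · rw [show a + 2 * 2 + M * a = ((M + 1 : ℕ) : K) * a + (4 : ℕ) by push_cast; ring]
    exact natCast_mul_add_ne_zero ha (natCast_ne_zero_of_lt (by omega) hM) 4
  · exact_mod_cast natCast_ne_zero_of_lt (k := i + 1) (by omega) (by omega)
  · rw [show 2 * (a + 2 * 2) + i * a = ((i + 2 : ℕ) : K) * a + (8 : ℕ) by push_cast; ring]
    exact natCast_mul_add_ne_zero ha (natCast_ne_zero_of_lt (by omega) (by omega)) 8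

end CharP

end LadderPairs

theorem statement16_general {F L : Type*} [Field F] [LieRing L] [LieAlgebra F L]
    (p : ℕ) [CharP F p] (hp : 3 < p)
    (e₁ e₂ f₁ f₂ h : L) (a : F)
    (ha : a ≠ 0)
    (hhe₁ : ⁅h, e₁⁆ = (2 : F) • e₁) (hhf₁ : ⁅h, f₁⁆ = (-2 : F) • f₁)
    (hhe₂ : ⁅h, e₂⁆ = a • e₂) (hhf₂ : ⁅h, f₂⁆ = (-a) • f₂)
    (he₁f₁ : ⁅e₁, f₁⁆ = h) (he₂f₂ : ⁅e₂, f₂⁆ = h)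
    (he₁f₂ : ⁅e₁, f₂⁆ = 0) (he₂f₁ : ⁅e₂, f₁⁆ = 0) :
    (∀ n : ℕ, 1 ≤ n → n ≤ p - 1 → a = (n : F) →
      Stmt16Concl h
        (((LieAlgebra.ad F L f₁) ^ (p - n)) f₂)
        (((LieAlgebra.ad F L e₁) ^ (p - n)) e₂)
        (((LieAlgebra.ad F L f₂) ^ 2) (((LieAlgebra.ad F L f₁) ^ (p - n)) f₂))
        (((LieAlgebra.ad F L e₂) ^ 2) (((LieAlgebra.ad F L e₁) ^ (p - n)) e₂))
        a) ∧
    ((∀ n : ℕ, a ≠ (n : F)) →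
      Stmt16Concl h
        (((LieAlgebra.ad F L e₁) ^ (p - 2)) e₂)
        (((LieAlgebra.ad F L f₁) ^ (p - 2)) f₂)
        (((LieAlgebra.ad F L e₂) ^ (p - 2)) (((LieAlgebra.ad F L e₁) ^ 2) e₂))
        (((LieAlgebra.ad F L f₂) ^ (p - 2)) (((LieAlgebra.ad F L f₁) ^ 2) f₂))
        (a - 4)) := by
  have hprime : Fact p.Prime := ⟨(CharP.char_is_prime_or_zero F p).resolve_right (by omega)⟩
  have d : IsLadderPair e₁ f₁ h e₂ f₂ (2 : F) a 1 :=
    ⟨he₁f₁, hhe₁, hhf₁, hhe₂, hhf₂, by rw [← lie_skew, he₂f₁, neg_zero], he₁f₂,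
      by rw [he₂f₂, one_smul]⟩
  refine ⟨fun n hn hnp han ↦ ?_, fun hnat ↦ ?_⟩
  · subst han
    have hN : ((p - n : ℕ) : F) = -n := by
      rw [Nat.cast_sub (by omega), CharP.cast_eq_zero, zero_sub]
    exact d.stmt16Concl_reflect (by omega) (by rw [hN]; ring) ha
      (bracketCoeffH_two_natCast_ne_zero hn (by omega) (by omega))
      (by exact_mod_cast natCast_ne_zero_of_lt (K := F) (k := 3) (by norm_num) hp)
  · have hp4 : p ≠ 4 := by rintro rfl; exact absurd hprime.out (by norm_num)
    have hM : ((p - 2 : ℕ) : F) = -2 := by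
      rw [Nat.cast_sub (by omega), CharP.cast_eq_zero, zero_sub, Nat.cast_ofNat]
    have key := d.stmt16Concl_raise (M := p - 2) (by omega) (by rw [hM]; ring)
      (bracketCoeffH_two_ne_zero hnat (by omega) (by omega))
      (bracketCoeffH_add_four_ne_zero hnat (bracketCoeffH_two_ne_zero hnat (by omega) (by omega))
        (by omega))
    rwa [hM, show a + -2 * 2 = a - 4 by ring] at key

/-- Proposition 3.8: from the data `e₁, e₂, f₁, f₂, h, a` one constructs new elements
`e₁', f₁', e₂', f₂'` (by the two recipes, according to whether `a` lies in the prime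
field or not) satisfying the analogous relations with `b = a`, respectively `b = a-4`. -/
theorem statement16 {F L : Type*} [Field F] [LieRing L] [LieAlgebra F L]
    (p : ℕ) [CharP F p] (hp : 3 < p)
    (e₁ e₂ f₁ f₂ h : L) (a : F)
    (he₁ : e₁ ≠ 0) (he₂ : e₂ ≠ 0) (hf₁ : f₁ ≠ 0) (hf₂ : f₂ ≠ 0) (hh : h ≠ 0)
    (ha : a ≠ 0)
    (hhe₁ : ⁅h, e₁⁆ = (2 : F) • e₁) (hhf₁ : ⁅h, f₁⁆ = (-2 : F) • f₁)
    (hhe₂ : ⁅h, e₂⁆ = a • e₂) (hhf₂ : ⁅h, f₂⁆ = (-a) • f₂)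
    (he₁f₁ : ⁅e₁, f₁⁆ = h) (he₂f₂ : ⁅e₂, f₂⁆ = h)
    (he₁f₂ : ⁅e₁, f₂⁆ = 0) (he₂f₁ : ⁅e₂, f₁⁆ = 0) :
    (∀ n : ℕ, 1 ≤ n → n ≤ p - 1 → a = (n : F) →
      Stmt16Concl h
        (((LieAlgebra.ad F L f₁) ^ (p - n)) f₂)
        (((LieAlgebra.ad F L e₁) ^ (p - n)) e₂)
        (((LieAlgebra.ad F L f₂) ^ 2) (((LieAlgebra.ad F L f₁) ^ (p - n)) f₂))
        (((LieAlgebra.ad F L e₂) ^ 2) (((LieAlgebra.ad F L e₁) ^ (p - n)) e₂))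
        a) ∧
    ((∀ n : ℕ, a ≠ (n : F)) →
      Stmt16Concl h
        (((LieAlgebra.ad F L e₁) ^ (p - 2)) e₂)
        (((LieAlgebra.ad F L f₁) ^ (p - 2)) f₂)
        (((LieAlgebra.ad F L e₂) ^ (p - 2)) (((LieAlgebra.ad F L e₁) ^ 2) e₂))
        (((LieAlgebra.ad F L f₂) ^ (p - 2)) (((LieAlgebra.ad F L f₁) ^ 2) f₂))
        (a - 4)) :=
  statement16_general p hp e₁ e₂ f₁ f₂ h a ha hhe₁ hhf₁ hhe₂ hhf₂ he₁f₁ he₂f₂ he₁f₂ he₂f₁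
end

section
/- Let F be a field of characteristic p > 3 and let g = ⊕_{t∈ℤ} g_t be a ℤ-graded Lie algebra over F. Suppose there are integers ℓ_1, ℓ_2 with ℓ_1·ℓ_2 ≥ 0 and (ℓ_1, ℓ_2) ≠ (0, 0), nonzero elements e_i ∈ g_{ℓ_i} and f_i ∈ g_{−ℓ_i} (i = 1, 2), elements h_1, h_2 ∈ g, and scalars b, c ∈ F with c ≠ 0, such that ⁅e_i, f_j⁆ = δ_{ij}·h_i, ⁅h_i, e_j⁆ = a_{ij}·e_j and ⁅h_i, f_j⁆ = −a_{ij}·f_j for all i, j ∈ {1, 2}, where a_{11} = 2, a_{12} = 0, a_{21} = c, and a_{22} = b. Then g is infinite-dimensional over F. -/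
/-!
With `x = (ad e₁)ʲ e₂` and `y = (ad f₁)ʲ f₂`, the elements `vₖ = (ad y)ᵏ f₁` are homogeneous of
pairwise distinct degrees `-ℓ₁ - k (ℓ₂ + j ℓ₁)`. Since `⁅x, y⁆ = α h₁` and
`⁅x, ⁅y, f₁⁆⁆ = -(j + 1) α f₁` with `α = j · j! · (j - 1)! · c`, the pair `(x, y)` acts on the
string like an `sl₂`-pair: `⁅x, vₖ₊₁⁆ = -α (j k² + (j + 2) k + j + 1) vₖ`. For `j` with `4 - 3 j²`
a non-square modulo `p` the quadratic never vanishes modulo `p`, so no `vₖ` is zero and `g`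
contains infinitely many linearly independent vectors.
-/

open LieModule
open scoped Nat

theorem CharP.natCast_ne_zero_of_lt (R : Type*) [AddMonoidWithOne R] {p : ℕ} [CharP R p]
    {n : ℕ} (h0 : 0 < n) (hn : n < p) : (n : R) ≠ 0 := by
  rw [Ne, CharP.cast_eq_zero_iff R p]
  exact Nat.not_dvd_of_pos_of_lt h0 hn

namespace ZMod

variable {p : ℕ} [Fact p.Prime]

theorem exists_not_isSquare_add_sq (hp : p ≠ 2) {a : ZMod p} (ha : a ≠ 0) :
    ∃ u : ZMod p, ¬IsSquare (a + u ^ 2) := by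
  by_contra! hsq
  have hmul : ∀ n : ℕ, IsSquare (a * n) := by
    intro n
    induction n with
    | zero => exact ⟨0, by simp⟩
    | succ n ih =>
      obtain ⟨u, hu⟩ := ih
      obtain ⟨r, hr⟩ := hsq u
      exact ⟨r, by rw [Nat.cast_succ, mul_add_one, hu, ← hr, add_comm, sq]⟩
  obtain ⟨x, hx⟩ := FiniteField.exists_nonsquare (F := ZMod p) (by rwa [ZMod.ringChar_zmod_n])
  apply hx
  simpa [natCast_zmod_val, ← mul_assoc, mul_inv_cancel₀ ha] using hmul (a⁻¹ * x).val

theorem exists_not_isSquare_add_mul_sq (hp : 3 < p) {a b : ZMod p} (ha : a ≠ 0) (hb : b ≠ 0) :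
    ∃ t : ZMod p, ¬IsSquare (a + b * t ^ 2) := by
  by_cases hbsq : IsSquare b
  · obtain ⟨s, rfl⟩ := hbsq
    obtain ⟨u, hu⟩ := exists_not_isSquare_add_sq (by omega) ha
    have hs : s ≠ 0 := by rintro rfl; simp at hb
    refine ⟨u / s, ?_⟩
    field_simp
    exact hu
  have h2 : (2 : ZMod p) ≠ 0 := by exact_mod_cast CharP.natCast_ne_zero_of_lt _ two_pos (by omega)
  have h3 : (3 : ZMod p) ≠ 0 := by exact_mod_cast CharP.natCast_ne_zero_of_lt _ three_pos hp
  set q := -a / b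
  obtain ⟨s, hs0, hsq⟩ : ∃ s : ZMod p, s ≠ 0 ∧ s ^ 2 ≠ q := by
    by_cases h1 : (1 : ZMod p) ^ 2 = q
    · refine ⟨2, h2, fun h4 => h3 ?_⟩
      linear_combination h4 - h1
    · exact ⟨1, one_ne_zero, h1⟩
  -- `t ^ 2 - w ^ 2 = q`, so `a + b * t ^ 2 = b * w ^ 2` is a nonzero square multiple of `b`
  set w := (s - q / s) / 2
  have hw : w ≠ 0 := by
    refine div_ne_zero (fun h => hsq ?_) h2
    field_simp at h
    linear_combination h
  refine ⟨(s + q / s) / 2, fun ⟨r, hr⟩ => hbsq ⟨r / w, ?_⟩⟩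
  have : a + b * ((s + q / s) / 2) ^ 2 = b * w ^ 2 := by
    simp only [w, q]
    field_simp
    ring
  rw [this] at hr
  field_simp
  linear_combination hr

end ZMod

theorem exists_forall_not_dvd_quadratic {p : ℕ} [Fact p.Prime] (hp : 3 < p) :
    ∃ m : ℕ, m + 1 < p ∧ ∀ k : ℕ, ¬p ∣ (m + 1) * k ^ 2 + (m + 3) * k + (m + 2) := by
  have h2 : (2 : ZMod p) ≠ 0 := by exact_mod_cast CharP.natCast_ne_zero_of_lt _ two_pos (by omega)
  have h3 : (3 : ZMod p) ≠ 0 := by exact_mod_cast CharP.natCast_ne_zero_of_lt _ three_pos hp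
  obtain ⟨t, ht⟩ := ZMod.exists_not_isSquare_add_mul_sq hp (a := 2 ^ 2) (b := -3)
    (pow_ne_zero 2 h2) (neg_ne_zero.mpr h3)
  obtain ⟨m, hm⟩ : ∃ m, t.val = m + 1 :=
    Nat.exists_eq_succ_of_ne_zero fun h => ht ⟨2, by rw [(ZMod.val_eq_zero t).mp h]; ring⟩
  refine ⟨m, hm ▸ t.val_lt, fun k hk => ht ?_⟩
  rw [← ZMod.natCast_eq_zero_iff] at hk
  rw [← ZMod.natCast_zmod_val t, hm]
  push_cast at hk ⊢
  -- the discriminant of the quadratic is `4 - 3 (m + 1) ^ 2`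
  exact ⟨2 * (m + 1) * k + (m + 1) + 2, by linear_combination (-4 * ((m : ZMod p) + 1)) * hk⟩

section Strings

variable {R L M : Type*} [CommRing R] [LieRing L] [LieAlgebra R L]
  [AddCommGroup M] [Module R M] [LieRingModule L M] [LieModule R L M]

theorem lie_toEnd_pow_apply_of_lie_eq_smul {h a : L} {m : M} {μ ν : R}
    (ha : ⁅h, a⁆ = ν • a) (hm : ⁅h, m⁆ = μ • m) (n : ℕ) :
    ⁅h, (toEnd R L M a ^ n) m⁆ = (μ + n * ν) • (toEnd R L M a ^ n) m := by
  induction n with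
  | zero => simpa using hm
  | succ n ih =>
    rw [pow_succ', Module.End.mul_apply, toEnd_apply_apply, leibniz_lie, ha, ih, smul_lie,
      lie_smul, ← add_smul]
    congr 1
    push_cast
    ring

theorem lie_toEnd_pow_apply_of_lie_eq_zero {a e : L} {m : M} (hae : ⁅a, e⁆ = 0) (n : ℕ) :
    ⁅a, (toEnd R L M e ^ n) m⁆ = (toEnd R L M e ^ n) ⁅a, m⁆ := by
  induction n with
  | zero => simp
  | succ n ih => simp [pow_succ', leibniz_lie a e, hae, ih]

/-- Moving `X` past the factors `Y` picks up the weights `μ + i ν` of `⁅X, Y⁆` on `(ad Y)ⁱ v`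
for `1 ≤ i ≤ k`, whence `k μ + C(k + 1, 2) ν`. -/
theorem lie_toEnd_pow_succ_apply_of_lie_lie {X Y : L} {v : M} {β μ ν : R}
    (hY : ⁅⁅X, Y⁆, Y⁆ = ν • Y) (hv : ⁅⁅X, Y⁆, v⁆ = μ • v) (hXYv : ⁅X, ⁅Y, v⁆⁆ = β • v)
    (k : ℕ) :
    ⁅X, (toEnd R L M Y ^ (k + 1)) v⁆ =
      (β + k * μ + (k + 1).choose 2 * ν) • (toEnd R L M Y ^ k) v := by
  induction k with
  | zero => simpa using hXYv
  | succ k ih =>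
    rw [pow_succ' _ (k + 1), Module.End.mul_apply, toEnd_apply_apply, leibniz_lie,
      lie_toEnd_pow_apply_of_lie_eq_smul hY hv, ih, lie_smul, ← toEnd_apply_apply R,
      ← Module.End.mul_apply, ← pow_succ', ← add_smul, Nat.choose_succ_succ' (k + 1),
      Nat.choose_one_right]
    congr 1
    push_cast
    ring

theorem toEnd_pow_apply_ne_zero_of_lie {K : Type*} [Field K] [LieAlgebra K L] [Module K M]
    [LieModule K L M] {X Y : L} {v : M} (hv : v ≠ 0) {γ : ℕ → K} (hγ : ∀ k, γ k ≠ 0)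
    (hXY : ∀ k, ⁅X, (toEnd K L M Y ^ (k + 1)) v⁆ = γ k • (toEnd K L M Y ^ k) v) (k : ℕ) :
    (toEnd K L M Y ^ k) v ≠ 0 := by
  induction k with
  | zero => simpa using hv
  | succ k ih =>
    intro h
    have hk := hXY k
    rw [h, lie_zero, eq_comm, smul_eq_zero] at hk
    exact hk.elim (hγ k) ih

end Strings

theorem Int.add_mul_ne_zero_of_mul_nonneg {a b : ℤ} (hab : 0 ≤ a * b) (h : ¬(a = 0 ∧ b = 0))
    {n : ℤ} (hn : 0 < n) : b + n * a ≠ 0 := by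
  intro hsum
  have hb : b = -(n * a) := by linarith
  rcases eq_or_ne a 0 with ha | ha
  · exact h ⟨ha, by simp [hb, ha]⟩
  · have := mul_pos hn (mul_self_pos.mpr ha)
    rw [hb] at hab
    nlinarith

theorem toEnd_pow_apply_mem {R L ι : Type*} [CommRing R] [LieRing L] [LieAlgebra R L]
    [AddCommMonoid ι] {g : ι → Submodule R L}
    (hg : ∀ i j : ι, ∀ x ∈ g i, ∀ y ∈ g j, ⁅x, y⁆ ∈ g (i + j))
    {a b : ι} {e m : L} (he : e ∈ g a) (hm : m ∈ g b) (n : ℕ) :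
    (toEnd R L L e ^ n) m ∈ g (b + n • a) := by
  induction n with
  | zero => simpa using hm
  | succ n ih =>
    rw [pow_succ', Module.End.mul_apply, toEnd_apply_apply, succ_nsmul', add_left_comm]
    exact hg _ _ _ he _ ih

/-- The relations `⁅eᵢ, fⱼ⁆ = δᵢⱼ hᵢ`, `⁅hᵢ, eⱼ⁆ = aᵢⱼ eⱼ`, `⁅hᵢ, fⱼ⁆ = -aᵢⱼ fⱼ` for
`a₁₁ = 2`, `a₁₂ = 0`, `a₂₁ = c`: primitivity of `e₂` and `f₂` encodes `a₁₂ = 0` and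
`⁅e₁, f₂⁆ = ⁅e₂, f₁⁆ = 0`. -/
structure ChevalleyRelations {R L : Type*} [CommRing R] [LieRing L] [LieAlgebra R L]
    (h₁ e₁ f₁ h₂ e₂ f₂ : L) (c : R) : Prop where
  isSl2Triple : IsSl2Triple h₁ e₁ f₁
  primitive_e₂ : isSl2Triple.symm.HasPrimitiveVectorWith e₂ (0 : R)
  primitive_f₂ : isSl2Triple.HasPrimitiveVectorWith f₂ (0 : R)
  lie_e₂_f₂ : ⁅e₂, f₂⁆ = h₂
  lie_h₂_e₁ : ⁅h₂, e₁⁆ = c • e₁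
  lie_h₂_f₁ : ⁅h₂, f₁⁆ = -c • f₁

namespace ChevalleyRelations

variable {R L : Type*} [CommRing R] [LieRing L] [LieAlgebra R L] {h₁ e₁ f₁ h₂ e₂ f₂ : L} {c : R}

local notation "ξ " n => (toEnd R L L e₁ ^ n) e₂
local notation "η " n => (toEnd R L L f₁ ^ n) f₂

theorem lie_ξ_succ_f₁ (H : ChevalleyRelations h₁ e₁ f₁ h₂ e₂ f₂ c) (n : ℕ) :
    ⁅ξ (n + 1), f₁⁆ = ((n + 1) * n : R) • ξ n := by
  rw [← lie_skew, H.primitive_e₂.lie_e_pow_succ_toEnd_f n, ← neg_smul]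
  ring_nf

theorem lie_ξ_succ_η_succ (H : ChevalleyRelations h₁ e₁ f₁ h₂ e₂ f₂ c) (a m : ℕ) :
    ⁅ξ (a + 1), η (m + 1)⁆ = ((a + 1) * a : R) • ⁅ξ a, η m⁆ + ⁅f₁, ⁅ξ (a + 1), η m⁆⁆ := by
  rw [pow_succ' (toEnd R L L f₁) m, Module.End.mul_apply, toEnd_apply_apply, leibniz_lie,
    H.lie_ξ_succ_f₁, smul_lie]

theorem lie_ξ_add_two_η (H : ChevalleyRelations h₁ e₁ f₁ h₂ e₂ f₂ c) (m k : ℕ) :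
    ⁅ξ (m + k + 2), η m⁆ = 0 := by
  induction m generalizing k with
  | zero =>
    have hf₂e₁ : ⁅f₂, e₁⁆ = 0 := by rw [← lie_skew, H.primitive_f₂.lie_e, neg_zero]
    rw [← lie_skew, zero_add, pow_zero, Module.End.one_apply,
      lie_toEnd_pow_apply_of_lie_eq_zero hf₂e₁, ← lie_skew, H.lie_e₂_f₂,
      pow_succ, pow_succ]
    simp [← lie_skew e₁ h₂, H.lie_h₂_e₁]
  | succ m ih =>
    rw [show m + 1 + k + 2 = m + k + 2 + 1 by ring, H.lie_ξ_succ_η_succ, ih,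
      show m + k + 2 + 1 = m + (k + 1) + 2 by ring, ih, smul_zero, lie_zero, add_zero]

theorem lie_ξ_succ_η (H : ChevalleyRelations h₁ e₁ f₁ h₂ e₂ f₂ c) (m : ℕ) :
    ⁅ξ (m + 1), η m⁆ = -((m + 1)! * m ! * c : R) • e₁ := by
  induction m with
  | zero =>
    simp [lie_lie, H.lie_e₂_f₂, H.primitive_f₂.lie_e, ← lie_skew e₁ h₂, H.lie_h₂_e₁]
  | succ m ih =>
    rw [H.lie_ξ_succ_η_succ, ih, H.lie_ξ_add_two_η m 0, lie_zero, add_zero]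
    push_cast [Nat.factorial_succ]
    module

theorem lie_ξ_η_self (H : ChevalleyRelations h₁ e₁ f₁ h₂ e₂ f₂ c) (m : ℕ) :
    ⁅ξ (m + 1), η (m + 1)⁆ = ((m + 1) * (m + 1)! * m ! * c : R) • h₁ := by
  induction m with
  | zero =>
    rw [H.lie_ξ_succ_η_succ, H.lie_ξ_succ_η, lie_smul, ← lie_skew f₁ e₁, H.isSl2Triple.lie_e_f]
    simp
  | succ m ih =>
    rw [H.lie_ξ_succ_η_succ, ih, H.lie_ξ_succ_η, lie_smul, ← lie_skew f₁ e₁,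
      H.isSl2Triple.lie_e_f]
    push_cast [Nat.factorial_succ]
    module

theorem lie_ξ_η_succ (H : ChevalleyRelations h₁ e₁ f₁ h₂ e₂ f₂ c) (m : ℕ) :
    ⁅ξ m, η (m + 1)⁆ = ((m + 1)! * m ! * c : R) • f₁ := by
  induction m with
  | zero =>
    simp [leibniz_lie e₂ f₁, H.lie_e₂_f₂, ← lie_skew e₂ f₁, H.primitive_e₂.lie_e,
      ← lie_skew f₁ h₂, H.lie_h₂_f₁]
  | succ m ih =>
    rw [H.lie_ξ_succ_η_succ, ih, H.lie_ξ_η_self, lie_smul, ← lie_skew f₁ h₁,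
      H.isSl2Triple.lie_lie_smul_f R]
    push_cast [Nat.factorial_succ]
    module

theorem lie_ξ_toEnd_η_pow_succ (H : ChevalleyRelations h₁ e₁ f₁ h₂ e₂ f₂ c) (m k : ℕ) :
    ⁅ξ (m + 1), (toEnd R L L (η (m + 1)) ^ (k + 1)) f₁⁆ =
      -((m + 1) * (m + 1)! * m ! * c * ((m + 1) * k ^ 2 + (m + 3) * k + (m + 2)) : R) •
        (toEnd R L L (η (m + 1)) ^ k) f₁ := by
  set α : R := (m + 1) * (m + 1)! * m ! * c
  have hY : ⁅⁅ξ (m + 1), η (m + 1)⁆, η (m + 1)⁆ = (-2 * (m + 1) * α) • η (m + 1) := by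
    rw [H.lie_ξ_η_self, smul_lie, H.primitive_f₂.lie_h_pow_toEnd_f, smul_smul]
    congr 1
    simp only [α]
    push_cast
    ring
  have hf₁ : ⁅⁅ξ (m + 1), η (m + 1)⁆, f₁⁆ = (-2 * α) • f₁ := by
    rw [H.lie_ξ_η_self, smul_lie, H.isSl2Triple.lie_lie_smul_f R]
    module
  have hYf₁ : ⁅ξ (m + 1), ⁅η (m + 1), f₁⁆⁆ = (-((m + 2) * α)) • f₁ := by
    rw [← lie_skew _ f₁, ← toEnd_apply_apply R L L f₁, ← Module.End.mul_apply, ← pow_succ',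
      lie_neg, H.lie_ξ_η_succ]
    simp only [α, Nat.factorial_succ]
    push_cast
    module
  have hchoose : (((k + 1).choose 2 : ℕ) : R) * 2 = (k + 1) * k := by
    have h : (k + 1).choose 2 * 2 = (k + 1) * k := by
      simpa using (Nat.add_one_mul_choose_eq k 1).symm
    exact_mod_cast congrArg (Nat.cast : ℕ → R) h
  rw [lie_toEnd_pow_succ_apply_of_lie_lie hY hf₁ hYf₁]
  congr 1
  linear_combination (-(m + 1) * α) * hchoose

section Field

variable {K L : Type*} [Field K] [LieRing L] [LieAlgebra K L] {h₁ e₁ f₁ h₂ e₂ f₂ : L} {c : K}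

theorem toEnd_pow_apply_f₁_ne_zero (H : ChevalleyRelations h₁ e₁ f₁ h₂ e₂ f₂ c) (hc : c ≠ 0)
    {p : ℕ} [CharP K p] [Fact p.Prime] {m : ℕ} (hm : m + 1 < p)
    (hQ : ∀ k : ℕ, ¬p ∣ (m + 1) * k ^ 2 + (m + 3) * k + (m + 2)) (k : ℕ) :
    (toEnd K L L ((toEnd K L L f₁ ^ (m + 1)) f₂) ^ k) f₁ ≠ 0 := by
  refine toEnd_pow_apply_ne_zero_of_lie H.isSl2Triple.f_ne_zero (fun k => ?_)
    (H.lie_ξ_toEnd_η_pow_succ m) k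
  have hp : p.Prime := Fact.out
  have hcast (n : ℕ) (hn : ¬p ∣ n) : (n : K) ≠ 0 := (CharP.cast_eq_zero_iff K p n).not.mpr hn
  have hα : ¬p ∣ (m + 1) * (m + 1)! * m ! := by
    simp only [hp.dvd_mul, hp.dvd_factorial, not_or]
    exact ⟨⟨Nat.not_dvd_of_pos_of_lt m.succ_pos hm, by omega⟩, by omega⟩
  have := mul_ne_zero (mul_ne_zero (hcast _ hα) hc) (hcast _ (hQ k))
  push_cast at this
  exact neg_ne_zero.mpr this

end Field

end ChevalleyRelations

theorem statement18_general {F L : Type*} [Field F] [LieRing L] [LieAlgebra F L]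
    (p : ℕ) [CharP F p] (hp : 3 < p)
    (g : ℤ → Submodule F L)
    (hdirect : DirectSum.IsInternal g)
    (hgraded : ∀ i j : ℤ, ∀ x ∈ g i, ∀ y ∈ g j, ⁅x, y⁆ ∈ g (i + j))
    (l₁ l₂ : ℤ) (hl : 0 ≤ l₁ * l₂) (hl0 : ¬(l₁ = 0 ∧ l₂ = 0))
    (e₁ e₂ f₁ f₂ h₁ h₂ : L) (c : F)
    (he₂ne : e₂ ≠ 0) (hf₁ne : f₁ ≠ 0) (hf₂ne : f₂ ≠ 0)
    (hc : c ≠ 0)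
    (hf₁ : f₁ ∈ g (-l₁)) (hf₂ : f₂ ∈ g (-l₂))
    (he₁f₁ : ⁅e₁, f₁⁆ = h₁) (he₂f₂ : ⁅e₂, f₂⁆ = h₂)
    (he₁f₂ : ⁅e₁, f₂⁆ = 0) (he₂f₁ : ⁅e₂, f₁⁆ = 0)
    (hh₁e₁ : ⁅h₁, e₁⁆ = (2 : F) • e₁) (hh₁e₂ : ⁅h₁, e₂⁆ = 0)
    (hh₂e₁ : ⁅h₂, e₁⁆ = c • e₁)
    (hh₁f₁ : ⁅h₁, f₁⁆ = (-2 : F) • f₁) (hh₁f₂ : ⁅h₁, f₂⁆ = 0)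
    (hh₂f₁ : ⁅h₂, f₁⁆ = (-c) • f₁) :
    ¬ FiniteDimensional F L := by
  intro hfd
  have : Fact p.Prime := ⟨CharP.char_is_prime_of_two_le F p (by omega)⟩
  have h2 : (2 : F) ≠ 0 := by exact_mod_cast CharP.natCast_ne_zero_of_lt F two_pos (by omega)
  have hh₁ : h₁ ≠ 0 := fun h => hf₁ne (by simpa [h, h2] using hh₁f₁)
  have H : ChevalleyRelations h₁ e₁ f₁ h₂ e₂ f₂ c :=
    { isSl2Triple := ⟨hh₁, he₁f₁, by rw [hh₁e₁, two_smul, two_nsmul],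
        by rw [hh₁f₁, neg_smul, two_smul, two_nsmul]⟩
      primitive_e₂ := ⟨he₂ne, by simp [hh₁e₂], by rw [← lie_skew, he₂f₁, neg_zero]⟩
      primitive_f₂ := ⟨hf₂ne, by simp [hh₁f₂], he₁f₂⟩
      lie_e₂_f₂ := he₂f₂
      lie_h₂_e₁ := hh₂e₁
      lie_h₂_f₁ := hh₂f₁ }
  obtain ⟨m, hmp, hQ⟩ := exists_forall_not_dvd_quadratic hp
  have hslope : -l₂ + (m + 1) • -l₁ ≠ 0 := by
    rw [nsmul_eq_mul, mul_neg, ← neg_add, neg_ne_zero]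
    exact Int.add_mul_ne_zero_of_mul_nonneg hl hl0 (by positivity)
  have hdeg : Function.Injective fun k : ℕ => -l₁ + k • (-l₂ + (m + 1) • -l₁) :=
    (add_right_injective _).comp ((smul_left_injective ℤ hslope).comp Nat.cast_injective)
  exact Module.Finite.not_linearIndependent_of_infinite _
    ((hdirect.submodule_iSupIndep.comp hdeg).linearIndependent _
      (toEnd_pow_apply_mem hgraded (toEnd_pow_apply_mem hgraded hf₁ hf₂ (m + 1)) hf₁)
      (H.toEnd_pow_apply_f₁_ne_zero hc hmp hQ))

/-- Theorem 3.10: a ℤ-graded Lie algebra over a field of characteristic `p > 3`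
containing nonzero homogeneous elements `eᵢ ∈ g ℓᵢ`, `fᵢ ∈ g (-ℓᵢ)` with `ℓ₁ℓ₂ ≥ 0`,
`(ℓ₁,ℓ₂) ≠ (0,0)`, elements `h₁, h₂` and scalars `b, c` with `c ≠ 0` satisfying the
relations determined by the matrix `A = [[2,0],[c,b]]` is infinite-dimensional. -/
theorem statement18 {F L : Type*} [Field F] [LieRing L] [LieAlgebra F L]
    (p : ℕ) [CharP F p] (hp : 3 < p)
    (g : ℤ → Submodule F L)
    (hdirect : DirectSum.IsInternal g)
    (hgraded : ∀ i j : ℤ, ∀ x ∈ g i, ∀ y ∈ g j, ⁅x, y⁆ ∈ g (i + j))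
    (l₁ l₂ : ℤ) (hl : 0 ≤ l₁ * l₂) (hl0 : ¬(l₁ = 0 ∧ l₂ = 0))
    (e₁ e₂ f₁ f₂ h₁ h₂ : L) (b c : F)
    (he₁ne : e₁ ≠ 0) (he₂ne : e₂ ≠ 0) (hf₁ne : f₁ ≠ 0) (hf₂ne : f₂ ≠ 0)
    (hc : c ≠ 0)
    (he₁ : e₁ ∈ g l₁) (he₂ : e₂ ∈ g l₂)
    (hf₁ : f₁ ∈ g (-l₁)) (hf₂ : f₂ ∈ g (-l₂))
    (he₁f₁ : ⁅e₁, f₁⁆ = h₁) (he₂f₂ : ⁅e₂, f₂⁆ = h₂)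
    (he₁f₂ : ⁅e₁, f₂⁆ = 0) (he₂f₁ : ⁅e₂, f₁⁆ = 0)
    (hh₁e₁ : ⁅h₁, e₁⁆ = (2 : F) • e₁) (hh₁e₂ : ⁅h₁, e₂⁆ = 0)
    (hh₂e₁ : ⁅h₂, e₁⁆ = c • e₁) (hh₂e₂ : ⁅h₂, e₂⁆ = b • e₂)
    (hh₁f₁ : ⁅h₁, f₁⁆ = (-2 : F) • f₁) (hh₁f₂ : ⁅h₁, f₂⁆ = 0)
    (hh₂f₁ : ⁅h₂, f₁⁆ = (-c) • f₁) (hh₂f₂ : ⁅h₂, f₂⁆ = (-b) • f₂) :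
    ¬ FiniteDimensional F L :=
  statement18_general p hp g hdirect hgraded l₁ l₂ hl hl0 e₁ e₂ f₁ f₂ h₁ h₂ c he₂ne hf₁ne hf₂ne hc
    hf₁ hf₂ he₁f₁ he₂f₂ he₁f₂ he₂f₁ hh₁e₁ hh₁e₂ hh₂e₁ hh₁f₁ hh₁f₂ hh₂f₁
end
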